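/- arXiv:0911.5368 — 10 statements merged into one kernel-verified Lean document; each statement's English description precedes it below -/
import Mathlib

section
/- For every a ∈ ℤ and every u ∈ ℂ, T^a(u) = T^{N+1−a}(u + s). (In particular both sides vanish unless 0 ≤ a ≤ N+1.) -/
open Complex

noncomputable def oneSubXD (x w : ℂ → ℂ) : ℂ → ℂ := fun u => w u - x u * w (u + 2)

noncomputable def Lop (x : ℕ → ℂ → ℂ) : ℕ → (ℂ → ℂ) → (ℂ → ℂ)
  | 0 => fun w => w
  | k + 1 => fun w => oneSubXD (x (k + 1)) (Lop x k w)

/-!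
Write `x_k u = G_k u / G_{k-1} (u + 2)` with `G_0 = G_{2n+1} = 1` (`a2Gauge`). Conjugating by `G`
turns `L = (1 - x_{2n+1} D) ⋯ (1 - x_1 D)` into `(r_{2n+1} - D) ⋯ (r_1 - D)` with
`r_k = G_{k-1} / G_k`. Moving every `D` of this product to the left makes it again a product of
factors `1 - y_k D`, in the reverse order, and exchanges the coefficients of `D ^ a` and
`D ^ (2n+1-a)`. The reflection
`G_{2n+1-j} (w + 2j - 2) = G_j (w + 2n - 1 + s)`, which uses the period `2s = πi/ħ` of the `Y_a`,
identifies the reversed sequence `y` with `x` shifted by `2n - 1 + s`.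
-/

open Finset

/-- Coefficient of `D ^ a` in `(1 + y_m D) ∘ ⋯ ∘ (1 + y_1 D)`, where `(D w) u = w (u + 2)`. -/
noncomputable def mulDCoeff (y : ℕ → ℂ → ℂ) : ℕ → ℤ → ℂ → ℂ
  | 0 => fun a _ => if a = 0 then 1 else 0
  | m + 1 => fun a u => mulDCoeff y m a u + y (m + 1) u * mulDCoeff y m (a - 1) (u + 2)

/-- Coefficient of `D ^ a` in `(r_m + D) ∘ ⋯ ∘ (r_1 + D)`. -/
noncomputable def addDCoeff (r : ℕ → ℂ → ℂ) : ℕ → ℤ → ℂ → ℂ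
  | 0 => fun a _ => if a = 0 then 1 else 0
  | m + 1 => fun a u => r (m + 1) u * addDCoeff r m a u + addDCoeff r m (a - 1) (u + 2)

section Coefficients

variable (y r : ℕ → ℂ → ℂ) (m : ℕ)

theorem mulDCoeff_zero (a : ℤ) (u : ℂ) : mulDCoeff y 0 a u = if a = 0 then 1 else 0 := rfl

theorem mulDCoeff_succ (a : ℤ) (u : ℂ) :
    mulDCoeff y (m + 1) a u = mulDCoeff y m a u + y (m + 1) u * mulDCoeff y m (a - 1) (u + 2) :=
  rfl

theorem addDCoeff_succ (a : ℤ) (u : ℂ) :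
    addDCoeff r (m + 1) a u = r (m + 1) u * addDCoeff r m a u + addDCoeff r m (a - 1) (u + 2) :=
  rfl

theorem mulDCoeff_eq_zero {a : ℤ} (ha : a < 0 ∨ m < a) (u : ℂ) : mulDCoeff y m a u = 0 := by
  induction m generalizing a u with
  | zero => exact if_neg (by omega)
  | succ m ih => rw [mulDCoeff_succ, ih (by omega), ih (by omega), mul_zero, add_zero]

variable {y} in
theorem mulDCoeff_shift {y' : ℕ → ℂ → ℂ} (c : ℂ)
    (h : ∀ k, 1 ≤ k → k ≤ m → ∀ u, y k u = y' k (u + c)) (a : ℤ) (u : ℂ) :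
    mulDCoeff y m a u = mulDCoeff y' m a (u + c) := by
  induction m generalizing a u with
  | zero => rfl
  | succ m ih =>
    have h' : ∀ k, 1 ≤ k → k ≤ m → ∀ u, y k u = y' k (u + c) := fun k hk _ => h k hk (by omega)
    rw [mulDCoeff_succ, mulDCoeff_succ, ih h', ih h', h (m + 1) (by omega) le_rfl, add_right_comm]

/-- Expansion of the product from its innermost factor `1 + y_1 D`. -/
theorem mulDCoeff_succ' (a : ℤ) (u : ℂ) :
    mulDCoeff y (m + 1) a u = mulDCoeff (fun k => y (k + 1)) m a u
      + y 1 (u + 2 * ((a : ℂ) - 1)) * mulDCoeff (fun k => y (k + 1)) m (a - 1) u := by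
  induction m generalizing a u with
  | zero =>
    rcases eq_or_ne a 1 with rfl | h
    · simp [mulDCoeff_succ, mulDCoeff_zero]
    · simp [mulDCoeff_succ, mulDCoeff_zero, sub_eq_zero, h]
  | succ m ih =>
    rw [mulDCoeff_succ y (m + 1), ih, ih, mulDCoeff_succ _ m, mulDCoeff_succ _ m]
    push_cast
    ring_nf

theorem Lop_apply (w : ℂ → ℂ) (u : ℂ) :
    Lop y m w u = ∑ a ∈ range (m + 1), (-1) ^ a * mulDCoeff y m a u * w (u + 2 * a) := by
  induction m generalizing u with
  | zero => simp [Lop, mulDCoeff_zero]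
  | succ m ih =>
    have hlast : mulDCoeff y m (m + 1 : ℕ) u = 0 := mulDCoeff_eq_zero y m (by omega) u
    have hfirst : mulDCoeff y m ((0 : ℕ) - 1) (u + 2) = 0 := mulDCoeff_eq_zero y m (by omega) _
    change Lop y m w u - y (m + 1) u * Lop y m w (u + 2) = _
    simp only [mulDCoeff_succ, mul_add, add_mul, sum_add_distrib, ih]
    rw [sum_range_succ _ (m + 1), sum_range_succ' _ (m + 1), hlast, hfirst, mul_sum,
      sub_eq_add_neg, ← sum_neg_distrib]
    simp only [mul_zero, zero_mul, add_zero]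
    congr 1
    refine sum_congr rfl fun k _ => ?_
    push_cast
    ring_nf

/-- The sequence `k ↦ r_{m+1-k}` with the shifts produced by commuting `D` past the factors. -/
noncomputable def reverseSeq (r : ℕ → ℂ → ℂ) (m k : ℕ) (w : ℂ) : ℂ :=
  r (m + 1 - k) (w + 2 * ((k : ℂ) - 1))

/-- Reading `(r_m + D) ∘ ⋯ ∘ (r_1 + D)` backwards: moving every `D` to the left turns it into a
product of factors `1 + y_k D` taken in the opposite order. -/
theorem addDCoeff_eq_mulDCoeff_reverse (b : ℤ) (u : ℂ) :
    addDCoeff r m b u = mulDCoeff (reverseSeq r m) m (m - b) (u - 2 * ((m : ℂ) - b - 1)) := by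
  induction m generalizing b u with
  | zero => simp [addDCoeff, mulDCoeff_zero]
  | succ m ih =>
    have hseq : ∀ k, 1 ≤ k → k ≤ m → ∀ w,
        reverseSeq r (m + 1) (k + 1) w = reverseSeq r m k (w + 2) := by
      intro k _ _ w
      rw [reverseSeq, reverseSeq, show m + 1 + 1 - (k + 1) = m + 1 - k by omega]
      push_cast
      ring_nf
    rw [addDCoeff_succ, ih, ih, mulDCoeff_succ',
      mulDCoeff_shift _ 2 hseq, mulDCoeff_shift _ 2 hseq, reverseSeq,
      Nat.add_sub_cancel]
    push_cast
    ring_nf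

variable {y} in
theorem mulDCoeff_eq_mul_addDCoeff (G : ℕ → ℂ → ℂ) (hG0 : ∀ u, G 0 u = 1)
    (hG : ∀ k ≤ m, ∀ u, G k u ≠ 0)
    (hy : ∀ k, 1 ≤ k → k ≤ m → ∀ u, y k u * G (k - 1) (u + 2) = G k u) (a : ℤ) (u : ℂ) :
    mulDCoeff y m a u = G m u * addDCoeff (fun k u => G (k - 1) u / G k u) m a u := by
  induction m generalizing a u with
  | zero => rw [hG0, one_mul]; rfl
  | succ m ih =>
    have ih' := ih (fun k hk => hG k (by omega)) (fun k hk _ => hy k hk (by omega))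
    have hstep : y (m + 1) u * G m (u + 2) = G (m + 1) u := hy (m + 1) (by omega) le_rfl u
    rw [mulDCoeff_succ, addDCoeff_succ, ih', ih', Nat.add_sub_cancel, mul_add,
      ← mul_assoc (G (m + 1) u), mul_div_cancel₀ _ (hG (m + 1) le_rfl u), ← hstep]
    ring

end Coefficients

/-- Gauging by `G` turns the product into `(r_m + D) ⋯ (r_1 + D)` with `r_k = G_{k-1} / G_k`;
by `hrefl`, reading that product backwards gives the original one shifted by `c`. -/
theorem mulDCoeff_duality (y G : ℕ → ℂ → ℂ) (m : ℕ) (c : ℂ) (hG0 : ∀ u, G 0 u = 1)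
    (hG : ∀ k ≤ m, ∀ u, G k u ≠ 0)
    (hy : ∀ k, 1 ≤ k → k ≤ m → ∀ u, y k u * G (k - 1) (u + 2) = G k u)
    (hrefl : ∀ j ≤ m, ∀ w, G (m - j) (w + 2 * ((j : ℂ) - 1)) = G j (w + c)) (a : ℤ) (u : ℂ) :
    mulDCoeff y m a u = mulDCoeff y m (m - a) (u - 2 * ((m : ℂ) - a - 1) + c) := by
  have hGm : ∀ u, G m u = 1 := fun u => by
    simpa [hG0] using (hrefl m le_rfl (u - c)).symm
  have hrev : ∀ k, 1 ≤ k → k ≤ m → ∀ w,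
      reverseSeq (fun k u => G (k - 1) u / G k u) m k w = y k (w + c) := by
    intro k hk hkm w
    rw [reverseSeq]
    have h1 := hrefl k hkm w
    have h2 := hrefl (k - 1) (by omega) (w + 2)
    rw [show m - (k - 1) = m + 1 - k by omega, Nat.cast_sub hk,
      show w + 2 + 2 * ((k : ℂ) - (1 : ℕ) - 1) = w + 2 * ((k : ℂ) - 1) by push_cast; ring] at h2
    rw [show m + 1 - k - 1 = m - k by omega, h1, h2, div_eq_iff (hG _ (by omega) _),
      ← hy k hk hkm, add_right_comm]
  rw [mulDCoeff_eq_mul_addDCoeff m G hG0 hG hy, hGm, one_mul, addDCoeff_eq_mulDCoeff_reverse,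
    mulDCoeff_shift m c hrev]

theorem eq_of_forall_sum_mul_shift_eq {k : ℕ} {f g : ℕ → ℂ} {u : ℂ}
    (h : ∀ w : ℂ → ℂ, ∑ a ∈ range k, f a * w (u + 2 * a) = ∑ a ∈ range k, g a * w (u + 2 * a))
    {a : ℕ} (ha : a < k) : f a = g a := by
  simpa [ha] using h fun v => if v = u + 2 * a then 1 else 0

theorem eq_mulDCoeff_of_Lop_eq (y : ℕ → ℂ → ℂ) (m : ℕ) (T : ℤ → ℂ → ℂ)
    (hneg : ∀ a : ℤ, a < 0 → ∀ u, T a u = 0) (hbig : ∀ a : ℤ, m < a → ∀ u, T a u = 0)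
    (hL : ∀ w u, Lop y m w u = ∑ a ∈ range (m + 1), (-1) ^ a * T a (u + a) * w (u + 2 * a))
    (a : ℤ) (u : ℂ) : T a u = mulDCoeff y m a (u - a) := by
  rcases lt_or_ge a 0 with ha | ha
  · rw [hneg a ha, mulDCoeff_eq_zero y m (.inl ha)]
  rcases lt_or_ge (m : ℤ) a with ha' | ha'
  · rw [hbig a ha', mulDCoeff_eq_zero y m (.inr ha')]
  lift a to ℕ using ha
  have hcoeff := eq_of_forall_sum_mul_shift_eq (u := u - a)
    (fun w => (Lop_apply y m w (u - a)).symm.trans (hL w (u - a))) (a := a) (by omega)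
  rw [sub_add_cancel] at hcoeff
  exact (mul_left_cancel₀ (pow_ne_zero a (neg_ne_zero.mpr one_ne_zero)) hcoeff).symm

/-- The gauge of the `A^(2)_{2n}` Bethe ansatz: `x_k u = G_k u / G_{k-1} (u + 2)` for
`1 ≤ k ≤ 2n + 1`, with `G_0 = G_{2n+1} = 1`. -/
noncomputable def a2Gauge (n : ℕ) (s : ℂ) (Y : ℕ → ℂ → ℂ) (k : ℕ) (u : ℂ) : ℂ :=
  if k ≤ n then Y k (u + k) else Y (2 * n + 1 - k) (u + k + s)

section A2Gauge

variable {n : ℕ} {s : ℂ} {Y : ℕ → ℂ → ℂ}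

theorem a2Gauge_zero (hY0 : ∀ v, Y 0 v = 1) (u : ℂ) : a2Gauge n s Y 0 u = 1 := by
  simp [a2Gauge, hY0]

theorem a2Gauge_ne_zero (hY : ∀ a ≤ n, ∀ v, Y a v ≠ 0) (k : ℕ) (u : ℂ) :
    a2Gauge n s Y k u ≠ 0 := by
  unfold a2Gauge
  split_ifs with hk
  · exact hY k hk _
  · exact hY _ (by omega) _

theorem a2Gauge_reflect (hper : ∀ a ≤ n, ∀ v, Y a (v + 2 * s) = Y a v) {j : ℕ}
    (hj : j ≤ 2 * n + 1) (w : ℂ) :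
    a2Gauge n s Y (2 * n + 1 - j) (w + 2 * ((j : ℂ) - 1))
      = a2Gauge n s Y j (w + (2 * n - 1 + s)) := by
  have hcast : ((2 * n + 1 - j : ℕ) : ℂ) = 2 * n + 1 - j := by
    rw [Nat.cast_sub hj]; push_cast; ring
  unfold a2Gauge
  by_cases hjn : j ≤ n
  · rw [if_neg (by omega), if_pos hjn, Nat.sub_sub_self hj, hcast]
    ring_nf
  · rw [if_pos (by omega), if_neg hjn, hcast, ← hper _ (by omega)]
    ring_nf

theorem x_mul_a2Gauge (hY : ∀ a ≤ n, ∀ v, Y a v ≠ 0) (x : ℕ → ℂ → ℂ)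
    (hxa : ∀ a, 1 ≤ a → a ≤ n → ∀ u : ℂ, x a u = Y a (u + a) / Y (a - 1) (u + a + 1))
    (hx0 : ∀ u : ℂ, x (n + 1) u = Y n (u + n + 1 + s) / Y n (u + n + 2))
    (hxbar : ∀ a, 1 ≤ a → a ≤ n → ∀ u : ℂ,
      x (2 * n - a + 2) u = Y (a - 1) (u + 2 * (n : ℂ) - a + 2 + s)
        / Y a (u + 2 * (n : ℂ) - a + 3 + s))
    {k : ℕ} (hk : 1 ≤ k) (hkn : k ≤ 2 * n + 1) (u : ℂ) :
    x k u * a2Gauge n s Y (k - 1) (u + 2) = a2Gauge n s Y k u := by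
  suffices x k u = a2Gauge n s Y k u / a2Gauge n s Y (k - 1) (u + 2) by
    rw [this, div_mul_cancel₀ _ (a2Gauge_ne_zero hY _ _)]
  have hk1 : ((k - 1 : ℕ) : ℂ) = k - 1 := by rw [Nat.cast_sub hk, Nat.cast_one]
  unfold a2Gauge
  rcases lt_trichotomy k (n + 1) with hlt | rfl | hgt
  · rw [hxa k hk (by omega), if_pos (by omega), if_pos (by omega), hk1]
    ring_nf
  · rw [hx0, if_neg (by omega), if_pos (by omega), Nat.add_sub_cancel,
      show 2 * n + 1 - (n + 1) = n by omega]
    push_cast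
    ring_nf
  · have hxk := hxbar (2 * n + 2 - k) (by omega) (by omega) u
    rw [show 2 * n - (2 * n + 2 - k) + 2 = k by omega, Nat.cast_sub (by omega : k ≤ 2 * n + 2),
      show 2 * n + 2 - k - 1 = 2 * n + 1 - k by omega] at hxk
    rw [hxk, if_neg (by omega), if_neg (by omega),
      show 2 * n + 1 - (k - 1) = 2 * n + 2 - k by omega, hk1]
    push_cast
    ring_nf

end A2Gauge

theorem duality_A2_even_general
    (n : ℕ) (N : ℕ) (hN : N = 2 * n)
    (hbar : ℂ) (s : ℂ)
    (hs : s = (Real.pi : ℂ) * Complex.I / (2 * hbar))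
    (Q : ℕ → ℂ → ℂ) (hQ0 : ∀ u, Q 0 u = 1)
    (hQne : ∀ a, 1 ≤ a → a ≤ n → ∀ u, Q a u ≠ 0)
    (hconst : ℕ → ℂ)
    (hQper : ∀ a, 1 ≤ a → a ≤ n → hconst a ≠ 0 ∧
      ∀ u, Q a (u + (Real.pi : ℂ) * Complex.I / hbar) = hconst a * Q a u)
    (Y : ℕ → ℂ → ℂ) (hY : ∀ a u, Y a u = Q a (u - 1) / Q a (u + 1))
    (x : ℕ → ℂ → ℂ)
    (hxa : ∀ a, 1 ≤ a → a ≤ n → ∀ u : ℂ,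
      x a u = Y a (u + a) / Y (a - 1) (u + a + 1))
    (hx0 : ∀ u : ℂ, x (n + 1) u = Y n (u + n + 1 + s) / Y n (u + n + 2))
    (hxbar : ∀ a, 1 ≤ a → a ≤ n → ∀ u : ℂ,
      x (2 * n - a + 2) u = Y (a - 1) (u + 2 * (n : ℂ) - a + 2 + s)
        / Y a (u + 2 * (n : ℂ) - a + 3 + s))
    (T : ℤ → ℂ → ℂ)
    (hTneg : ∀ a : ℤ, a < 0 → ∀ u, T a u = 0)
    (hTbig : ∀ a : ℤ, (N : ℤ) + 1 < a → ∀ u, T a u = 0)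
    (hTL : ∀ w : ℂ → ℂ, ∀ u : ℂ, Lop x (N + 1) w u
      = ∑ a ∈ Finset.range (N + 2), (-1) ^ a * T a (u + a) * w (u + 2 * a))
    :
    ∀ a : ℤ, ∀ u : ℂ, T a u = T ((N : ℤ) + 1 - a) (u + s) := by
  subst hN
  have hY0 : ∀ v, Y 0 v = 1 := fun v => by rw [hY, hQ0, hQ0, div_one]
  have hYne : ∀ a ≤ n, ∀ v, Y a v ≠ 0 := by
    intro a ha v
    rcases Nat.eq_zero_or_pos a with rfl | ha0
    · exact hY0 v ▸ one_ne_zero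
    · rw [hY]
      exact div_ne_zero (hQne a ha0 ha _) (hQne a ha0 ha _)
  have hYper : ∀ a ≤ n, ∀ v, Y a (v + 2 * s) = Y a v := by
    intro a ha v
    rcases Nat.eq_zero_or_pos a with rfl | ha0
    · rw [hY0, hY0]
    obtain ⟨hc, hper⟩ := hQper a ha0 ha
    have h2s : 2 * s = Real.pi * Complex.I / hbar := by rw [hs]; ring
    rw [hY, hY, h2s, add_sub_right_comm, add_right_comm, hper, hper, mul_div_mul_left _ _ hc]
  have hT := eq_mulDCoeff_of_Lop_eq x (2 * n + 1) T hTneg (fun a ha => hTbig a (by simpa using ha))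
    hTL
  intro a u
  rw [hT, hT, mulDCoeff_duality x (a2Gauge n s Y) (2 * n + 1) (2 * n - 1 + s) (a2Gauge_zero hY0)
    (fun k _ => a2Gauge_ne_zero hYne k) (fun k hk hkn => x_mul_a2Gauge hYne x hxa hx0 hxbar hk hkn)
    (fun j hj => a2Gauge_reflect hYper hj)]
  push_cast
  ring_nf

theorem duality_A2_even
    (n : ℕ) (hn : 1 ≤ n) (N : ℕ) (hN : N = 2 * n)
    (hbar : ℂ) (hbar_ne : hbar ≠ 0) (s : ℂ)
    (hs : s = (Real.pi : ℂ) * Complex.I / (2 * hbar))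
    (Q : ℕ → ℂ → ℂ) (hQ0 : ∀ u, Q 0 u = 1)
    (hQne : ∀ a, 1 ≤ a → a ≤ n → ∀ u, Q a u ≠ 0)
    (hconst : ℕ → ℂ)
    (hQper : ∀ a, 1 ≤ a → a ≤ n → hconst a ≠ 0 ∧
      ∀ u, Q a (u + (Real.pi : ℂ) * Complex.I / hbar) = hconst a * Q a u)
    (Y : ℕ → ℂ → ℂ) (hY : ∀ a u, Y a u = Q a (u - 1) / Q a (u + 1))
    (x : ℕ → ℂ → ℂ)
    (hxa : ∀ a, 1 ≤ a → a ≤ n → ∀ u : ℂ,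
      x a u = Y a (u + a) / Y (a - 1) (u + a + 1))
    (hx0 : ∀ u : ℂ, x (n + 1) u = Y n (u + n + 1 + s) / Y n (u + n + 2))
    (hxbar : ∀ a, 1 ≤ a → a ≤ n → ∀ u : ℂ,
      x (2 * n - a + 2) u = Y (a - 1) (u + 2 * (n : ℂ) - a + 2 + s)
        / Y a (u + 2 * (n : ℂ) - a + 3 + s))
    (T : ℤ → ℂ → ℂ)
    (hTneg : ∀ a : ℤ, a < 0 → ∀ u, T a u = 0)
    (hTbig : ∀ a : ℤ, (N : ℤ) + 1 < a → ∀ u, T a u = 0)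
    (hTL : ∀ w : ℂ → ℂ, ∀ u : ℂ, Lop x (N + 1) w u
      = ∑ a ∈ Finset.range (N + 2), (-1) ^ a * T a (u + a) * w (u + 2 * a))
    :
    ∀ a : ℤ, ∀ u : ℂ, T a u = T ((N : ℤ) + 1 - a) (u + s) :=
  duality_A2_even_general n N hN hbar s hs Q hQ0 hQne hconst hQper Y hY x hxa hx0 hxbar T hTneg
    hTbig hTL
end

section
/- For every a ∈ ℤ and every u ∈ ℂ, T^a(u) = T^{N+1−a}(u + s). (In particular both sides vanish unless 0 ≤ a ≤ N+1.) -/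
/-!
Expanding the ordered product, `T^k(u + k)` is the sum over the `k`-subsets `S ⊆ {1, …, 2n}` of
`∏_{b ∈ S} x_b (u + 2 #{c ∈ S | b < c})`. Every `x_b` is a ratio
`A_b(u) A_{b-1}(u+4) / (A_{b-1}(u+2) A_b(u+2))` along a chain `A_0 = 1, A_1, …, A_{2n} = 1` built
from the `Q_a`, so each such product telescopes into one ratio of values of `A_b` for every `b`.
The chain is symmetric, `A_{2n-b}(v) ∝ A_b(v + 2n - 2b + s)`, hence every `A_b` is quasi-periodic
with period `2s`; with this the factor of `A_b` for `S` equals the factor of `A_{2n-b}` for the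
reflected complement `{2n + 1 - j | j ∉ S}`, a set with `2n - k` elements.
-/

open Complex

namespace BetheAnsatz

open Finset

def numAbove (S : Finset ℕ) (b : ℕ) : ℕ := #{c ∈ S | b < c}

-- Expanding `(1 - x_m D) ⋯ (1 - x_1 D)`, the term that picks `x_b D` for `b ∈ S` evaluates `x_b`
-- after the shifts `D` of the chosen factors to its left, those with `c > b`.
noncomputable def weight (x : ℕ → ℂ → ℂ) (S : Finset ℕ) (u : ℂ) : ℂ :=
  ∏ b ∈ S, x b (u + 2 * numAbove S b)

noncomputable def weightSum (x : ℕ → ℂ → ℂ) (m k : ℕ) (u : ℂ) : ℂ :=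
  ∑ S ∈ powersetCard k (Icc 1 m), weight x S u

lemma numAbove_eq_zero {S : Finset ℕ} {b : ℕ} (h : ∀ c ∈ S, c ≤ b) : numAbove S b = 0 := by
  simpa [numAbove, filter_eq_empty_iff] using h

lemma numAbove_insert {S : Finset ℕ} {b j : ℕ} (hj : j ∉ S) (hb : b < j) :
    numAbove (insert j S) b = numAbove S b + 1 := by
  rw [numAbove, filter_insert, if_pos hb, card_insert_of_notMem (by simp [hj]), numAbove]

lemma weight_insert (x : ℕ → ℂ → ℂ) {S : Finset ℕ} {j : ℕ} (hS : ∀ c ∈ S, c < j) (u : ℂ) :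
    weight x (insert j S) u = x j u * weight x S (u + 2) := by
  have hj : j ∉ S := fun h => lt_irrefl j (hS j h)
  rw [weight, prod_insert hj, numAbove_eq_zero, weight]
  · congr 1
    · simp
    · refine prod_congr rfl fun b hb => ?_
      rw [numAbove_insert hj (hS b hb), Nat.cast_succ]
      congr 1
      ring
  · simpa using fun c hc => (hS c hc).le

lemma Lop_apply_eq_sum_powerset (x : ℕ → ℂ → ℂ) (m : ℕ) (w : ℂ → ℂ) (u : ℂ) :
    Lop x m w u = ∑ S ∈ (Icc 1 m).powerset, (-1) ^ #S * weight x S u * w (u + 2 * #S) := by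
  induction m generalizing u with
  | zero => simp [Lop, weight]
  | succ m ih =>
    have hIcc : Icc 1 (m + 1) = insert (m + 1) (Icc 1 m) := by
      ext c; simp only [mem_Icc, mem_insert]; omega
    have hnew : m + 1 ∉ Icc 1 m := by simp
    rw [show Lop x (m + 1) w u = Lop x m w u - x (m + 1) u * Lop x m w (u + 2) from rfl, ih, ih,
      hIcc, sum_powerset_insert hnew, mul_sum, sub_eq_add_neg, ← sum_neg_distrib]
    congr 1
    refine sum_congr rfl fun S hS => ?_
    have hS : ∀ c ∈ S, c < m + 1 := fun c hc => by
      have := mem_Icc.mp (mem_powerset.mp hS hc); omega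
    rw [card_insert_of_notMem fun h => lt_irrefl _ (hS _ h), weight_insert x hS]
    push_cast
    ring_nf

lemma Lop_apply_eq_sum (x : ℕ → ℂ → ℂ) (m : ℕ) (w : ℂ → ℂ) (u : ℂ) :
    Lop x m w u = ∑ k ∈ range (m + 1), (-1) ^ k * weightSum x m k u * w (u + 2 * k) := by
  have hcard : ∀ S ∈ (Icc 1 m).powerset, #S ∈ range (m + 1) := fun S hS => by
    simpa [Nat.lt_succ_iff] using card_le_card (mem_powerset.mp hS)
  rw [Lop_apply_eq_sum_powerset, ← sum_fiberwise_of_maps_to hcard]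
  refine sum_congr rfl fun k _ => ?_
  rw [weightSum, powersetCard_eq_filter, mul_sum, sum_mul]
  refine sum_congr rfl fun S hS => ?_
  rw [(mem_filter.mp hS).2]

lemma eq_of_sum_mul_shift_eq {m : ℕ} {c d : ℕ → ℂ} {u : ℂ}
    (h : ∀ w : ℂ → ℂ, ∑ k ∈ range m, c k * w (u + 2 * k) = ∑ k ∈ range m, d k * w (u + 2 * k))
    {k : ℕ} (hk : k < m) : c k = d k := by
  have hshift : ∀ j : ℕ, u + 2 * (j : ℂ) = u + 2 * k ↔ j = k := by simp
  simpa [hshift, hk] using h fun v => if v = u + 2 * k then 1 else 0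

lemma coeff_eq_weightSum {x : ℕ → ℂ → ℂ} {m : ℕ} {T : ℕ → ℂ → ℂ}
    (hT : ∀ (w : ℂ → ℂ) (u : ℂ),
      Lop x m w u = ∑ k ∈ range (m + 1), (-1) ^ k * T k (u + k) * w (u + 2 * k))
    {k : ℕ} (hk : k ≤ m) (u : ℂ) : T k (u + k) = weightSum x m k u := by
  have := eq_of_sum_mul_shift_eq (fun w => (Lop_apply_eq_sum x m w u).symm.trans (hT w u))
    (Nat.lt_succ_of_le hk)
  simpa using this.symm


def occ (S : Finset ℕ) (b : ℕ) : ℂ := if b ∈ S then 1 else 0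

lemma occ_eq_zero_or_one (S : Finset ℕ) (b : ℕ) : occ S b = 0 ∨ occ S b = 1 := by
  unfold occ; split_ifs <;> simp

noncomputable def chainFactor (A : ℕ → ℂ → ℂ) (S : Finset ℕ) (u : ℂ) (b : ℕ) : ℂ :=
  A b (u + 2 * numAbove S b + 2 * occ S (b + 1)) / A b (u + 2 * numAbove S b + 2 * occ S b)

lemma chainFactor_insert (A : ℕ → ℂ → ℂ) {S : Finset ℕ} {j b : ℕ} (hS : ∀ c ∈ S, c < j)
    (hb : b + 1 < j) (u : ℂ) : chainFactor A (insert j S) u b = chainFactor A S (u + 2) b := by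
  have hj : j ∉ S := fun h => lt_irrefl j (hS j h)
  have hocc : ∀ i, i ≤ b + 1 → occ (insert j S) i = occ S i := fun i hi => by
    simp [occ, show i ≠ j by omega]
  rw [chainFactor, chainFactor, numAbove_insert hj (by omega), hocc b (by omega),
    hocc (b + 1) le_rfl, Nat.cast_succ]
  congr 2 <;> ring

lemma chainFactor_of_notMem {A : ℕ → ℂ → ℂ} {S : Finset ℕ} {b : ℕ} (hA : ∀ v, A b v ≠ 0)
    (hb : b ∉ S) (hb' : b + 1 ∉ S) (u : ℂ) : chainFactor A S u b = 1 := by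
  simp [chainFactor, occ, hb, hb', hA]

lemma mul_chainFactor_insert_top {A x : ℕ → ℂ → ℂ} {S : Finset ℕ} {k : ℕ} (hS : ∀ c ∈ S, c ≤ k)
    (hAk : ∀ v, A k v ≠ 0) (hAk' : ∀ v, A (k + 1) v ≠ 0) {u : ℂ}
    (hx : x (k + 1) u = A (k + 1) u * A k (u + 4) / (A k (u + 2) * A (k + 1) (u + 2))) :
    x (k + 1) u * chainFactor A S (u + 2) k =
      chainFactor A (insert (k + 1) S) u k * chainFactor A (insert (k + 1) S) u (k + 1) := by
  have hS' : ∀ c ∈ insert (k + 1) S, c ≤ k + 1 := by simpa using fun c hc => (hS c hc).step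
  have hk : k + 1 ∉ S := fun h => by simpa using hS _ h
  have hk' : k + 1 + 1 ∉ S := fun h => by simpa using (hS _ h).step
  have hocc_top : occ (insert (k + 1) S) (k + 1) = 1 := by simp [occ]
  have hocc_above : occ (insert (k + 1) S) (k + 1 + 1) = 0 := by simp [occ, hk']
  have hocc_k : occ (insert (k + 1) S) k = occ S k := by simp [occ]
  have hocc_S : occ S (k + 1) = 0 := by simp [occ, hk]
  rw [chainFactor, chainFactor, chainFactor, numAbove_insert hk (by omega), numAbove_eq_zero hS,
    numAbove_eq_zero hS', hocc_top, hocc_above, hocc_k, hocc_S, hx]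
  simp only [Nat.cast_zero, Nat.cast_one, zero_add, mul_zero, add_zero, mul_one]
  rw [add_assoc u 2 2, show (2 : ℂ) + 2 = 4 by norm_num]
  have h1 := hAk (u + 2)
  have h2 := hAk' (u + 2)
  have h3 := hAk (u + 2 + 2 * occ S k)
  field_simp

lemma weight_eq_prod_chainFactor {A x : ℕ → ℂ → ℂ} {m : ℕ} (hA : ∀ b ≤ m, ∀ v, A b v ≠ 0)
    (hx : ∀ b < m, ∀ u,
      x (b + 1) u = A (b + 1) u * A b (u + 4) / (A b (u + 2) * A (b + 1) (u + 2)))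
    {k : ℕ} (hk : k ≤ m) {S : Finset ℕ} (hS : S ⊆ Icc 1 k) (u : ℂ) :
    weight x S u = ∏ b ∈ range (k + 1), chainFactor A S u b := by
  induction k generalizing S u with
  | zero =>
    obtain rfl : S = ∅ := subset_empty.mp (by simpa using hS)
    simp [weight, chainFactor_of_notMem (hA 0 (Nat.zero_le m))]
  | succ k ih =>
    by_cases hkS : k + 1 ∈ S
    · set S' := S.erase (k + 1)
      have hS' : S' ⊆ Icc 1 k := fun c hc => by
        have := mem_Icc.mp (hS (mem_of_mem_erase hc)); have := ne_of_mem_erase hc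
        simp only [mem_Icc]; omega
      have hlt : ∀ c ∈ S', c < k + 1 := fun c hc => Nat.lt_succ_of_le (mem_Icc.mp (hS' hc)).2
      rw [← insert_erase hkS, weight_insert x hlt, ih (by omega) hS', prod_range_succ,
        prod_range_succ, prod_range_succ, mul_left_comm,
        mul_chainFactor_insert_top (fun c hc => (mem_Icc.mp (hS' hc)).2) (hA k (by omega))
          (hA (k + 1) hk) (hx k hk u),
        prod_congr rfl fun b hb => chainFactor_insert A hlt (by simpa using hb) u]
      ring
    · have hS' : S ⊆ Icc 1 k := fun c hc => by
        have := mem_Icc.mp (hS hc); have : c ≠ k + 1 := fun h => hkS (h ▸ hc)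
        simp only [mem_Icc]; omega
      rw [ih (by omega) hS', prod_range_succ _ (k + 1), chainFactor_of_notMem (hA (k + 1) hk) hkS
        (fun h => by simpa using (mem_Icc.mp (hS' h)).2), mul_one]

def dualSet (m : ℕ) (S : Finset ℕ) : Finset ℕ := {j ∈ Icc 1 m | m + 1 - j ∉ S}

lemma mem_dualSet {m : ℕ} {S : Finset ℕ} {j : ℕ} :
    j ∈ dualSet m S ↔ 1 ≤ j ∧ j ≤ m ∧ m + 1 - j ∉ S := by
  simp [dualSet, and_assoc]

lemma dualSet_subset (m : ℕ) (S : Finset ℕ) : dualSet m S ⊆ Icc 1 m := filter_subset _ _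

lemma dualSet_dualSet {m : ℕ} {S : Finset ℕ} (hS : S ⊆ Icc 1 m) : dualSet m (dualSet m S) = S := by
  ext j
  simp only [mem_dualSet, not_and, not_not]
  constructor
  · rintro ⟨h1, h2, h3⟩
    simpa [show m + 1 - (m + 1 - j) = j by omega] using h3 (by omega) (by omega)
  · intro hj
    have := mem_Icc.mp (hS hj)
    exact ⟨this.1, this.2, fun _ _ => by rwa [show m + 1 - (m + 1 - j) = j by omega]⟩

lemma card_filter_dualSet_lt {m b : ℕ} (S : Finset ℕ) (hb : b ≤ m) :
    #{j ∈ dualSet m S | m - b < j} = #(Icc 1 b \ S) := by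
  refine card_nbij' (fun j => m + 1 - j) (fun c => m + 1 - c) ?_ ?_ ?_ ?_
  all_goals
    intro j hj
    simp only [coe_filter, coe_sdiff, coe_Icc, Set.mem_ofPred_eq, Set.mem_sdiff, Set.mem_Icc,
      mem_coe, mem_dualSet] at hj ⊢
  · exact ⟨⟨by omega, by omega⟩, hj.1.2.2⟩
  · refine ⟨⟨by omega, by omega, ?_⟩, by omega⟩
    rw [show m + 1 - (m + 1 - j) = j by omega]
    exact hj.2
  · omega
  · omega

lemma card_dualSet {m : ℕ} {S : Finset ℕ} (hS : S ⊆ Icc 1 m) : #(dualSet m S) = m - #S := by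
  have h := card_filter_dualSet_lt S (le_refl m)
  rw [Nat.sub_self, filter_true_of_mem fun j hj => Nat.lt_of_succ_le (mem_dualSet.mp hj).1,
    card_sdiff_of_subset hS, Nat.card_Icc, Nat.add_sub_cancel] at h
  exact h

lemma numAbove_dualSet {m b : ℕ} {S : Finset ℕ} (hS : S ⊆ Icc 1 m) (hb : b ≤ m) :
    numAbove (dualSet m S) (m - b) + #S = b + numAbove S b := by
  have hlow : {c ∈ S | c ≤ b} ⊆ Icc 1 b := fun c hc => by
    have := mem_filter.mp hc; have := mem_Icc.mp (hS this.1); simp only [mem_Icc]; omega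
  have hsplit : Icc 1 b \ S = Icc 1 b \ {c ∈ S | c ≤ b} := by
    ext c; simp only [mem_sdiff, mem_Icc, mem_filter]; constructor <;> intro h <;> tauto
  have hcount := card_filter_add_card_filter_not (s := S) (fun c => b < c)
  simp only [not_lt] at hcount
  rw [numAbove, card_filter_dualSet_lt S hb, hsplit, card_sdiff_of_subset hlow, Nat.card_Icc,
    ← hcount, numAbove]
  have := card_le_card hlow
  simp only [Nat.card_Icc] at this
  omega

lemma occ_dualSet {m j : ℕ} (S : Finset ℕ) (h1 : 1 ≤ j) (h2 : j ≤ m) :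
    occ (dualSet m S) j = 1 - occ S (m + 1 - j) := by
  by_cases h : m + 1 - j ∈ S <;> simp [occ, mem_dualSet, h, h1, h2]

lemma div_eq_div_of_zero_or_one {f : ℂ → ℂ} (hf : ∀ v, f v ≠ 0) {e e' : ℂ} (he : e = 0 ∨ e = 1)
    (he' : e' = 0 ∨ e' = 1) (α : ℂ) :
    f (α + 2 * e') / f (α + 2 * e) = f (α + 2 - 2 * e) / f (α + 2 - 2 * e') := by
  rcases he with rfl | rfl <;> rcases he' with rfl | rfl <;> simp [div_self (hf _)]

lemma chainFactor_dualSet {A : ℕ → ℂ → ℂ} {m b : ℕ} {s c k : ℂ} {S : Finset ℕ}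
    (hS : S ⊆ Icc 1 m) (hb : 1 ≤ b) (hbm : b < m) (hA : ∀ v, A b v ≠ 0)
    (hc : c ≠ 0) (hrefl : ∀ v, A (m - b) v = c * A b (v + m - 2 * b + s))
    (hk : k ≠ 0) (hper : ∀ v, A b (v + 2 * s) = k * A b v) (u : ℂ) :
    chainFactor A S u b = chainFactor A (dualSet m S) (u + 2 * #S - m + s) (m - b) := by
  have hD : (numAbove (dualSet m S) (m - b) : ℂ) = b + numAbove S b - #S := by
    rw [eq_sub_iff_add_eq]; exact_mod_cast numAbove_dualSet hS hbm.le
  have hshift : ∀ e : ℂ, u + 2 * #S - m + s + 2 * (numAbove (dualSet m S) (m - b) : ℂ)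
      + 2 * (1 - e) + m - 2 * b + s = u + 2 * numAbove S b + 2 - 2 * e + 2 * s := fun e => by
    rw [hD]; ring
  -- `hrefl` turns both sides into ratios of `A_b`; the dual one is shifted by `2 s`, which `hper`
  -- removes, and the occupation numbers enter flipped.
  rw [chainFactor, chainFactor, occ_dualSet (j := m - b + 1) S (by omega) (by omega),
    occ_dualSet (j := m - b) S (by omega) (Nat.sub_le m b),
    show m + 1 - (m - b + 1) = b by omega, show m + 1 - (m - b) = b + 1 by omega,
    hrefl, hrefl, mul_div_mul_left _ _ hc, hshift, hshift, hper, hper, mul_div_mul_left _ _ hk]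
  exact div_eq_div_of_zero_or_one hA (occ_eq_zero_or_one S b) (occ_eq_zero_or_one S (b + 1)) _

section Duality

variable {A x : ℕ → ℂ → ℂ} {m : ℕ} {s : ℂ} (hA : ∀ b ≤ m, ∀ v, A b v ≠ 0)
  (hA0 : ∀ v, A 0 v = 1) (hAm : ∀ v, A m v = 1)
  (hx : ∀ b < m, ∀ u,
    x (b + 1) u = A (b + 1) u * A b (u + 4) / (A b (u + 2) * A (b + 1) (u + 2)))
  (hsym : ∀ b ≤ m, ∃ c ≠ 0, ∀ v, A (m - b) v = c * A b (v + m - 2 * b + s))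
include hA hA0 hAm hx hsym

lemma weight_dualSet {S : Finset ℕ} (hS : S ⊆ Icc 1 m) (u : ℂ) :
    weight x S u = weight x (dualSet m S) (u + 2 * #S - m + s) := by
  rw [weight_eq_prod_chainFactor hA hx le_rfl hS,
    weight_eq_prod_chainFactor hA hx le_rfl (dualSet_subset m S)]
  conv_rhs => rw [← prod_range_reflect]
  refine prod_congr rfl fun b hb => ?_
  rw [show m + 1 - 1 - b = m - b by omega]
  rcases Nat.eq_zero_or_pos b with rfl | hb0
  · simp [chainFactor, hA0, hAm]
  rcases (Nat.lt_succ_iff.mp (mem_range.mp hb)).eq_or_lt with rfl | hbm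
  · simp [chainFactor, hA0, hAm]
  obtain ⟨c, hc, hrefl⟩ := hsym b hbm.le
  obtain ⟨c', hc', hrefl'⟩ := hsym (m - b) (Nat.sub_le m b)
  rw [Nat.sub_sub_self hbm.le] at hrefl'
  refine chainFactor_dualSet hS hb0 hbm (hA b hbm.le) hc hrefl (inv_ne_zero (mul_ne_zero hc' hc))
    (fun v => ?_) u
  rw [hrefl' v, hrefl, Nat.cast_sub hbm.le,
    show v + m - 2 * (m - b : ℂ) + s + m - 2 * b + s = v + 2 * s by ring]
  field_simp

lemma weightSum_dual {k : ℕ} (hk : k ≤ m) (u : ℂ) :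
    weightSum x m k u = weightSum x m (m - k) (u + 2 * k - m + s) := by
  refine sum_nbij' (dualSet m) (dualSet m) ?_ ?_ ?_ ?_ ?_
  · intro S hS
    have hS := mem_powersetCard.mp hS
    exact mem_powersetCard.mpr ⟨dualSet_subset m S, by rw [card_dualSet hS.1, hS.2]⟩
  · intro S hS
    have hS := mem_powersetCard.mp hS
    exact mem_powersetCard.mpr ⟨dualSet_subset m S, by rw [card_dualSet hS.1, hS.2]; omega⟩
  · exact fun S hS => dualSet_dualSet (mem_powersetCard.mp hS).1
  · exact fun S hS => dualSet_dualSet (mem_powersetCard.mp hS).1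
  · intro S hS
    have hS := mem_powersetCard.mp hS
    rw [weight_dualSet hA hA0 hAm hx hsym hS.1, hS.2]

end Duality

noncomputable def chainA (n : ℕ) (s : ℂ) (Q : ℕ → ℂ → ℂ) (b : ℕ) (v : ℂ) : ℂ :=
  if b < n then Q b (v + b - 1)
  else if b = n then Q n (v + n - 1) * Q n (v + n - 1 + s)
  else Q (2 * n - b) (v + b - 1 + s)

section Chain

variable {n : ℕ} {s : ℂ} {Q : ℕ → ℂ → ℂ}

lemma chainA_zero (hn : 0 < n) (hQ0 : ∀ u, Q 0 u = 1) (v : ℂ) : chainA n s Q 0 v = 1 := by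
  simp [chainA, hn, hQ0]

lemma chainA_two_mul (hn : 0 < n) (hQ0 : ∀ u, Q 0 u = 1) (v : ℂ) :
    chainA n s Q (2 * n) v = 1 := by
  simp [chainA, show ¬ 2 * n < n by omega, show 2 * n ≠ n by omega, hQ0]

lemma chainA_ne_zero (hQ : ∀ a ≤ n, ∀ u, Q a u ≠ 0) {b : ℕ} (hb : b ≤ 2 * n) (v : ℂ) :
    chainA n s Q b v ≠ 0 := by
  unfold chainA
  split_ifs with h1 h2
  · exact hQ b h1.le _
  · exact mul_ne_zero (hQ n le_rfl _) (hQ n le_rfl _)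
  · exact hQ _ (by omega) _

lemma chainA_symm (hQ : ∀ a ≤ n, ∃ c ≠ 0, ∀ u, Q a (u + 2 * s) = c * Q a u) {b : ℕ}
    (hb : b ≤ 2 * n) :
    ∃ c ≠ 0, ∀ v,
      chainA n s Q (2 * n - b) v = c * chainA n s Q b (v + (2 * n : ℕ) - 2 * b + s) := by
  rcases lt_trichotomy b n with hbn | rfl | hbn
  · refine ⟨1, one_ne_zero, fun v => ?_⟩
    rw [chainA, chainA, if_neg (by omega), if_neg (by omega), if_pos hbn,
      show 2 * n - (2 * n - b) = b by omega, Nat.cast_sub hb, one_mul]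
    congr 1
    push_cast; ring
  · obtain ⟨c, hc, hper⟩ := hQ b le_rfl
    refine ⟨c⁻¹, inv_ne_zero hc, fun v => ?_⟩
    rw [chainA, chainA, if_neg (by omega), if_pos (by omega), if_neg (lt_irrefl b), if_pos rfl,
      show v + (2 * b : ℕ) - 2 * b + s + b - 1 + s = v + b - 1 + 2 * s by push_cast; ring,
      show v + (2 * b : ℕ) - 2 * b + s + b - 1 = v + b - 1 + s by push_cast; ring, hper]
    field_simp
  · obtain ⟨c, hc, hper⟩ := hQ (2 * n - b) (by omega)
    refine ⟨c⁻¹, inv_ne_zero hc, fun v => ?_⟩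
    rw [chainA, chainA, if_pos (by omega), if_neg (by omega), if_neg (by omega),
      show v + (2 * n : ℕ) - 2 * b + s + b - 1 + s = v + (2 * n - b : ℕ) - 1 + 2 * s by
        rw [Nat.cast_sub hb]; push_cast; ring, hper]
    field_simp

lemma chainA_ratio (Y x : ℕ → ℂ → ℂ) (hn : 1 ≤ n)
    (hY : ∀ a u, Y a u = Q a (u - 1) / Q a (u + 1))
    (hxa : ∀ a, 1 ≤ a → a ≤ n - 1 → ∀ u : ℂ,
      x a u = Y a (u + a) / Y (a - 1) (u + a + 1))
    (hxn : ∀ u : ℂ, x n u = Y n (u + n) * Y n (u + n + s) / Y (n - 1) (u + n + 1))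
    (hxnbar : ∀ u : ℂ, x (n + 1) u
      = Y (n - 1) (u + n + 1 + s) / (Y n (u + n + 2) * Y n (u + n + 2 + s)))
    (hxbar : ∀ a, 1 ≤ a → a ≤ n - 1 → ∀ u : ℂ,
      x (2 * n - a + 1) u = Y (a - 1) (u + 2 * (n : ℂ) - a + 1 + s)
        / Y a (u + 2 * (n : ℂ) - a + 2 + s))
    {b : ℕ} (hb : b < 2 * n) (u : ℂ) :
    x (b + 1) u = chainA n s Q (b + 1) u * chainA n s Q b (u + 4) /
      (chainA n s Q b (u + 2) * chainA n s Q (b + 1) (u + 2)) := by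
  rcases lt_trichotomy (b + 1) n with hbn | hbn | hbn
  · simp only [hxa (b + 1) (by omega) (by omega), hY, div_div_div_eq, chainA, if_pos hbn,
      if_pos (show b < n by omega), Nat.add_sub_cancel]
    push_cast
    ring_nf
  · subst hbn
    simp only [hxn, hY, div_mul_div_comm, div_div_div_eq, chainA, if_neg (lt_irrefl _),
      if_pos (Nat.lt_succ_self b), Nat.add_sub_cancel]
    push_cast
    ring_nf
  rcases (Nat.succ_le_of_lt hbn).lt_or_eq with hbn | hbn
  · obtain ⟨a, ha1, ha2, rfl⟩ : ∃ a, 1 ≤ a ∧ a ≤ n - 1 ∧ b = 2 * n - a :=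
      ⟨2 * n - b, by omega, by omega, by omega⟩
    simp only [hxbar a ha1 ha2, hY, div_div_div_eq, chainA,
      if_neg (show ¬ 2 * n - a + 1 < n by omega), if_neg (show ¬ 2 * n - a < n by omega),
      if_neg (show 2 * n - a + 1 ≠ n by omega), if_neg (show 2 * n - a ≠ n by omega),
      show 2 * n - (2 * n - a + 1) = a - 1 by omega, show 2 * n - (2 * n - a) = a by omega]
    push_cast [Nat.cast_sub (show a ≤ 2 * n by omega)]
    ring_nf
  · obtain rfl : b = n := by omega
    simp only [hxnbar, hY, div_mul_div_comm, div_div_div_eq, chainA, if_neg (lt_irrefl _),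
      if_neg (show ¬ b + 1 < b by omega), if_neg (show b + 1 ≠ b by omega),
      show 2 * b - (b + 1) = b - 1 by omega]
    push_cast
    ring_nf

end Chain

end BetheAnsatz

open BetheAnsatz

theorem duality_A2_odd_general
    (n : ℕ) (hn : 2 ≤ n) (N : ℕ) (hN : N = 2 * n - 1)
    (hbar : ℂ) (s : ℂ)
    (hs : s = (Real.pi : ℂ) * Complex.I / (2 * hbar))
    (Q : ℕ → ℂ → ℂ) (hQ0 : ∀ u, Q 0 u = 1)
    (hQne : ∀ a, 1 ≤ a → a ≤ n → ∀ u, Q a u ≠ 0)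
    (hconst : ℕ → ℂ)
    (hQper : ∀ a, 1 ≤ a → a ≤ n → hconst a ≠ 0 ∧
      ∀ u, Q a (u + (Real.pi : ℂ) * Complex.I / hbar) = hconst a * Q a u)
    (Y : ℕ → ℂ → ℂ) (hY : ∀ a u, Y a u = Q a (u - 1) / Q a (u + 1))
    (x : ℕ → ℂ → ℂ)
    (hxa : ∀ a, 1 ≤ a → a ≤ n - 1 → ∀ u : ℂ,
      x a u = Y a (u + a) / Y (a - 1) (u + a + 1))
    (hxn : ∀ u : ℂ, x n u = Y n (u + n) * Y n (u + n + s) / Y (n - 1) (u + n + 1))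
    (hxnbar : ∀ u : ℂ, x (n + 1) u
      = Y (n - 1) (u + n + 1 + s) / (Y n (u + n + 2) * Y n (u + n + 2 + s)))
    (hxbar : ∀ a, 1 ≤ a → a ≤ n - 1 → ∀ u : ℂ,
      x (2 * n - a + 1) u = Y (a - 1) (u + 2 * (n : ℂ) - a + 1 + s)
        / Y a (u + 2 * (n : ℂ) - a + 2 + s))
    (T : ℤ → ℂ → ℂ)
    (hTneg : ∀ a : ℤ, a < 0 → ∀ u, T a u = 0)
    (hTbig : ∀ a : ℤ, (N : ℤ) + 1 < a → ∀ u, T a u = 0)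
    (hTL : ∀ w : ℂ → ℂ, ∀ u : ℂ, Lop x (N + 1) w u
      = ∑ a ∈ Finset.range (N + 2), (-1) ^ a * T a (u + a) * w (u + 2 * a))
    :
    ∀ a : ℤ, ∀ u : ℂ, T a u = T ((N : ℤ) + 1 - a) (u + s) := by
  intro a u
  rcases lt_or_ge a 0 with ha | ha
  · rw [hTneg a ha u, hTbig _ (by omega) _]
  rcases lt_or_ge ((N : ℤ) + 1) a with ha' | ha'
  · rw [hTbig a ha' u, hTneg _ (by omega) _]
  obtain ⟨k, rfl⟩ := Int.eq_ofNat_of_zero_le ha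
  have hk : k ≤ 2 * n := by omega
  have hQne' : ∀ a ≤ n, ∀ u, Q a u ≠ 0 := fun a ha u => by
    rcases Nat.eq_zero_or_pos a with rfl | ha0
    · simp [hQ0]
    · exact hQne a ha0 ha u
  have hper : ∀ a ≤ n, ∃ c ≠ 0, ∀ u, Q a (u + 2 * s) = c * Q a u := fun a ha => by
    rcases Nat.eq_zero_or_pos a with rfl | ha0
    · exact ⟨1, one_ne_zero, by simp [hQ0]⟩
    · refine ⟨hconst a, (hQper a ha0 ha).1, fun u => ?_⟩
      rw [← (hQper a ha0 ha).2, hs]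
      ring_nf
  have hcoeff : ∀ j ≤ 2 * n, ∀ v, T j v = weightSum x (2 * n) j (v - j) := fun j hj v => by
    rw [show 2 * n = N + 1 by omega] at hj ⊢
    simpa using coeff_eq_weightSum (T := fun j => T j) hTL hj (v - j)
  rw [show (N : ℤ) + 1 - k = ((2 * n - k : ℕ) : ℤ) by omega, hcoeff k hk,
    hcoeff _ (Nat.sub_le _ _), weightSum_dual (fun b hb => chainA_ne_zero hQne' hb)
      (chainA_zero (by omega) hQ0) (chainA_two_mul (by omega) hQ0)
      (fun b hb => chainA_ratio Y x (by omega) hY hxa hxn hxnbar hxbar hb)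
      (fun b hb => chainA_symm hper hb) hk]
  congr 1
  push_cast [Nat.cast_sub hk]
  ring

theorem duality_A2_odd
    (n : ℕ) (hn : 2 ≤ n) (N : ℕ) (hN : N = 2 * n - 1)
    (hbar : ℂ) (hbar_ne : hbar ≠ 0) (s : ℂ)
    (hs : s = (Real.pi : ℂ) * Complex.I / (2 * hbar))
    (Q : ℕ → ℂ → ℂ) (hQ0 : ∀ u, Q 0 u = 1)
    (hQne : ∀ a, 1 ≤ a → a ≤ n → ∀ u, Q a u ≠ 0)
    (hconst : ℕ → ℂ)
    (hQper : ∀ a, 1 ≤ a → a ≤ n → hconst a ≠ 0 ∧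
      ∀ u, Q a (u + (Real.pi : ℂ) * Complex.I / hbar) = hconst a * Q a u)
    (Y : ℕ → ℂ → ℂ) (hY : ∀ a u, Y a u = Q a (u - 1) / Q a (u + 1))
    (x : ℕ → ℂ → ℂ)
    (hxa : ∀ a, 1 ≤ a → a ≤ n - 1 → ∀ u : ℂ,
      x a u = Y a (u + a) / Y (a - 1) (u + a + 1))
    (hxn : ∀ u : ℂ, x n u = Y n (u + n) * Y n (u + n + s) / Y (n - 1) (u + n + 1))
    (hxnbar : ∀ u : ℂ, x (n + 1) u
      = Y (n - 1) (u + n + 1 + s) / (Y n (u + n + 2) * Y n (u + n + 2 + s)))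
    (hxbar : ∀ a, 1 ≤ a → a ≤ n - 1 → ∀ u : ℂ,
      x (2 * n - a + 1) u = Y (a - 1) (u + 2 * (n : ℂ) - a + 1 + s)
        / Y a (u + 2 * (n : ℂ) - a + 2 + s))
    (T : ℤ → ℂ → ℂ)
    (hTneg : ∀ a : ℤ, a < 0 → ∀ u, T a u = 0)
    (hTbig : ∀ a : ℤ, (N : ℤ) + 1 < a → ∀ u, T a u = 0)
    (hTL : ∀ w : ℂ → ℂ, ∀ u : ℂ, Lop x (N + 1) w u
      = ∑ a ∈ Finset.range (N + 2), (-1) ^ a * T a (u + a) * w (u + 2 * a))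
    :
    ∀ a : ℤ, ∀ u : ℂ, T a u = T ((N : ℤ) + 1 - a) (u + s) :=
  duality_A2_odd_general n hn N hN hbar s hs Q hQ0 hQne hconst hQper Y hY x hxa hxn hxnbar hxbar T
    hTneg hTbig hTL
end

section
/- For every integer a with 0 ≤ a ≤ N+1 and every u ∈ ℂ, T^a(u+a)·[0,1,…,N](u) = [0,1,…,a−1,a+1,…,N+1](u); that is, T^a(u+a) equals the ratio of Casorati determinants [0,1,…,a−1,a+1,…,N+1](u)/[0,1,…,N](u) whenever the denominator is nonzero. -/
/-!
Put `t k := (-1)^k T^k(u+k)`. Since `L w_j = 0` for every `j`, the vector `t` lies in the kernel of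
the `(N+1) × (N+2)` Casorati matrix `W` with columns `(w_j(u + 2k))_j`, `0 ≤ k ≤ N+1`. For any kernel
vector of such a matrix, the adjugate identity applied to `W` bordered by one extra row gives
`t_i · det W_{N+1} = ± t_{N+1} · det W_i`, where `W_i` is `W` with column `i` deleted. It remains
to see `T^{N+1} = 1`: the leading coefficient of `L` is the product of all `x_a` along the shifts,
and this product telescopes to `1` because each `x_a` is a ratio of `Y`'s.
-/

open Complex

noncomputable def casorati (N : ℕ) (w : ℕ → ℂ → ℂ) (idx : ℕ → ℕ) (u : ℂ) : ℂ :=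
  Matrix.det (Matrix.of fun j k : Fin (N + 1) => w (j.1 + 1) (u + 2 * (idx k.1 : ℂ)))

open Finset Matrix

namespace Matrix

variable {R : Type*} [CommRing R] {m : ℕ}

theorem mul_det_vecCons_of_mulVec_eq_zero (W : Matrix (Fin m) (Fin (m + 1)) R)
    (r t : Fin (m + 1) → R) (ht : W *ᵥ t = 0) (i : Fin (m + 1)) :
    t i * det (of (vecCons r W)) =
      (-1) ^ (i : ℕ) * (r ⬝ᵥ t) * det (W.submatrix id i.succAbove) := by
  set M : Matrix (Fin (m + 1)) (Fin (m + 1)) R := of (vecCons r W)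
  have hMt : M *ᵥ t = Pi.single 0 (r ⬝ᵥ t) := by
    ext k
    refine Fin.cases ?_ (fun k => ?_) k
    · rfl
    · exact congrFun ht k
  -- `det M • t = adjugate M *ᵥ (M *ᵥ t)`, and only column `0` of `adjugate M` survives.
  have h := congrFun (congrArg (adjugate M *ᵥ ·) hMt) i
  simp only [mulVec_mulVec, adjugate_mul, smul_mulVec, one_mulVec, mulVec_single, Pi.smul_apply,
    smul_eq_mul, col_apply, op_smul_eq_mul, adjugate_fin_succ_eq_det_submatrix, Fin.val_zero,
    zero_add, Fin.succAbove_zero] at h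
  have hminor : M.submatrix Fin.succ i.succAbove = W.submatrix id i.succAbove := rfl
  rw [hminor] at h
  linear_combination h

theorem det_vecCons_single_last (W : Matrix (Fin m) (Fin (m + 1)) R) :
    det (of (vecCons (Pi.single (Fin.last m) 1) W)) =
      (-1) ^ m * det (W.submatrix id Fin.castSucc) := by
  rw [det_succ_row_zero, Fintype.sum_eq_single (Fin.last m)]
  · simp only [Nat.succ_eq_add_one, Fin.val_last, of_apply, cons_val, Pi.single_eq_same, mul_one,
      Fin.succAbove_last]
    rfl
  · intro j hj
    simp [hj]

theorem mul_det_submatrix_castSucc_of_mulVec_eq_zero (W : Matrix (Fin m) (Fin (m + 1)) R)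
    (t : Fin (m + 1) → R) (ht : W *ᵥ t = 0) (i : Fin (m + 1)) :
    t i * det (W.submatrix id Fin.castSucc)
      = (-1) ^ (m + i : ℕ) * t (Fin.last m) * det (W.submatrix id i.succAbove) := by
  have h := mul_det_vecCons_of_mulVec_eq_zero W (Pi.single (Fin.last m) 1) t ht i
  rw [det_vecCons_single_last, single_dotProduct, one_mul] at h
  have hsq : ((-1 : R) ^ m) ^ 2 = 1 := by rw [← pow_mul, mul_comm, pow_mul]; norm_num
  linear_combination (-1) ^ m * h - t i * det (W.submatrix id Fin.castSucc) * hsq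

end Matrix

theorem Fin.val_succAbove {m : ℕ} (p : Fin (m + 1)) (k : Fin m) :
    (p.succAbove k : ℕ) = if (k : ℕ) < p then (k : ℕ) else k + 1 := by
  simp only [Fin.succAbove, Fin.lt_def, Fin.val_castSucc]
  split_ifs <;> rfl

theorem prod_range_div_of_ne_zero {K : Type*} [CommGroupWithZero K] (f : ℕ → K) (n : ℕ)
    (hf : ∀ i ≤ n, f i ≠ 0) : ∏ i ∈ range n, f i / f (i + 1) = f 0 / f n := by
  induction n with
  | zero => simp [div_self (hf 0 le_rfl)]
  | succ n ih =>
    rw [prod_range_succ, ih fun i hi => hf i (by omega), div_mul_div_cancel₀ (hf n (by omega))]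

theorem Lop_succ_apply (x : ℕ → ℂ → ℂ) (m : ℕ) (w : ℂ → ℂ) (u : ℂ) :
    Lop x (m + 1) w u = Lop x m w u - x (m + 1) u * Lop x m w (u + 2) := rfl

private theorem add_two_add_two_mul (u : ℂ) (j : ℕ) :
    u + 2 + 2 * (j : ℂ) = u + 2 * ((j + 1 : ℕ) : ℂ) := by
  push_cast; ring

theorem Lop_apply_eq_zero (x : ℕ → ℂ → ℂ) (m : ℕ) (w : ℂ → ℂ) (u : ℂ)
    (hw : ∀ j ≤ m, w (u + 2 * j) = 0) : Lop x m w u = 0 := by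
  induction m generalizing u with
  | zero => simpa [Lop] using hw 0 le_rfl
  | succ m ih =>
    rw [Lop_succ_apply, ih u fun j hj => hw j (by omega), ih (u + 2) fun j hj => ?_]
    · ring
    · rw [add_two_add_two_mul]; exact hw (j + 1) (by omega)

theorem Lop_apply_of_forall_lt (x : ℕ → ℂ → ℂ) (m : ℕ) (w : ℂ → ℂ) (u : ℂ)
    (hw : ∀ j < m, w (u + 2 * j) = 0) :
    Lop x m w u = (-1) ^ m * (∏ j ∈ range m, x (m - j) (u + 2 * j)) * w (u + 2 * m) := by
  induction m generalizing u with
  | zero => simp [Lop]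
  | succ m ih =>
    rw [Lop_succ_apply, Lop_apply_eq_zero x m w u fun j hj => hw j (by omega),
      ih (u + 2) fun j hj => by rw [add_two_add_two_mul]; exact hw (j + 1) (by omega),
      prod_range_succ']
    simp only [add_two_add_two_mul, Nat.add_sub_add_right, Nat.sub_zero, Nat.cast_zero, mul_zero,
      add_zero]
    push_cast
    ring

theorem Lop_last_coeff_eq_prod (x : ℕ → ℂ → ℂ) (m : ℕ) (u : ℂ) (c : ℕ → ℂ)
    (hc : ∀ w : ℂ → ℂ, Lop x m w u = ∑ a ∈ range (m + 1), c a * w (u + 2 * a)) :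
    c m = (-1) ^ m * ∏ j ∈ range m, x (m - j) (u + 2 * j) := by
  classical
  have hinj : ∀ j k : ℕ, u + 2 * (j : ℂ) = u + 2 * k → j = k := fun j k h => by
    exact_mod_cast mul_left_cancel₀ two_ne_zero (add_left_cancel h)
  set δ : ℂ → ℂ := fun z => if z = u + 2 * m then 1 else 0
  have hδ : ∀ j < m, δ (u + 2 * j) = 0 := fun j hj => if_neg fun h => hj.ne (hinj j m h)
  have h := hc δ
  rw [Lop_apply_of_forall_lt x m δ u hδ, sum_range_succ,
    sum_eq_zero fun a ha => by rw [hδ a (mem_range.mp ha), mul_zero]] at h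
  simpa [δ] using h.symm

theorem prod_range_x_eq_one (n : ℕ) (s : ℂ) (Y x : ℕ → ℂ → ℂ)
    (hY0 : ∀ z, Y 0 z = 1) (hYne : ∀ b ≤ n, ∀ z, Y b z ≠ 0)
    (hxa : ∀ a, 1 ≤ a → a ≤ n → ∀ u : ℂ,
      x a u = Y a (u + a) / Y (a - 1) (u + a + 1))
    (hx0 : ∀ u : ℂ, x (n + 1) u = Y n (u + n + 1 + s) / Y n (u + n + 2))
    (hxbar : ∀ a, 1 ≤ a → a ≤ n → ∀ u : ℂ,
      x (2 * n - a + 2) u = Y (a - 1) (u + 2 * (n : ℂ) - a + 2 + s)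
        / Y a (u + 2 * (n : ℂ) - a + 3 + s))
    (v : ℂ) : ∏ j ∈ range (2 * n + 1), x (2 * n + 1 - j) (v + 2 * j) = 1 := by
  -- The factors `j < n` come from the `z_ā`, `j = n` from `z_0`, and `j > n` from the `z_a`;
  -- `F` is chosen so that each of them is `F j / F (j + 1)`.
  set F : ℕ → ℂ := fun j =>
    if j ≤ n then Y j (v + 2 * n + 1 + j + s) else Y (2 * n + 1 - j) (v + 2 * n + 1 + j) with hF
  have hFne : ∀ j ≤ 2 * n + 1, F j ≠ 0 := fun j hj => by
    simp only [hF]; split_ifs <;> exact hYne _ (by omega) _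
  have hterm : ∀ j ∈ range (2 * n + 1), x (2 * n + 1 - j) (v + 2 * j) = F j / F (j + 1) := by
    intro j hj
    rw [mem_range] at hj
    rcases lt_trichotomy j n with hjn | rfl | hnj
    · rw [show 2 * n + 1 - j = 2 * n - (j + 1) + 2 by omega, hxbar (j + 1) (by omega) (by omega)]
      simp only [hF, if_pos hjn.le, if_pos (show j + 1 ≤ n by omega), Nat.add_sub_cancel]
      congr 2 <;> push_cast <;> ring
    · rw [show 2 * j + 1 - j = j + 1 by omega, hx0]
      simp only [hF, if_pos le_rfl, if_neg (show ¬ j + 1 ≤ j by omega),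
        show 2 * j + 1 - (j + 1) = j by omega]
      congr 2 <;> push_cast <;> ring
    · obtain ⟨a, rfl⟩ : ∃ a, j = 2 * n + 1 - a := ⟨2 * n + 1 - j, by omega⟩
      rw [show 2 * n + 1 - (2 * n + 1 - a) = a by omega, hxa a (by omega) (by omega)]
      simp only [hF, if_neg (show ¬ 2 * n + 1 - a ≤ n by omega),
        if_neg (show ¬ 2 * n + 1 - a + 1 ≤ n by omega),
        show 2 * n + 1 - (2 * n + 1 - a) = a by omega,
        show 2 * n + 1 - (2 * n + 1 - a + 1) = a - 1 by omega]
      congr 2 <;> push_cast [Nat.cast_sub (show a ≤ 2 * n + 1 by omega)] <;> ring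
  have hF0 : F 0 = 1 := by simp [hF, hY0]
  have hFlast : F (2 * n + 1) = 1 := by
    simp only [hF, if_neg (show ¬ 2 * n + 1 ≤ n by omega), Nat.sub_self, hY0]
  rw [prod_congr rfl hterm, prod_range_div_of_ne_zero F _ hFne, hF0, hFlast, div_one]

noncomputable def casoratiMatrix (N : ℕ) (w : ℕ → ℂ → ℂ) (u : ℂ) :
    Matrix (Fin (N + 1)) (Fin (N + 2)) ℂ :=
  of fun j k => w (j.1 + 1) (u + 2 * (k.1 : ℂ))

theorem casorati_eq_det_submatrix (N : ℕ) (w : ℕ → ℂ → ℂ) (idx : ℕ → ℕ) (u : ℂ)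
    (f : Fin (N + 1) → Fin (N + 2)) (hf : ∀ k, (f k : ℕ) = idx k) :
    casorati N w idx u = det ((casoratiMatrix N w u).submatrix id f) := by
  unfold casorati casoratiMatrix
  congr 1
  ext j k
  simp [hf]

theorem casoratiMatrix_mulVec_eq_zero (N : ℕ) (x : ℕ → ℂ → ℂ) (T : ℤ → ℂ → ℂ)
    (w : ℕ → ℂ → ℂ)
    (hTL : ∀ w : ℂ → ℂ, ∀ u : ℂ, Lop x (N + 1) w u
      = ∑ a ∈ range (N + 2), (-1) ^ a * T a (u + a) * w (u + 2 * a))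
    (hw : ∀ b, 1 ≤ b → b ≤ N + 1 → ∀ u : ℂ, Lop x (N + 1) (w b) u = 0) (u : ℂ) :
    casoratiMatrix N w u *ᵥ (fun k => (-1) ^ (k : ℕ) * T k (u + k)) = 0 := by
  ext j
  rw [Pi.zero_apply, ← hw (j + 1) (by omega) (by omega) u, hTL, mulVec, dotProduct,
    ← Fin.sum_univ_eq_sum_range (fun a => (-1) ^ a * T a (u + a) * w (j + 1) (u + 2 * a))]
  exact sum_congr rfl fun k _ => mul_comm _ _

theorem cramer_A2_even_general
    (n : ℕ) (N : ℕ) (hN : N = 2 * n)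
    (s : ℂ)
    (Q : ℕ → ℂ → ℂ) (hQ0 : ∀ u, Q 0 u = 1)
    (hQne : ∀ a, 1 ≤ a → a ≤ n → ∀ u, Q a u ≠ 0)
    (Y : ℕ → ℂ → ℂ) (hY : ∀ a u, Y a u = Q a (u - 1) / Q a (u + 1))
    (x : ℕ → ℂ → ℂ)
    (hxa : ∀ a, 1 ≤ a → a ≤ n → ∀ u : ℂ,
      x a u = Y a (u + a) / Y (a - 1) (u + a + 1))
    (hx0 : ∀ u : ℂ, x (n + 1) u = Y n (u + n + 1 + s) / Y n (u + n + 2))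
    (hxbar : ∀ a, 1 ≤ a → a ≤ n → ∀ u : ℂ,
      x (2 * n - a + 2) u = Y (a - 1) (u + 2 * (n : ℂ) - a + 2 + s)
        / Y a (u + 2 * (n : ℂ) - a + 3 + s))
    (T : ℤ → ℂ → ℂ)
    (hTL : ∀ w : ℂ → ℂ, ∀ u : ℂ, Lop x (N + 1) w u
      = ∑ a ∈ Finset.range (N + 2), (-1) ^ a * T a (u + a) * w (u + 2 * a))
    (w : ℕ → ℂ → ℂ)
    (hw : ∀ b, 1 ≤ b → b ≤ N + 1 → ∀ u : ℂ, Lop x (N + 1) (w b) u = 0)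
    :
    ∀ a : ℕ, a ≤ N + 1 → ∀ u : ℂ,
      T (a : ℤ) (u + a) * casorati N w (fun k => k) u
        = casorati N w (fun k => if k < a then k else k + 1) u := by
  subst hN
  intro a ha u
  have hY0 : ∀ z, Y 0 z = 1 := fun z => by simp [hY, hQ0]
  have hYne : ∀ b ≤ n, ∀ z, Y b z ≠ 0 := fun b hb z => by
    rcases Nat.eq_zero_or_pos b with rfl | hb0
    · simp [hY0]
    · rw [hY]; exact div_ne_zero (hQne b hb0 hb _) (hQne b hb0 hb _)
  have htop : T (2 * n + 1 : ℕ) (u + (2 * n + 1 : ℕ)) = 1 := by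
    have h := Lop_last_coeff_eq_prod x (2 * n + 1) u _ (hTL · u)
    rw [prod_range_x_eq_one n s Y x hY0 hYne hxa hx0 hxbar] at h
    exact mul_left_cancel₀ (pow_ne_zero _ (neg_ne_zero.mpr one_ne_zero)) h
  have key := mul_det_submatrix_castSucc_of_mulVec_eq_zero _ _
    (casoratiMatrix_mulVec_eq_zero _ x T w hTL hw u) ⟨a, by omega⟩
  rw [casorati_eq_det_submatrix _ w _ u Fin.castSucc fun k => rfl,
    casorati_eq_det_submatrix _ w _ u _ fun k => Fin.val_succAbove ⟨a, by omega⟩ k]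
  simp only [Fin.val_last, htop] at key
  have hsign : (-1 : ℂ) ^ (2 * n + 1 + a) * ((-1) ^ (2 * n + 1) * 1) = (-1) ^ a := by
    rw [mul_one, ← pow_add, show 2 * n + 1 + a + (2 * n + 1) = a + 2 * (2 * n + 1) by ring,
      pow_add, pow_mul,
      neg_one_sq, one_pow, mul_one]
  rw [hsign, mul_assoc] at key
  exact mul_left_cancel₀ (pow_ne_zero _ (neg_ne_zero.mpr one_ne_zero)) key

theorem cramer_A2_even
    (n : ℕ) (hn : 1 ≤ n) (N : ℕ) (hN : N = 2 * n)
    (hbar : ℂ) (hbar_ne : hbar ≠ 0) (s : ℂ)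
    (hs : s = (Real.pi : ℂ) * Complex.I / (2 * hbar))
    (Q : ℕ → ℂ → ℂ) (hQ0 : ∀ u, Q 0 u = 1)
    (hQne : ∀ a, 1 ≤ a → a ≤ n → ∀ u, Q a u ≠ 0)
    (hconst : ℕ → ℂ)
    (hQper : ∀ a, 1 ≤ a → a ≤ n → hconst a ≠ 0 ∧
      ∀ u, Q a (u + (Real.pi : ℂ) * Complex.I / hbar) = hconst a * Q a u)
    (Y : ℕ → ℂ → ℂ) (hY : ∀ a u, Y a u = Q a (u - 1) / Q a (u + 1))
    (x : ℕ → ℂ → ℂ)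
    (hxa : ∀ a, 1 ≤ a → a ≤ n → ∀ u : ℂ,
      x a u = Y a (u + a) / Y (a - 1) (u + a + 1))
    (hx0 : ∀ u : ℂ, x (n + 1) u = Y n (u + n + 1 + s) / Y n (u + n + 2))
    (hxbar : ∀ a, 1 ≤ a → a ≤ n → ∀ u : ℂ,
      x (2 * n - a + 2) u = Y (a - 1) (u + 2 * (n : ℂ) - a + 2 + s)
        / Y a (u + 2 * (n : ℂ) - a + 3 + s))
    (T : ℤ → ℂ → ℂ)
    (hTneg : ∀ a : ℤ, a < 0 → ∀ u, T a u = 0)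
    (hTbig : ∀ a : ℤ, (N : ℤ) + 1 < a → ∀ u, T a u = 0)
    (hTL : ∀ w : ℂ → ℂ, ∀ u : ℂ, Lop x (N + 1) w u
      = ∑ a ∈ Finset.range (N + 2), (-1) ^ a * T a (u + a) * w (u + 2 * a))
    (w : ℕ → ℂ → ℂ)
    (hw : ∀ b, 1 ≤ b → b ≤ N + 1 → ∀ u : ℂ, Lop x (N + 1) (w b) u = 0)
    (hxi : ∀ u : ℂ, casorati N w (fun k => k) u ≠ 0)
    :
    ∀ a : ℕ, a ≤ N + 1 → ∀ u : ℂ,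
      T (a : ℤ) (u + a) * casorati N w (fun k => k) u
        = casorati N w (fun k => if k < a then k else k + 1) u :=
  cramer_A2_even_general n N hN s Q hQ0 hQne Y hY x hxa hx0 hxbar T hTL w hw
end

section
/- The operator L admits the reversed factorized form L = →∏_{a=1}^{N+1}( x_a(· + N + 1 − 2a + s) − D ): that is, for every function w : ℂ → ℂ and every u ∈ ℂ, (Lw)(u) = (Mw)(u), where M is the ordered composition over a = 1, …, N+1 (the factor a = 1 outermost) of the operators ((f − D)w)(u) := f(u)·w(u) − w(u+2) with f(u) = x_a(u + N + 1 − 2a + s). -/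
open Complex

noncomputable def FsubD (f w : ℂ → ℂ) : ℂ → ℂ := fun u => f u * w u - w (u + 2)

noncomputable def Mop (f : ℕ → ℂ → ℂ) (Nv : ℕ) : ℕ → (ℂ → ℂ) → (ℂ → ℂ)
  | 0 => fun w => w
  | a + 1 => fun w => FsubD (f (Nv + 1 - a)) (Mop f Nv a w)

/-!
With `Δ w := w - w(· + 2)`, a factor `1 - x D` with `x = ψ / ψ(· + 2)` equals `ψ ∘ Δ ∘ ψ⁻¹`, and a
factor `f - D` with `f = H / H(· + 2)` equals `H(· + 2)⁻¹ ∘ Δ ∘ H`; so both products take the normal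
form `g_{N+1} Δ g_N Δ ⋯ Δ g_0` (`gaugeChain`).

The boxes `z_a`, `z_0`, `z_ā` are the type-A boxes `Y_k(u + k) / Y_{k-1}(u + k + 1)` of the extended
sequence `P = (Q_0, …, Q_n, Q_n(· + s), …, Q_0(· + s))` (`extQ`), and quasi-periodicity of the `Q_a`
gives the reflection `Y_{N+1-k}(v + s) = Y_k(v)`. Through it, the shifted factors of the reversed
product become the type-A boxes read backwards, `Y_j(v + j) / Y_{j+1}(v + j + 1)`, and for these the
two normal forms have the same gauges `P_j(v+j-1) P_j(v+j+1) / (P_{j-1}(v+j) P_{j+1}(v+j))`.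
-/

noncomputable def gaugeChain (g : ℕ → ℂ → ℂ) : ℕ → (ℂ → ℂ) → ℂ → ℂ
  | 0 => fun w u => g 0 u * w u
  | k + 1 => fun w u => g (k + 1) u * (gaugeChain g k w u - gaugeChain g k w (u + 2))

theorem Lop_eq_mul_gaugeChain (x ψ : ℕ → ℂ → ℂ) (hψ0 : ∀ u, ψ 0 u = 1)
    (hψ : ∀ k u, ψ k u ≠ 0) (w : ℂ → ℂ) (m : ℕ)
    (hx : ∀ k, 1 ≤ k → k ≤ m → ∀ u, x k u * ψ k (u + 2) = ψ k u) (u : ℂ) :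
    Lop x m w u = ψ (m + 1) u * gaugeChain (fun j v => ψ j v / ψ (j + 1) v) m w u := by
  induction m generalizing u with
  | zero => simp only [Lop, gaugeChain, hψ0]; field_simp [hψ 1 u]
  | succ m ih =>
    have ih' := ih (fun k h1 h2 => hx k h1 (by omega))
    simp only [Lop, oneSubXD, gaugeChain, ih']
    rw [← mul_assoc (ψ (m + 1 + 1) u), mul_div_cancel₀ _ (hψ (m + 1 + 1) u)]
    linear_combination
      -gaugeChain (fun j v => ψ j v / ψ (j + 1) v) m w (u + 2) * hx (m + 1) le_add_self le_rfl u

theorem mul_Mop_eq_gaugeChain (f H : ℕ → ℂ → ℂ) (Nv : ℕ) (hH0 : ∀ v, H 0 v = 1)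
    (hH : ∀ k v, H k v ≠ 0)
    (hf : ∀ j, j ≤ Nv → ∀ v, f (Nv + 1 - j) v * H (j + 1) (v + 2) = H (j + 1) v)
    (w : ℂ → ℂ) (m : ℕ) (hm : m ≤ Nv + 1) (v : ℂ) :
    H (m + 1) v * Mop f Nv m w v = gaugeChain (fun j v => H (j + 1) v / H j (v + 2)) m w v := by
  induction m generalizing v with
  | zero => simp only [Mop, gaugeChain, hH0, div_one]
  | succ m ih =>
    simp only [Mop, FsubD, gaugeChain, ← ih (by omega)]
    rw [← hf m (by omega) v]
    field_simp [hH (m + 1) (v + 2)]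

noncomputable def yFun (P : ℕ → ℂ → ℂ) (k : ℕ) (v : ℂ) : ℂ := P k (v - 1) / P k (v + 1)

noncomputable def gaugeL (P : ℕ → ℂ → ℂ) : ℕ → ℂ → ℂ
  | 0 => fun _ => 1
  | k + 1 => fun u => P (k + 1) (u + k) / P k (u + k + 1)

noncomputable def gaugeM (P : ℕ → ℂ → ℂ) : ℕ → ℂ → ℂ
  | 0 => fun _ => 1
  | k + 1 => fun v => P k (v + k - 1) / P (k + 1) (v + k)

section
variable {P : ℕ → ℂ → ℂ}

theorem gaugeL_ne_zero (hP : ∀ k v, P k v ≠ 0) (k : ℕ) (u : ℂ) : gaugeL P k u ≠ 0 := by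
  cases k with
  | zero => exact one_ne_zero
  | succ k => exact div_ne_zero (hP _ _) (hP _ _)

theorem gaugeM_ne_zero (hP : ∀ k v, P k v ≠ 0) (k : ℕ) (v : ℂ) : gaugeM P k v ≠ 0 := by
  cases k with
  | zero => exact one_ne_zero
  | succ k => exact div_ne_zero (hP _ _) (hP _ _)

theorem box_mul_gaugeL (hP : ∀ k v, P k v ≠ 0) (k : ℕ) (u : ℂ) :
    yFun P (k + 1) (u + (k + 1 : ℕ)) / yFun P k (u + (k + 1 : ℕ) + 1) * gaugeL P (k + 1) (u + 2)
      = gaugeL P (k + 1) u := by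
  simp only [yFun, gaugeL]
  push_cast
  ring_nf
  field_simp [hP]

theorem revBox_mul_gaugeM (hP : ∀ k v, P k v ≠ 0) (j : ℕ) (v : ℂ) :
    yFun P j (v + j) / yFun P (j + 1) (v + j + 1) * gaugeM P (j + 1) (v + 2)
      = gaugeM P (j + 1) v := by
  simp only [yFun, gaugeM]
  ring_nf
  field_simp [hP]

theorem gaugeL_mul_gaugeM_succ (hP : ∀ k v, P k v ≠ 0) (k : ℕ) (v : ℂ) :
    gaugeL P (k + 1) v * gaugeM P (k + 1) v = yFun P k (v + k) := by
  simp only [yFun, gaugeL, gaugeM]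
  ring_nf
  field_simp [hP]

theorem gaugeL_mul_gaugeM_add_two (hP0 : ∀ v, P 0 v = 1) (hP : ∀ k v, P k v ≠ 0) (k : ℕ)
    (v : ℂ) : gaugeL P k v * gaugeM P k (v + 2) = yFun P k (v + k) := by
  cases k with
  | zero => simp [gaugeL, gaugeM, yFun, hP0]
  | succ k =>
    simp only [yFun, gaugeL, gaugeM]
    push_cast
    ring_nf
    field_simp [hP]

end

theorem Lop_eq_Mop_of_reflection (P : ℕ → ℂ → ℂ) (N : ℕ) (s : ℂ) (hP0 : ∀ v, P 0 v = 1)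
    (hP : ∀ k v, P k v ≠ 0)
    (hsym : ∀ k, k ≤ N + 1 → ∀ v, yFun P (N + 1 - k) (v + s) = yFun P k v)
    (x : ℕ → ℂ → ℂ) (hx : ∀ a, 1 ≤ a → a ≤ N + 1 → ∀ u,
      x a u = yFun P a (u + a) / yFun P (a - 1) (u + a + 1))
    (w : ℂ → ℂ) (u : ℂ) :
    Lop x (N + 1) w u = Mop (fun a v => x a (v + (N : ℂ) + 1 - 2 * a + s)) N (N + 1) w u := by
  have hxL : ∀ k, 1 ≤ k → k ≤ N + 1 → ∀ u, x k u * gaugeL P k (u + 2) = gaugeL P k u := by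
    intro k hk1 hk2 u
    obtain ⟨k, rfl⟩ := Nat.exists_eq_add_of_le' hk1
    rw [hx _ hk1 hk2, Nat.add_sub_cancel]
    exact box_mul_gaugeL hP k u
  have hfM : ∀ j, j ≤ N → ∀ v, x (N + 1 - j) (v + N + 1 - 2 * (N + 1 - j : ℕ) + s)
      * gaugeM P (j + 1) (v + 2) = gaugeM P (j + 1) v := by
    intro j hj v
    have hcast : ((N + 1 - j : ℕ) : ℂ) = N + 1 - j := by
      rw [Nat.cast_sub (by omega)]; push_cast; ring
    rw [hx _ (by omega) (by omega), hcast, Nat.sub_sub,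
      show v + N + 1 - 2 * (N + 1 - j) + s + (N + 1 - j) = v + j + s by ring,
      show v + j + s + 1 = v + j + 1 + s by ring, hsym j (by omega), hsym (j + 1) (by omega)]
    exact revBox_mul_gaugeM hP j v
  have hgauge : (fun j v => gaugeL P j v / gaugeL P (j + 1) v)
      = fun j v => gaugeM P (j + 1) v / gaugeM P j (v + 2) := by
    funext j v
    rw [div_eq_div_iff (gaugeL_ne_zero hP _ _) (gaugeM_ne_zero hP _ _),
      gaugeL_mul_gaugeM_add_two hP0 hP, mul_comm, gaugeL_mul_gaugeM_succ hP]
  have hYtop : ∀ v, yFun P (N + 1) v = 1 := fun v => by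
    simpa [yFun, hP0] using hsym 0 (Nat.zero_le _) (v - s)
  have hL := Lop_eq_mul_gaugeChain x (gaugeL P) (fun _ => rfl) (gaugeL_ne_zero hP) w (N + 1)
    hxL u
  have hM := mul_Mop_eq_gaugeChain (fun a v => x a (v + N + 1 - 2 * a + s)) (gaugeM P) N
    (fun _ => rfl) (gaugeM_ne_zero hP) hfM w (N + 1) le_rfl u
  rw [hL, hgauge, ← hM, ← mul_assoc, gaugeL_mul_gaugeM_succ hP, hYtop, one_mul]

theorem div_add_eq_div_of_quasiPeriodic {q : ℂ → ℂ} {c T : ℂ} (hc : c ≠ 0)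
    (hq : ∀ u, q (u + T) = c * q u) (a b : ℂ) : q (a + T) / q (b + T) = q a / q b := by
  rw [hq, hq, mul_div_mul_left _ _ hc]

noncomputable def extQ (n : ℕ) (s : ℂ) (Q : ℕ → ℂ → ℂ) (k : ℕ) (v : ℂ) : ℂ :=
  if k ≤ n then Q k v else Q (2 * n + 1 - k) (v + s)

section
variable {n : ℕ} {s : ℂ} {Q Y : ℕ → ℂ → ℂ}

theorem extQ_ne_zero (hQ0 : ∀ u, Q 0 u = 1) (hQne : ∀ a, 1 ≤ a → a ≤ n → ∀ u, Q a u ≠ 0)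
    (k : ℕ) (v : ℂ) : extQ n s Q k v ≠ 0 := by
  have hQ : ∀ a, a ≤ n → ∀ u, Q a u ≠ 0 := fun a ha u => by
    rcases Nat.eq_zero_or_pos a with rfl | h
    · simp [hQ0]
    · exact hQne a h ha u
  unfold extQ
  split_ifs with hk
  · exact hQ k hk v
  · exact hQ _ (by omega) _

theorem yFun_extQ_of_le (hY : ∀ a u, Y a u = Q a (u - 1) / Q a (u + 1)) {k : ℕ} (hk : k ≤ n)
    (v : ℂ) : yFun (extQ n s Q) k v = Y k v := by
  simp only [yFun, extQ, if_pos hk, hY]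

theorem yFun_extQ_of_lt (hY : ∀ a u, Y a u = Q a (u - 1) / Q a (u + 1)) {k : ℕ} (hk : n < k)
    (v : ℂ) : yFun (extQ n s Q) k v = Y (2 * n + 1 - k) (v + s) := by
  simp only [yFun, extQ, if_neg (not_le.2 hk), hY]
  ring_nf

theorem yFun_extQ_reflect (hY : ∀ a u, Y a u = Q a (u - 1) / Q a (u + 1))
    (hYper : ∀ k, k ≤ n → ∀ v, Y k (v + 2 * s) = Y k v) {k : ℕ}
    (hk : k ≤ 2 * n + 1) (v : ℂ) :
    yFun (extQ n s Q) (2 * n + 1 - k) (v + s) = yFun (extQ n s Q) k v := by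
  rcases le_or_gt k n with hkn | hkn
  · rw [yFun_extQ_of_lt hY (by omega), yFun_extQ_of_le hY hkn, Nat.sub_sub_self hk, add_assoc,
      ← two_mul, hYper k hkn]
  · rw [yFun_extQ_of_le hY (by omega), yFun_extQ_of_lt hY hkn]

theorem eq_box_extQ (hY : ∀ a u, Y a u = Q a (u - 1) / Q a (u + 1)) {x : ℕ → ℂ → ℂ}
    (hxa : ∀ a, 1 ≤ a → a ≤ n → ∀ u : ℂ, x a u = Y a (u + a) / Y (a - 1) (u + a + 1))
    (hx0 : ∀ u : ℂ, x (n + 1) u = Y n (u + n + 1 + s) / Y n (u + n + 2))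
    (hxbar : ∀ a, 1 ≤ a → a ≤ n → ∀ u : ℂ,
      x (2 * n - a + 2) u = Y (a - 1) (u + 2 * (n : ℂ) - a + 2 + s)
        / Y a (u + 2 * (n : ℂ) - a + 3 + s))
    (a : ℕ) (ha1 : 1 ≤ a) (ha2 : a ≤ 2 * n + 1) (u : ℂ) :
    x a u = yFun (extQ n s Q) a (u + a) / yFun (extQ n s Q) (a - 1) (u + a + 1) := by
  rcases lt_trichotomy a (n + 1) with ha | rfl | ha
  · rw [yFun_extQ_of_le hY (by omega), yFun_extQ_of_le hY (by omega), hxa a ha1 (by omega)]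
  · rw [yFun_extQ_of_lt hY (Nat.lt_succ_self n), Nat.add_sub_cancel, yFun_extQ_of_le hY le_rfl,
      hx0, show 2 * n + 1 - (n + 1) = n by omega]
    push_cast
    ring_nf
  · obtain ⟨b, hb1, hb2, rfl⟩ : ∃ b, 1 ≤ b ∧ b ≤ n ∧ a = 2 * n - b + 2 :=
      ⟨2 * n + 2 - a, by omega, by omega, by omega⟩
    rw [hxbar b hb1 hb2, yFun_extQ_of_lt hY (by omega), yFun_extQ_of_lt hY (by omega),
      show 2 * n + 1 - (2 * n - b + 2) = b - 1 by omega,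
      show 2 * n + 1 - (2 * n - b + 2 - 1) = b by omega]
    push_cast [Nat.cast_sub (show b ≤ 2 * n by omega)]
    ring_nf

end

theorem reversed_factorization_A2_even_general
    (n : ℕ) (N : ℕ) (hN : N = 2 * n)
    (hbar : ℂ) (s : ℂ)
    (hs : s = (Real.pi : ℂ) * Complex.I / (2 * hbar))
    (Q : ℕ → ℂ → ℂ) (hQ0 : ∀ u, Q 0 u = 1)
    (hQne : ∀ a, 1 ≤ a → a ≤ n → ∀ u, Q a u ≠ 0)
    (hconst : ℕ → ℂ)
    (hQper : ∀ a, 1 ≤ a → a ≤ n → hconst a ≠ 0 ∧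
      ∀ u, Q a (u + (Real.pi : ℂ) * Complex.I / hbar) = hconst a * Q a u)
    (Y : ℕ → ℂ → ℂ) (hY : ∀ a u, Y a u = Q a (u - 1) / Q a (u + 1))
    (x : ℕ → ℂ → ℂ)
    (hxa : ∀ a, 1 ≤ a → a ≤ n → ∀ u : ℂ,
      x a u = Y a (u + a) / Y (a - 1) (u + a + 1))
    (hx0 : ∀ u : ℂ, x (n + 1) u = Y n (u + n + 1 + s) / Y n (u + n + 2))
    (hxbar : ∀ a, 1 ≤ a → a ≤ n → ∀ u : ℂ,
      x (2 * n - a + 2) u = Y (a - 1) (u + 2 * (n : ℂ) - a + 2 + s)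
        / Y a (u + 2 * (n : ℂ) - a + 3 + s))
    :
    ∀ w : ℂ → ℂ, ∀ u : ℂ,
      Lop x (N + 1) w u
        = Mop (fun a v => x a (v + (N : ℂ) + 1 - 2 * a + s)) N (N + 1) w u := by
  intro w u
  subst hN
  have hY_periodic : ∀ k, k ≤ n → ∀ v, Y k (v + 2 * s) = Y k v := by
    intro k hk v
    rcases Nat.eq_zero_or_pos k with rfl | hk0
    · simp [hY, hQ0]
    · obtain ⟨hc, hper⟩ := hQper k hk0 hk
      rw [hY, hY, show 2 * s = (Real.pi : ℂ) * Complex.I / hbar by rw [hs]; ring,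
        add_sub_right_comm, add_right_comm]
      exact div_add_eq_div_of_quasiPeriodic hc hper _ _
  exact Lop_eq_Mop_of_reflection (extQ n s Q) (2 * n) s (fun _ => by simp [extQ, hQ0])
    (extQ_ne_zero hQ0 hQne) (fun _ hk v => yFun_extQ_reflect hY hY_periodic hk v) x
    (eq_box_extQ hY hxa hx0 hxbar) w u

theorem reversed_factorization_A2_even
    (n : ℕ) (hn : 1 ≤ n) (N : ℕ) (hN : N = 2 * n)
    (hbar : ℂ) (hbar_ne : hbar ≠ 0) (s : ℂ)
    (hs : s = (Real.pi : ℂ) * Complex.I / (2 * hbar))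
    (Q : ℕ → ℂ → ℂ) (hQ0 : ∀ u, Q 0 u = 1)
    (hQne : ∀ a, 1 ≤ a → a ≤ n → ∀ u, Q a u ≠ 0)
    (hconst : ℕ → ℂ)
    (hQper : ∀ a, 1 ≤ a → a ≤ n → hconst a ≠ 0 ∧
      ∀ u, Q a (u + (Real.pi : ℂ) * Complex.I / hbar) = hconst a * Q a u)
    (Y : ℕ → ℂ → ℂ) (hY : ∀ a u, Y a u = Q a (u - 1) / Q a (u + 1))
    (x : ℕ → ℂ → ℂ)
    (hxa : ∀ a, 1 ≤ a → a ≤ n → ∀ u : ℂ,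
      x a u = Y a (u + a) / Y (a - 1) (u + a + 1))
    (hx0 : ∀ u : ℂ, x (n + 1) u = Y n (u + n + 1 + s) / Y n (u + n + 2))
    (hxbar : ∀ a, 1 ≤ a → a ≤ n → ∀ u : ℂ,
      x (2 * n - a + 2) u = Y (a - 1) (u + 2 * (n : ℂ) - a + 2 + s)
        / Y a (u + 2 * (n : ℂ) - a + 3 + s))
    :
    ∀ w : ℂ → ℂ, ∀ u : ℂ,
      Lop x (N + 1) w u
        = Mop (fun a v => x a (v + (N : ℂ) + 1 - 2 * a + s)) N (N + 1) w u :=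
  reversed_factorization_A2_even_general n N hN hbar s hs Q hQ0 hQne hconst hQper Y hY x hxa hx0
    hxbar
end

section
/- The operator L admits the reversed factorized form L = →∏_{a=1}^{N+1}( x_a(· + N + 1 − 2a + s) − D ): that is, for every function w : ℂ → ℂ and every u ∈ ℂ, (Lw)(u) = (Mw)(u), where M is the ordered composition over a = 1, …, N+1 (the factor a = 1 outermost) of the operators ((f − D)w)(u) := f(u)·w(u) − w(u+2) with f(u) = x_a(u + N + 1 − 2a + s). -/
open Complex

noncomputable def Bop : List (ℂ → ℂ) → (ℂ → ℂ) → (ℂ → ℂ)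
  | [], w => w
  | m :: ms, w => fun u => m u * (Bop ms w u - Bop ms w (u + 2))

noncomputable def ratList (r : ℕ → ℂ → ℂ) : ℕ → List (ℂ → ℂ)
  | 0 => []
  | b + 1 => r (b + 1) :: ratList r b

lemma ratList_congr {r1 r2 : ℕ → ℂ → ℂ} : ∀ k, (∀ j, 1 ≤ j → j ≤ k → r1 j = r2 j) →
    ratList r1 k = ratList r2 k
  | 0, _ => rfl
  | k+1, h => by
    simp only [ratList]
    rw [h (k+1) (by omega) le_rfl, ratList_congr k (fun j h1 h2 => h j h1 (by omega))]

lemma lop_norm (x g : ℕ → ℂ → ℂ) (hg : ∀ j u, g j u ≠ 0) :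
    ∀ k : ℕ, (∀ j, 1 ≤ j → j ≤ k + 1 → ∀ u, x j u = g j u / g j (u + 2)) →
    ∀ (w : ℂ → ℂ) (u : ℂ),
      Lop x (k+1) w u
      = g (k+1) u * (Bop (ratList (fun j v => g j v / g (j+1) v) k) (fun v => w v / g 1 v) u
        - Bop (ratList (fun j v => g j v / g (j+1) v) k) (fun v => w v / g 1 v) (u+2)) := by
  intro k
  induction k with
  | zero =>
    intro hx w u
    show w u - x 1 u * w (u + 2) = _
    simp only [ratList, Bop]
    rw [hx 1 le_rfl le_rfl u]
    field_simp [hg 1 u, hg 1 (u+2)]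
  | succ k ih =>
    intro hx w u
    have ihh := ih (fun j h1 h2 => hx j h1 (by omega)) w
    show Lop x (k+1) w u - x (k+2) u * Lop x (k+1) w (u+2) = _
    rw [ihh u, ihh (u+2), hx (k+2) (by omega) le_rfl u]
    simp only [ratList, Bop]
    field_simp [hg (k+2) u, hg (k+2) (u+2)]

lemma mop_norm (f G : ℕ → ℂ → ℂ) (Nv : ℕ) (hG : ∀ j u, G j u ≠ 0) :
    ∀ a : ℕ, a ≤ Nv → (∀ j, 1 ≤ j → j ≤ Nv + 1 → ∀ u, f j u = G j u / G j (u + 2)) →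
    ∀ (w : ℂ → ℂ) (u : ℂ),
      Mop f Nv (a+1) w u
      = (Bop (ratList (fun j v => G (Nv+1-j) v / G (Nv+2-j) (v+2)) a) (fun v => G (Nv+1) v * w v) u
        - Bop (ratList (fun j v => G (Nv+1-j) v / G (Nv+2-j) (v+2)) a) (fun v => G (Nv+1) v * w v) (u+2))
        / G (Nv+1-a) (u+2) := by
  intro a
  induction a with
  | zero =>
    intro _ hf w u
    show f (Nv + 1 - 0) u * w u - w (u + 2) = _
    simp only [ratList, Bop, Nat.sub_zero]
    rw [hf (Nv+1) (by omega) le_rfl u]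
    field_simp [hG (Nv+1) u, hG (Nv+1) (u+2)]
  | succ a ih =>
    intro ha hf w u
    have ihh := ih (by omega) hf w
    show f (Nv + 1 - (a+1)) u * Mop f Nv (a+1) w u - Mop f Nv (a+1) w (u+2) = _
    rw [ihh u, ihh (u+2), hf (Nv+1-(a+1)) (by omega) (by omega) u]
    simp only [ratList, Bop]
    have e1 : Nv + 1 - (a+1) = Nv - a := by omega
    have e2 : Nv + 2 - (a+1) = Nv + 1 - a := by omega
    rw [e1, e2]
    field_simp [hG (Nv-a) u, hG (Nv-a) (u+2), hG (Nv+1-a) (u+2), hG (Nv+1-a) (u+2+2)]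
noncomputable def gFun (n : ℕ) (s : ℂ) (Q : ℕ → ℂ → ℂ) (j : ℕ) (u : ℂ) : ℂ :=
  if j ≤ n - 1 then Q j (u + j - 1) / Q (j - 1) (u + j)
  else if j = n then Q n (u + n - 1) * Q n (u + n - 1 + s) / Q (n - 1) (u + n)
  else if j = n + 1 then Q (n - 1) (u + n + s) / (Q n (u + n + 1) * Q n (u + n + 1 + s))
  else Q (2 * n - j) (u + j - 1 + s) / Q (2 * n + 1 - j) (u + j + s)

noncomputable def GFun (n : ℕ) (s : ℂ) (Q : ℕ → ℂ → ℂ) (j : ℕ) (u : ℂ) : ℂ :=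
  if j ≤ n - 1 then Q j (u + 2 * n - j - 1 + s) / Q (j - 1) (u + 2 * n - j + s)
  else if j = n then Q n (u + n - 1) * Q n (u + n - 1 + s) / Q (n - 1) (u + n + s)
  else if j = n + 1 then Q (n - 1) (u + n - 2) / (Q n (u + n - 1) * Q n (u + n - 1 + s))
  else Q (2 * n - j) (u + 2 * n - j - 1) / Q (2 * n + 1 - j) (u + 2 * n - j)

set_option maxHeartbeats 2000000 in
theorem reversed_factorization_A2_odd
    (n : ℕ) (hn : 2 ≤ n) (N : ℕ) (hN : N = 2 * n - 1)
    (hbar : ℂ) (hbar_ne : hbar ≠ 0) (s : ℂ)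
    (hs : s = (Real.pi : ℂ) * Complex.I / (2 * hbar))
    (Q : ℕ → ℂ → ℂ) (hQ0 : ∀ u, Q 0 u = 1)
    (hQne : ∀ a, 1 ≤ a → a ≤ n → ∀ u, Q a u ≠ 0)
    (hconst : ℕ → ℂ)
    (hQper : ∀ a, 1 ≤ a → a ≤ n → hconst a ≠ 0 ∧
      ∀ u, Q a (u + (Real.pi : ℂ) * Complex.I / hbar) = hconst a * Q a u)
    (Y : ℕ → ℂ → ℂ) (hY : ∀ a u, Y a u = Q a (u - 1) / Q a (u + 1))
    (x : ℕ → ℂ → ℂ)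
    (hxa : ∀ a, 1 ≤ a → a ≤ n - 1 → ∀ u : ℂ,
      x a u = Y a (u + a) / Y (a - 1) (u + a + 1))
    (hxn : ∀ u : ℂ, x n u = Y n (u + n) * Y n (u + n + s) / Y (n - 1) (u + n + 1))
    (hxnbar : ∀ u : ℂ, x (n + 1) u
      = Y (n - 1) (u + n + 1 + s) / (Y n (u + n + 2) * Y n (u + n + 2 + s)))
    (hxbar : ∀ a, 1 ≤ a → a ≤ n - 1 → ∀ u : ℂ,
      x (2 * n - a + 1) u = Y (a - 1) (u + 2 * (n : ℂ) - a + 1 + s)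
        / Y a (u + 2 * (n : ℂ) - a + 2 + s))
    :
    ∀ w : ℂ → ℂ, ∀ u : ℂ,
      Lop x (N + 1) w u
        = Mop (fun a v => x a (v + (N : ℂ) + 1 - 2 * a + s)) N (N + 1) w u := by
  intro w u
  have hQB : ∀ b, b ≤ n → ∀ v : ℂ, Q b v ≠ 0 := by
    intro b hb v
    rcases Nat.eq_zero_or_pos b with h0 | h1
    · rw [h0, hQ0]; exact one_ne_zero
    · exact hQne b h1 hb v
  have h2s : (Real.pi : ℂ) * Complex.I / hbar = 2 * s := by
    rw [hs]; field_simp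
  have hper : ∀ b, 1 ≤ b → b ≤ n → ∀ v : ℂ, Q b (v + 2 * s) = hconst b * Q b v := by
    intro b h1 h2 v
    have := (hQper b h1 h2).2 v
    rwa [h2s] at this
  have hcne : ∀ b, 1 ≤ b → b ≤ n → hconst b ≠ 0 := fun b h1 h2 => (hQper b h1 h2).1
  have hNc : (N : ℂ) + 1 = 2 * (n : ℂ) := by
    have h1 : N + 1 = 2 * n := by omega
    exact_mod_cast congrArg (Nat.cast : ℕ → ℂ) h1
  have hgne : ∀ j u, gFun n s Q j u ≠ 0 := by
    intro j v
    unfold gFun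
    split_ifs with h1 h2 h3
    · exact div_ne_zero (hQB j (by omega) _) (hQB (j-1) (by omega) _)
    · exact div_ne_zero (mul_ne_zero (hQB n le_rfl _) (hQB n le_rfl _)) (hQB (n-1) (by omega) _)
    · exact div_ne_zero (hQB (n-1) (by omega) _) (mul_ne_zero (hQB n le_rfl _) (hQB n le_rfl _))
    · exact div_ne_zero (hQB (2*n-j) (by omega) _) (hQB (2*n+1-j) (by omega) _)
  have hGne : ∀ j u, GFun n s Q j u ≠ 0 := by
    intro j v
    unfold GFun
    split_ifs with h1 h2 h3
    · exact div_ne_zero (hQB j (by omega) _) (hQB (j-1) (by omega) _)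
    · exact div_ne_zero (mul_ne_zero (hQB n le_rfl _) (hQB n le_rfl _)) (hQB (n-1) (by omega) _)
    · exact div_ne_zero (hQB (n-1) (by omega) _) (mul_ne_zero (hQB n le_rfl _) (hQB n le_rfl _))
    · exact div_ne_zero (hQB (2*n-j) (by omega) _) (hQB (2*n+1-j) (by omega) _)
  have hK1 : ∀ j, 1 ≤ j → j ≤ N + 1 → ∀ v : ℂ,
      x j v = gFun n s Q j v / gFun n s Q j (v + 2) := by
    intro j hj1 hj2 v
    rcases (by omega : j ≤ n - 1 ∨ j = n ∨ j = n + 1 ∨ (n + 2 ≤ j ∧ j ≤ 2 * n)) with hA | hB | hC | ⟨hD1, hD2⟩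
    · -- case j ≤ n - 1
      rw [hxa j hj1 hA v]
      simp only [hY]
      unfold gFun
      simp only [if_pos hA]
      rw [div_div_div_comm]
      field_simp [hQB j (by omega), hQB (j-1) (by omega)]
      ring_nf
    · -- case j = n
      rw [hB, hxn v]
      simp only [hY]
      unfold gFun
      rw [if_neg (by omega : ¬ (n ≤ n - 1)), if_pos rfl, if_neg (by omega : ¬ (n ≤ n - 1)), if_pos rfl]
      field_simp [hQB n le_rfl, hQB (n-1) (by omega)]
      ring_nf
    · -- case j = n + 1
      rw [hC, hxnbar v]
      simp only [hY]
      unfold gFun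
      rw [if_neg (by omega : ¬ (n+1 ≤ n - 1)), if_neg (by omega : ¬ (n+1 = n)), if_pos rfl,
          if_neg (by omega : ¬ (n+1 ≤ n - 1)), if_neg (by omega : ¬ (n+1 = n)), if_pos rfl]
      field_simp [hQB n le_rfl, hQB (n-1) (by omega)]
      ring_nf
    · -- case n + 2 ≤ j ≤ 2n
      obtain ⟨a, ha1, ha2, rfl⟩ : ∃ a, 1 ≤ a ∧ a ≤ n - 1 ∧ j = 2 * n - a + 1 :=
        ⟨2*n+1-j, by omega, by omega, by omega⟩
      rw [hxbar a ha1 ha2 v]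
      simp only [hY]
      unfold gFun
      rw [if_neg (by omega : ¬ (2*n-a+1 ≤ n - 1)), if_neg (by omega : ¬ (2*n-a+1 = n)),
          if_neg (by omega : ¬ (2*n-a+1 = n+1)),
          if_neg (by omega : ¬ (2*n-a+1 ≤ n - 1)), if_neg (by omega : ¬ (2*n-a+1 = n)),
          if_neg (by omega : ¬ (2*n-a+1 = n+1))]
      rw [show 2*n - (2*n-a+1) = a - 1 by omega, show 2*n+1 - (2*n-a+1) = a by omega]
      rw [show ((2*n-a+1 : ℕ) : ℂ) = 2*(n:ℂ) - a + 1 by push_cast [Nat.cast_sub (by omega : a ≤ 2*n)]; ring]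
      field_simp [hQB a (by omega), hQB (a-1) (by omega)]
      ring_nf
  have hNc2 : (N : ℂ) = 2 * (n : ℂ) - 1 := by linear_combination hNc
  have hper' : ∀ b, b ≤ n → ∃ c : ℂ, c ≠ 0 ∧ ∀ v : ℂ, Q b (v + 2 * s) = c * Q b v := by
    intro b hb
    rcases Nat.eq_zero_or_pos b with h0 | h1
    · exact ⟨1, one_ne_zero, fun v => by rw [h0, hQ0, hQ0]; ring⟩
    · exact ⟨hconst b, hcne b h1 hb, hper b h1 hb⟩
  have hK2 : ∀ j, 1 ≤ j → j ≤ N + 1 → ∀ v : ℂ,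
      x j (v + (N : ℂ) + 1 - 2 * j + s) = GFun n s Q j v / GFun n s Q j (v + 2) := by
    intro j hj1 hj2 v
    rcases (by omega : j ≤ n - 1 ∨ j = n ∨ j = n + 1 ∨ (n + 2 ≤ j ∧ j ≤ 2 * n)) with hA | hB | hC | ⟨hD1, hD2⟩
    · -- case j ≤ n - 1
      rw [hxa j hj1 hA _]
      simp only [hY]
      unfold GFun
      simp only [if_pos hA]
      rw [hNc2]
      field_simp [hQB j (by omega), hQB (j-1) (by omega)]
      ring_nf
    · -- case j = n
      rw [hB]
      rw [show v + (N : ℂ) + 1 - 2 * (n:ℂ) + s = v + s from by rw [hNc2]; ring]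
      rw [hxn (v + s)]
      simp only [hY]
      obtain ⟨c, hc, hp⟩ := hper' n le_rfl
      rw [show v + s + (n:ℂ) + s - 1 = (v + (n:ℂ) - 1) + 2 * s from by ring,
          show v + s + (n:ℂ) + s + 1 = (v + (n:ℂ) + 1) + 2 * s from by ring,
          hp, hp]
      unfold GFun
      rw [if_neg (by omega : ¬ (n ≤ n - 1)), if_pos rfl, if_neg (by omega : ¬ (n ≤ n - 1)), if_pos rfl]
      field_simp [hQB n le_rfl, hQB (n-1) (by omega), hc]
      ring_nf
    · -- case j = n + 1
      rw [hC]
      rw [show v + (N : ℂ) + 1 - 2 * ((n+1 : ℕ) : ℂ) + s = v - 2 + s from by push_cast; rw [hNc2]; ring]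
      rw [hxnbar (v - 2 + s)]
      simp only [hY]
      obtain ⟨c, hc, hp⟩ := hper' n le_rfl
      obtain ⟨c', hc', hp'⟩ := hper' (n-1) (by omega)
      rw [show v - 2 + s + (n:ℂ) + 1 + s - 1 = (v + (n:ℂ) - 2) + 2 * s from by ring,
          show v - 2 + s + (n:ℂ) + 1 + s + 1 = (v + (n:ℂ)) + 2 * s from by ring,
          hp', hp',
          show v - 2 + s + (n:ℂ) + 2 + s - 1 = (v + (n:ℂ) - 1) + 2 * s from by ring,
          show v - 2 + s + (n:ℂ) + 2 + s + 1 = (v + (n:ℂ) + 1) + 2 * s from by ring,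
          hp, hp]
      unfold GFun
      rw [if_neg (by omega : ¬ (n+1 ≤ n - 1)), if_neg (by omega : ¬ (n+1 = n)), if_pos rfl,
          if_neg (by omega : ¬ (n+1 ≤ n - 1)), if_neg (by omega : ¬ (n+1 = n)), if_pos rfl]
      field_simp [hQB n le_rfl, hQB (n-1) (by omega), hc, hc']
      ring_nf
    · -- case n + 2 ≤ j ≤ 2n
      obtain ⟨a, ha1, ha2, rfl⟩ : ∃ a, 1 ≤ a ∧ a ≤ n - 1 ∧ j = 2 * n - a + 1 :=
        ⟨2*n+1-j, by omega, by omega, by omega⟩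
      rw [show v + (N : ℂ) + 1 - 2 * ((2*n-a+1 : ℕ) : ℂ) + s = v + 2*(a:ℂ) - 2*(n:ℂ) - 2 + s from by
        push_cast [Nat.cast_sub (by omega : a ≤ 2*n)]; rw [hNc2]; ring]
      rw [hxbar a ha1 ha2 _]
      simp only [hY]
      obtain ⟨c, hc, hp⟩ := hper' a (by omega)
      obtain ⟨c', hc', hp'⟩ := hper' (a-1) (by omega)
      rw [show v + 2*(a:ℂ) - 2*(n:ℂ) - 2 + s + 2 * (n:ℂ) - (a:ℂ) + 1 + s - 1 = (v + (a:ℂ) - 2) + 2 * s from by ring,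
          show v + 2*(a:ℂ) - 2*(n:ℂ) - 2 + s + 2 * (n:ℂ) - (a:ℂ) + 1 + s + 1 = (v + (a:ℂ)) + 2 * s from by ring,
          hp', hp',
          show v + 2*(a:ℂ) - 2*(n:ℂ) - 2 + s + 2 * (n:ℂ) - (a:ℂ) + 2 + s - 1 = (v + (a:ℂ) - 1) + 2 * s from by ring,
          show v + 2*(a:ℂ) - 2*(n:ℂ) - 2 + s + 2 * (n:ℂ) - (a:ℂ) + 2 + s + 1 = (v + (a:ℂ) + 1) + 2 * s from by ring,
          hp, hp]
      unfold GFun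
      rw [if_neg (by omega : ¬ (2*n-a+1 ≤ n - 1)), if_neg (by omega : ¬ (2*n-a+1 = n)),
          if_neg (by omega : ¬ (2*n-a+1 = n+1)),
          if_neg (by omega : ¬ (2*n-a+1 ≤ n - 1)), if_neg (by omega : ¬ (2*n-a+1 = n)),
          if_neg (by omega : ¬ (2*n-a+1 = n+1))]
      rw [show 2*n - (2*n-a+1) = a - 1 by omega, show 2*n+1 - (2*n-a+1) = a by omega]
      rw [show ((2*n-a+1 : ℕ) : ℂ) = 2*(n:ℂ) - a + 1 from by push_cast [Nat.cast_sub (by omega : a ≤ 2*n)]; ring]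
      field_simp [hQB a (by omega), hQB (a-1) (by omega), hc, hc']
      ring_nf
  have hK3 : ∀ j, 1 ≤ j → j ≤ N →
      (fun v => gFun n s Q j v / gFun n s Q (j+1) v)
        = (fun v => GFun n s Q (N+1-j) v / GFun n s Q (N+2-j) (v+2)) := by
    intro j hj1 hj2
    funext v
    rw [show N+1-j = 2*n-j by omega, show N+2-j = 2*n+1-j by omega]
    rcases (by omega : j ≤ n - 2 ∨ j = n - 1 ∨ j = n ∨ j = n + 1 ∨ (n + 2 ≤ j ∧ j ≤ 2*n - 1))
      with hA | hB | hC | hD | ⟨hE1, hE2⟩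
    · -- j ≤ n-2
      unfold gFun GFun
      rw [if_pos (by omega : j ≤ n - 1), if_pos (by omega : j + 1 ≤ n - 1),
          if_neg (by omega : ¬ (2*n-j ≤ n - 1)), if_neg (by omega : ¬ (2*n-j = n)),
          if_neg (by omega : ¬ (2*n-j = n+1)),
          if_neg (by omega : ¬ (2*n+1-j ≤ n - 1)), if_neg (by omega : ¬ (2*n+1-j = n)),
          if_neg (by omega : ¬ (2*n+1-j = n+1))]
      rw [show 2*n - (2*n-j) = j by omega, show 2*n+1 - (2*n-j) = j+1 by omega,
          show 2*n - (2*n+1-j) = j-1 by omega, show 2*n+1 - (2*n+1-j) = j by omega,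
          show (j+1) - 1 = j by omega]
      rw [show ((2*n-j : ℕ) : ℂ) = 2*(n:ℂ) - j from by push_cast [Nat.cast_sub (by omega : j ≤ 2*n)]; ring,
          show ((2*n+1-j : ℕ) : ℂ) = 2*(n:ℂ) + 1 - j from by push_cast [Nat.cast_sub (by omega : j ≤ 2*n+1)]; ring]
      push_cast
      field_simp [hQB j (by omega), hQB (j-1) (by omega), hQB (j+1) (by omega)]
      ring_nf
    · -- j = n-1
      rw [hB, show n-1+1 = n by omega, show 2*n-(n-1) = n+1 by omega, show 2*n+1-(n-1) = n+2 by omega]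
      unfold gFun GFun
      rw [if_pos (by omega : n-1 ≤ n - 1), if_neg (by omega : ¬ (n ≤ n - 1)), if_pos rfl,
          if_neg (by omega : ¬ (n+1 ≤ n - 1)), if_neg (by omega : ¬ (n+1 = n)), if_pos rfl,
          if_neg (by omega : ¬ (n+2 ≤ n - 1)), if_neg (by omega : ¬ (n+2 = n)),
          if_neg (by omega : ¬ (n+2 = n+1))]
      rw [show 2*n - (n+2) = n-2 by omega, show 2*n+1 - (n+2) = n-1 by omega,
          show n-1-1 = n-2 by omega]
      rw [show ((n-1 : ℕ) : ℂ) = (n:ℂ) - 1 from by push_cast [Nat.cast_sub (by omega : 1 ≤ n)]; ring,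
          show ((n+2 : ℕ) : ℂ) = (n:ℂ) + 2 from by push_cast; ring]
      field_simp [hQB n le_rfl, hQB (n-1) (by omega), hQB (n-2) (by omega)]
      ring_nf
    · -- j = n
      rw [hC, show 2*n-n = n by omega, show 2*n+1-n = n+1 by omega]
      unfold gFun GFun
      rw [if_neg (by omega : ¬ (n ≤ n - 1)), if_pos rfl,
          if_neg (by omega : ¬ (n+1 ≤ n - 1)), if_neg (by omega : ¬ (n+1 = n)), if_pos rfl,
          if_neg (by omega : ¬ (n ≤ n - 1)), if_pos rfl,
          if_neg (by omega : ¬ (n+1 ≤ n - 1)), if_neg (by omega : ¬ (n+1 = n)), if_pos rfl]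
      field_simp [hQB n le_rfl, hQB (n-1) (by omega)]
      ring_nf
    · -- j = n+1
      rw [hD, show 2*n-(n+1) = n-1 by omega, show 2*n+1-(n+1) = n by omega]
      unfold gFun GFun
      rw [if_neg (by omega : ¬ (n+1 ≤ n - 1)), if_neg (by omega : ¬ (n+1 = n)), if_pos rfl,
          if_neg (by omega : ¬ (n+1+1 ≤ n - 1)), if_neg (by omega : ¬ (n+1+1 = n)),
          if_neg (by omega : ¬ (n+1+1 = n+1)),
          if_pos (by omega : n-1 ≤ n - 1),
          if_neg (by omega : ¬ (n ≤ n - 1)), if_pos rfl]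
      rw [show 2*n - (n+1+1) = n-2 by omega, show 2*n+1 - (n+1+1) = n-1 by omega,
          show n-1-1 = n-2 by omega]
      rw [show ((n+1+1 : ℕ) : ℂ) = (n:ℂ) + 2 from by push_cast; ring,
          show ((n-1 : ℕ) : ℂ) = (n:ℂ) - 1 from by push_cast [Nat.cast_sub (by omega : 1 ≤ n)]; ring]
      push_cast
      field_simp [hQB n le_rfl, hQB (n-1) (by omega), hQB (n-2) (by omega)]
      ring_nf
    · -- n+2 ≤ j ≤ 2n-1
      unfold gFun GFun
      rw [if_neg (by omega : ¬ (j ≤ n - 1)), if_neg (by omega : ¬ (j = n)),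
          if_neg (by omega : ¬ (j = n+1)),
          if_neg (by omega : ¬ (j+1 ≤ n - 1)), if_neg (by omega : ¬ (j+1 = n)),
          if_neg (by omega : ¬ (j+1 = n+1)),
          if_pos (by omega : 2*n-j ≤ n - 1), if_pos (by omega : 2*n+1-j ≤ n - 1)]
      rw [show 2*n - (j+1) = 2*n-j-1 by omega, show 2*n+1 - (j+1) = 2*n-j by omega,
          show 2*n-j - 1 = 2*n-j-1 by omega, show 2*n+1-j - 1 = 2*n-j by omega]
      rw [show ((2*n-j : ℕ) : ℂ) = 2*(n:ℂ) - j from by push_cast [Nat.cast_sub (by omega : j ≤ 2*n)]; ring,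
          show ((2*n+1-j : ℕ) : ℂ) = 2*(n:ℂ) + 1 - j from by push_cast [Nat.cast_sub (by omega : j ≤ 2*n+1)]; ring]
      push_cast
      field_simp [hQB (2*n-j) (by omega), hQB (2*n-j-1) (by omega), hQB (2*n+1-j) (by omega)]
      ring_nf
  have hN1 : N + 1 = 2 * n := by omega
  have hw2 : (fun v => w v / gFun n s Q 1 v) = (fun v => GFun n s Q (N+1) v * w v) := by
    funext v
    rw [hN1]
    unfold gFun GFun
    rw [if_pos (by omega : 1 ≤ n - 1), if_neg (by omega : ¬ (2*n ≤ n - 1)),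
        if_neg (by omega : ¬ (2*n = n)), if_neg (by omega : ¬ (2*n = n + 1))]
    simp only [Nat.cast_one, Nat.sub_self, Nat.cast_mul, Nat.cast_ofNat]
    rw [show (2*n+1-2*n : ℕ) = 1 by omega]
    rw [show v + 1 - 1 = v by ring, show v + 2*(n:ℂ) - 2*(n:ℂ) - 1 = v - 1 by ring,
        show v + 2*(n:ℂ) - 2*(n:ℂ) = v by ring]
    rw [hQ0, hQ0]
    field_simp
  have htop : gFun n s Q (N+1) u * GFun n s Q 1 (u+2) = 1 := by
    rw [hN1]
    unfold gFun GFun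
    rw [if_neg (by omega : ¬ (2*n ≤ n - 1)), if_neg (by omega : ¬ (2*n = n)),
        if_neg (by omega : ¬ (2*n = n + 1)), if_pos (by omega : 1 ≤ n - 1)]
    simp only [Nat.cast_one, Nat.sub_self, Nat.cast_mul, Nat.cast_ofNat]
    rw [show (2*n+1-2*n : ℕ) = 1 by omega]
    rw [show u + (2:ℂ) + 2*(n:ℂ) - 1 - 1 + s = u + 2*(n:ℂ) + s by ring]
    rw [hQ0, hQ0]
    field_simp
    exact div_self (hQB 1 (by omega) _)
  rw [lop_norm x (gFun n s Q) hgne N hK1 w u,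
      mop_norm (fun a v => x a (v + (N : ℂ) + 1 - 2 * a + s)) (GFun n s Q) N hGne N le_rfl hK2 w u]
  rw [ratList_congr N hK3, hw2]
  have hsub : N + 1 - N = 1 := by omega
  rw [hsub, eq_div_iff (hGne 1 (u+2))]
  linear_combination (Bop (ratList (fun j v => GFun n s Q (N+1-j) v / GFun n s Q (N+2-j) (v+2)) N)
      (fun v => GFun n s Q (N+1) v * w v) u
    - Bop (ratList (fun j v => GFun n s Q (N+1-j) v / GFun n s Q (N+2-j) (v+2)) N)
      (fun v => GFun n s Q (N+1) v * w v) (u+2)) * htop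
end

section
/- For every integer a with 0 ≤ a ≤ N+1, every integer m ≥ 0, and every u ∈ ℂ, the duality relation ξ^{(a)}_m(u) · ξ(u + 2a − N − 1 + s) = ξ^{(N−a+1)}_m(u + 2a − N − 1 + s) · ξ(u) holds; equivalently ξ^{(a)}_m(u)/ξ(u) = ξ^{(N−a+1)}_m(u + 2a − N − 1 + s)/ξ(u + 2a − N − 1 + s). -/
open Complex

noncomputable def DsubF (f w : ℂ → ℂ) : ℂ → ℂ := fun u => w (u + 2) - f u * w u

noncomputable def Lfac (f : ℕ → ℂ → ℂ) (Nv : ℕ) : ℕ → (ℂ → ℂ) → (ℂ → ℂ)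
  | 0 => fun w => w
  | a + 1 => fun w => DsubF (f (Nv + 1 - a)) (Lfac f Nv a w)

/-!
Write `L = Lop x (N + 1) = ∑ᵢ cᵢ(v) Dⁱ`, so `c₀ = 1`, and `f_c(v) = x_c(v + N + 1 - 2c + s)`.
The closed-form gauge `G = boxGauge` satisfies `x_{k+1}(v) G_k(v + 2) = G_{k+1}(v)` and
`G_k = G_{k+1} f_{N+1-k}`; these intertwine `1 - x_{k+1} D` with `f_{N+1-k} - D`, and since
`G₀ = G_{N+1} = 1` and `N + 1` is even, `L = (D - f₁) ⋯ (D - f_{N+1})`. The right-hand side is the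
formal adjoint of `L` up to a shift by `N + 1` and `s`, so the coefficients are self-dual,
`c_i(v) = c_{N+1-i}(v + s - N - 1 + 2i)`; in particular `c_{N+1} = 1`.

The relations `∑ᵢ cᵢ(u + 2t) w_b(u + 2t + 2i) = 0` eliminate the `m` missing columns of
`ξ^{(a)}_m(u)`: `ξ^{(a)}_m(u) = (-1)^{ma} det[c_{a+t-t'}(u + 2t')] ξ(u + 2m)`. For `m = 1` and
`a = N + 1` this shows that `ξ` is `2`-periodic, and by self-duality the `m × m` matrix for `a` at
`u` is the transpose of the one for `N + 1 - a` at `u + 2a - N - 1 + s`.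
-/

/-- The coefficient of `w (v + 2 * i)` in `T w v`, read off by testing `T` against an indicator. -/
noncomputable def diffCoeff (T : (ℂ → ℂ) → ℂ → ℂ) (i : ℤ) (v : ℂ) : ℂ :=
  T (fun u => if u = v + 2 * i then 1 else 0) v

structure IsTwoTermChain (α β : ℕ → ℂ → ℂ) (T : ℕ → (ℂ → ℂ) → ℂ → ℂ) : Prop where
  zero : ∀ w, T 0 w = w
  succ : ∀ k w v, T (k + 1) w v = α k v * T k w v + β k v * T k w (v + 2)

namespace IsTwoTermChain

variable {α β : ℕ → ℂ → ℂ} {T : ℕ → (ℂ → ℂ) → ℂ → ℂ}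

lemma diffCoeff_zero (hT : IsTwoTermChain α β T) (i : ℤ) (v : ℂ) :
    diffCoeff (T 0) i v = if i = 0 then 1 else 0 := by
  simp [diffCoeff, hT.zero, eq_comm (a := v)]

lemma diffCoeff_succ (hT : IsTwoTermChain α β T) (k : ℕ) (i : ℤ) (v : ℂ) :
    diffCoeff (T (k + 1)) i v
      = α k v * diffCoeff (T k) i v + β k v * diffCoeff (T k) (i - 1) (v + 2) := by
  simp only [diffCoeff, hT.succ]
  congr 3
  ext u
  rw [show v + 2 + 2 * ((i - 1 : ℤ) : ℂ) = v + 2 * i by push_cast; ring]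

lemma diffCoeff_eq_zero (hT : IsTwoTermChain α β T) {k : ℕ} {i : ℤ} (hi : i < 0 ∨ k < i)
    (v : ℂ) : diffCoeff (T k) i v = 0 := by
  induction k generalizing i v with
  | zero => rw [hT.diffCoeff_zero, if_neg (by omega)]
  | succ k ih => rw [hT.diffCoeff_succ, ih (by omega), ih (by omega), mul_zero, mul_zero, add_zero]

lemma eq_sum_diffCoeff (hT : IsTwoTermChain α β T) {k M : ℕ} (hkM : k < M) (w : ℂ → ℂ)
    (v : ℂ) : T k w v = ∑ i ∈ Finset.range M, diffCoeff (T k) i v * w (v + 2 * i) := by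
  induction k generalizing v with
  | zero =>
    rw [hT.zero, Finset.sum_eq_single 0 (fun i _ hi => by
      rw [hT.diffCoeff_zero, if_neg (by exact_mod_cast hi), zero_mul]) (by simp; omega)]
    simp [hT.diffCoeff_zero]
  | succ k ih =>
    obtain ⟨M, rfl⟩ : ∃ M', M = M' + 1 := ⟨M - 1, by omega⟩
    have hshift :
        ∑ i ∈ Finset.range (M + 1), diffCoeff (T k) ((i : ℤ) - 1) (v + 2) * w (v + 2 * i)
          = ∑ i ∈ Finset.range (M + 1), diffCoeff (T k) i (v + 2) * w (v + 2 + 2 * i) := by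
      rw [Finset.sum_range_succ', Finset.sum_range_succ, hT.diffCoeff_eq_zero (by omega),
        hT.diffCoeff_eq_zero (k := k) (i := M) (by omega)]
      simp only [zero_mul, add_zero, Nat.cast_add, Nat.cast_one, add_sub_cancel_right]
      refine Finset.sum_congr rfl fun i _ => ?_
      ring_nf
    simp only [hT.succ, hT.diffCoeff_succ, ih (by omega), add_mul, Finset.sum_add_distrib,
      mul_assoc, ← Finset.mul_sum, hshift]

end IsTwoTermChain

lemma isTwoTermChain_Lop (x : ℕ → ℂ → ℂ) :
    IsTwoTermChain (fun _ _ => 1) (fun j v => -x (j + 1) v) (Lop x) where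
  zero _ := rfl
  succ k w v := by
    show Lop x k w v - x (k + 1) v * Lop x k w (v + 2) = _
    ring

lemma isTwoTermChain_Lfac (f : ℕ → ℂ → ℂ) (Nv : ℕ) :
    IsTwoTermChain (fun j v => -f (Nv + 1 - j) v) (fun _ _ => 1) (Lfac f Nv) where
  zero _ := rfl
  succ k w v := by
    show Lfac f Nv k w (v + 2) - f (Nv + 1 - k) v * Lfac f Nv k w v = _
    ring

lemma diffCoeff_Lop_succ_right (x : ℕ → ℂ → ℂ) (k : ℕ) (i : ℤ) (v : ℂ) :
    diffCoeff (Lop x (k + 1)) i v = diffCoeff (Lop (fun c => x (c + 1)) k) i v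
      - diffCoeff (Lop (fun c => x (c + 1)) k) (i - 1) v * x 1 (v + 2 * (i - 1 : ℤ)) := by
  have hx := isTwoTermChain_Lop x
  have hx' := isTwoTermChain_Lop fun c => x (c + 1)
  induction k generalizing i v with
  | zero =>
    simp only [hx.diffCoeff_succ, hx.diffCoeff_zero, hx'.diffCoeff_zero]
    by_cases hi : i = 1
    · subst hi; norm_num
    · simp [sub_eq_zero, hi]
  | succ k ih =>
    rw [hx.diffCoeff_succ, ih, ih, hx'.diffCoeff_succ, hx'.diffCoeff_succ (i := i - 1)]
    rw [show v + 2 + 2 * ((i - 1 - 1 : ℤ) : ℂ) = v + 2 * ((i - 1 : ℤ) : ℂ) by push_cast; ring]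
    ring

lemma diffCoeff_Lop_zero (x : ℕ → ℂ → ℂ) (k : ℕ) (v : ℂ) : diffCoeff (Lop x k) 0 v = 1 := by
  have hx := isTwoTermChain_Lop x
  induction k generalizing v with
  | zero => simp [hx.diffCoeff_zero]
  | succ k ih => simp [hx.diffCoeff_succ, ih, hx.diffCoeff_eq_zero (k := k) (i := -1)]

/-- Since `D ∘ (1 - x D)† = D - x`, the product `(D - f_{Nv+1-k}) ⋯ (D - f_{Nv+1})` is the formal
adjoint of `(1 - x_{Nv+1} D) ⋯ (1 - x_{Nv+2-k} D)`, up to a shift of the argument. -/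
lemma diffCoeff_Lfac_eq_diffCoeff_Lop (x : ℕ → ℂ → ℂ) (Nv : ℕ) (s : ℂ) {k : ℕ}
    (hk : k ≤ Nv + 1) (i j : ℤ) (hij : i + j = k) (v : ℂ) :
    diffCoeff (Lfac (fun c v => x c (v + (Nv : ℂ) + 1 - 2 * c + s)) Nv k) j v
      = diffCoeff (Lop (fun c => x (c + (Nv + 1 - k))) k) i (v + s - (Nv + 1) + 2 * j) := by
  have hf := isTwoTermChain_Lfac (fun c v => x c (v + (Nv : ℂ) + 1 - 2 * c + s)) Nv
  induction k generalizing i j v with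
  | zero =>
    rw [hf.diffCoeff_zero, (isTwoTermChain_Lop _).diffCoeff_zero]
    congr 1
    simp only [eq_iff_iff]
    omega
  | succ k ih =>
    have hshift : (fun c => x (c + 1 + (Nv + 1 - (k + 1)))) = fun c => x (c + (Nv + 1 - k)) := by
      funext c
      congr 1
      omega
    rw [hf.diffCoeff_succ, ih (by omega) (i - 1) j (by omega),
      ih (by omega) i (j - 1) (by omega), diffCoeff_Lop_succ_right, hshift,
      show 1 + (Nv + 1 - (k + 1)) = Nv + 1 - k by omega,
      show v + 2 + s - (Nv + 1) + 2 * ((j - 1 : ℤ) : ℂ) = v + s - (Nv + 1) + 2 * j by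
        push_cast; ring,
      show v + s - (Nv + 1) + 2 * (j : ℂ) + 2 * ((i - 1 : ℤ) : ℂ)
        = v + Nv + 1 - 2 * ((Nv + 1 - k : ℕ) : ℂ) + s by
        have : (i : ℂ) + j = k + 1 := by exact_mod_cast hij
        rw [Nat.cast_sub (by omega)]
        push_cast
        linear_combination 2 * this]
    ring

lemma Lop_gauge_eq_Lfac (x f G : ℕ → ℂ → ℂ) (Nv : ℕ)
    (hx : ∀ k ≤ Nv, ∀ v, x (k + 1) v * G k (v + 2) = G (k + 1) v)
    (hf : ∀ k ≤ Nv, ∀ v, G k v = G (k + 1) v * f (Nv + 1 - k) v)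
    {k : ℕ} (hk : k ≤ Nv + 1) (w : ℂ → ℂ) (v : ℂ) :
    Lop x k (fun u => G 0 u * w u) v = (-1) ^ k * G k v * Lfac f Nv k w v := by
  induction k generalizing v with
  | zero => simp [Lop, Lfac]
  | succ k ih =>
    show Lop x k _ v - x (k + 1) v * Lop x k _ (v + 2)
      = _ * (Lfac f Nv k w (v + 2) - f (Nv + 1 - k) v * Lfac f Nv k w v)
    rw [ih (by omega), ih (by omega), hf k (by omega) v, ← hx k (by omega) v]
    ring

structure IsA2OddBoxes (n : ℕ) (s : ℂ) (Y x : ℕ → ℂ → ℂ) : Prop where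
  Y_zero : ∀ v, Y 0 v = 1
  Y_ne_zero : ∀ a ≤ n, ∀ v, Y a v ≠ 0
  Y_periodic : ∀ a ≤ n, ∀ v, Y a (v + 2 * s) = Y a v
  x_lt : ∀ a, 1 ≤ a → a ≤ n - 1 → ∀ u : ℂ, x a u = Y a (u + a) / Y (a - 1) (u + a + 1)
  x_n : ∀ u : ℂ, x n u = Y n (u + n) * Y n (u + n + s) / Y (n - 1) (u + n + 1)
  x_n_succ : ∀ u : ℂ,
    x (n + 1) u = Y (n - 1) (u + n + 1 + s) / (Y n (u + n + 2) * Y n (u + n + 2 + s))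
  x_bar : ∀ a, 1 ≤ a → a ≤ n - 1 → ∀ u : ℂ, x (2 * n - a + 1) u
    = Y (a - 1) (u + 2 * (n : ℂ) - a + 1 + s) / Y a (u + 2 * (n : ℂ) - a + 2 + s)

/-- The product `f₁ ⋯ f_{2n-k}` with `f_c v = x c (v + 2n - 2c + s)`, in closed form
(`boxGauge_eq_mul`). -/
noncomputable def boxGauge (n : ℕ) (s : ℂ) (Y : ℕ → ℂ → ℂ) (k : ℕ) (v : ℂ) : ℂ :=
  if k < n then Y k (v + k)
  else if k = n then Y n (v + n) * Y n (v + n + s)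
  else Y (2 * n - k) (v + k + s)

namespace IsA2OddBoxes

variable {n : ℕ} {s : ℂ} {Y x : ℕ → ℂ → ℂ}

lemma boxGauge_zero (h : IsA2OddBoxes n s Y x) (hn : 1 ≤ n) (v : ℂ) :
    boxGauge n s Y 0 v = 1 := by
  rw [boxGauge, if_pos (by omega), h.Y_zero]

lemma boxGauge_two_mul (h : IsA2OddBoxes n s Y x) (hn : 1 ≤ n) (v : ℂ) :
    boxGauge n s Y (2 * n) v = 1 := by
  rw [boxGauge, if_neg (by omega), if_neg (by omega), Nat.sub_self, h.Y_zero]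

lemma x_mul_boxGauge (h : IsA2OddBoxes n s Y x) {k : ℕ} (hk : k < 2 * n) (v : ℂ) :
    x (k + 1) v * boxGauge n s Y k (v + 2) = boxGauge n s Y (k + 1) v := by
  obtain hk1 | hk1 | hk1 := lt_trichotomy (k + 1) n
  · rw [boxGauge, boxGauge, if_pos (by omega), if_pos hk1, h.x_lt (k + 1) (by omega) (by omega),
      Nat.add_sub_cancel, show v + ((k + 1 : ℕ) : ℂ) + 1 = v + 2 + k by push_cast; ring]
    exact div_mul_cancel₀ _ (h.Y_ne_zero k (by omega) _)
  · subst hk1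
    rw [boxGauge, boxGauge, if_pos (by omega), if_neg (by omega), if_pos rfl, h.x_n,
      Nat.add_sub_cancel, show v + ((k + 1 : ℕ) : ℂ) + 1 = v + 2 + k by push_cast; ring]
    exact div_mul_cancel₀ _ (h.Y_ne_zero k (by omega) _)
  obtain rfl | hk2 := eq_or_lt_of_le (Nat.le_of_lt_succ hk1)
  · rw [boxGauge, boxGauge, if_neg (by omega), if_pos rfl, if_neg (by omega), if_neg (by omega),
      h.x_n_succ, show 2 * n - (n + 1) = n - 1 by omega, show v + 2 + n = v + n + 2 by ring,
      show v + ((n + 1 : ℕ) : ℂ) + s = v + n + 1 + s by push_cast; ring]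
    exact div_mul_cancel₀ _ (mul_ne_zero (h.Y_ne_zero n le_rfl _) (h.Y_ne_zero n le_rfl _))
  · have hx := h.x_bar (2 * n - k) (by omega) (by omega) v
    rw [show 2 * n - (2 * n - k) + 1 = k + 1 by omega,
      show 2 * n - k - 1 = 2 * n - (k + 1) by omega, Nat.cast_sub hk.le] at hx
    rw [boxGauge, boxGauge, if_neg (by omega), if_neg (by omega), if_neg (by omega),
      if_neg (by omega), hx]
    rw [show v + 2 * (n : ℂ) - ((2 * n : ℕ) - k) + 2 + s = v + 2 + k + s by push_cast; ring,
      show v + 2 * (n : ℂ) - ((2 * n : ℕ) - k) + 1 + s = v + ((k + 1 : ℕ) : ℂ) + s by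
        push_cast; ring]
    exact div_mul_cancel₀ _ (h.Y_ne_zero _ (by omega) _)

lemma boxGauge_eq_mul (h : IsA2OddBoxes n s Y x) {k : ℕ} (hk : k < 2 * n) (v : ℂ) :
    boxGauge n s Y k v = boxGauge n s Y (k + 1) v * x (2 * n - k) (v + 2 * k - 2 * n + s) := by
  obtain hk1 | hk1 | hk1 := lt_trichotomy (k + 1) n
  · have hx := h.x_bar (k + 1) (by omega) (by omega) (v + 2 * k - 2 * n + s)
    rw [show 2 * n - (k + 1) + 1 = 2 * n - k by omega, Nat.add_sub_cancel,
      show v + 2 * k - 2 * n + s + 2 * n - ((k + 1 : ℕ) : ℂ) + 1 + s = v + k + 2 * s by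
        push_cast; ring,
      show v + 2 * k - 2 * n + s + 2 * n - ((k + 1 : ℕ) : ℂ) + 2 + s = v + (k + 1 : ℕ) + 2 * s by
        push_cast; ring, h.Y_periodic _ (by omega), h.Y_periodic _ (by omega)] at hx
    rw [boxGauge, boxGauge, if_pos (by omega), if_pos hk1, hx]
    exact (mul_div_cancel₀ _ (h.Y_ne_zero _ (by omega) _)).symm
  · have hx := h.x_n_succ (v + 2 * k - 2 * n + s)
    rw [show v + 2 * k - 2 * n + s + n + 1 + s = v + k + 2 * s by
        rw [← hk1]; push_cast; ring,
      show v + 2 * k - 2 * n + s + n + 2 + s = v + n + 2 * s by rw [← hk1]; push_cast; ring,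
      show v + 2 * k - 2 * n + s + n + 2 = v + n + s by rw [← hk1]; push_cast; ring,
      show n - 1 = k by omega, h.Y_periodic _ (by omega), h.Y_periodic _ le_rfl] at hx
    rw [boxGauge, boxGauge, if_pos (by omega), if_neg (by omega), if_pos hk1,
      show 2 * n - k = n + 1 by omega, hx]
    field_simp [h.Y_ne_zero n le_rfl]
  obtain rfl | hk2 := eq_or_lt_of_le (Nat.le_of_lt_succ hk1)
  · have hx := h.x_n (v + 2 * n - 2 * n + s)
    rw [show v + 2 * n - 2 * n + s + n + s = v + n + 2 * s by ring,
      show v + 2 * n - 2 * n + s + n + 1 = v + ((n + 1 : ℕ) : ℂ) + s by push_cast; ring,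
      show v + 2 * n - 2 * n + s + n = v + n + s by ring, h.Y_periodic _ le_rfl] at hx
    rw [boxGauge, boxGauge, if_neg (by omega), if_pos rfl, if_neg (by omega), if_neg (by omega),
      show 2 * n - (n + 1) = n - 1 by omega, show 2 * n - n = n by omega, hx]
    field_simp [h.Y_ne_zero (n - 1) (by omega)]
  · have hx := h.x_lt (2 * n - k) (by omega) (by omega) (v + 2 * k - 2 * n + s)
    rw [show v + 2 * k - 2 * n + s + ((2 * n - k : ℕ) : ℂ) = v + k + s by
        rw [Nat.cast_sub hk.le]; push_cast; ring,
      show v + k + s + 1 = v + ((k + 1 : ℕ) : ℂ) + s by push_cast; ring,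
      show 2 * n - k - 1 = 2 * n - (k + 1) by omega] at hx
    rw [boxGauge, boxGauge, if_neg (by omega), if_neg (by omega), if_neg (by omega),
      if_neg (by omega), hx]
    field_simp [h.Y_ne_zero (2 * n - (k + 1)) (by omega)]

lemma Lop_eq_Lfac (h : IsA2OddBoxes n s Y x) (hn : 1 ≤ n) {N : ℕ} (hN : N + 1 = 2 * n) :
    Lop x (N + 1) = Lfac (fun c v => x c (v + (N : ℂ) + 1 - 2 * c + s)) N (N + 1) := by
  have hNc : (N : ℂ) + 1 = 2 * n := by exact_mod_cast hN
  funext w v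
  have hgauge := Lop_gauge_eq_Lfac x (fun c v => x c (v + (N : ℂ) + 1 - 2 * c + s))
    (boxGauge n s Y) N (fun k hk v => h.x_mul_boxGauge (by omega) v)
    (fun k hk v => by
      rw [h.boxGauge_eq_mul (by omega), show 2 * n - k = N + 1 - k by omega,
        Nat.cast_sub (by omega : k ≤ N + 1)]
      congr 2
      push_cast
      linear_combination hNc) le_rfl w v
  simpa [h.boxGauge_zero hn, hN, h.boxGauge_two_mul hn, pow_mul] using hgauge

lemma diffCoeff_Lop_symm (h : IsA2OddBoxes n s Y x) (hn : 1 ≤ n) {N : ℕ} (hN : N + 1 = 2 * n)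
    (i : ℤ) (v : ℂ) :
    diffCoeff (Lop x (N + 1)) i v = diffCoeff (Lop x (N + 1)) ((N + 1 : ℕ) - i)
      (v + s - (N + 1 : ℕ) + 2 * i) := by
  conv_lhs => rw [h.Lop_eq_Lfac hn hN]
  rw [diffCoeff_Lfac_eq_diffCoeff_Lop x N s le_rfl ((N + 1 : ℕ) - i) i (by ring)]
  simp

lemma diffCoeff_Lop_top (h : IsA2OddBoxes n s Y x) (hn : 1 ≤ n) {N : ℕ} (hN : N + 1 = 2 * n)
    (v : ℂ) : diffCoeff (Lop x (N + 1)) (N + 1) v = 1 := by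
  rw [h.diffCoeff_Lop_symm hn hN]
  simpa using diffCoeff_Lop_zero x (N + 1) _

end IsA2OddBoxes

open Matrix in
/-- Multiplying `fromRows (first m unit rows) V` by `fromCols Rel (unit columns at π ∘ natAdd m)`
gives a block triangular matrix, as `V * Rel = 0`. -/
lemma det_submatrix_comp_natAdd_of_mul_eq_zero {R : Type*} [CommRing R] {m K : ℕ}
    (V : Matrix (Fin K) (Fin (m + K)) R) (Rel : Matrix (Fin (m + K)) (Fin m) R)
    (hVRel : V * Rel = 0) (hdiag : ∀ t, Rel (Fin.castAdd K t) t = 1)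
    (htriu : ∀ t t' : Fin m, t < t' → Rel (Fin.castAdd K t) t' = 0)
    (π : Equiv.Perm (Fin (m + K))) :
    (V.submatrix id (π ∘ Fin.natAdd m)).det
      = Equiv.Perm.sign π * (Rel.submatrix (π ∘ Fin.castAdd K) id).det
        * (V.submatrix id (Fin.natAdd m)).det := by
  set e : Fin m ⊕ Fin K ≃ Fin (m + K) := finSumFinEquiv
  have hne : ∀ t j, Fin.castAdd K t ≠ Fin.natAdd m j := fun t j h => by
    have := congrArg Fin.val h
    simp at this
    omega
  let B : Matrix (Fin m ⊕ Fin K) (Fin (m + K)) R :=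
    fromRows ((1 : Matrix (Fin (m + K)) (Fin (m + K)) R).submatrix (Fin.castAdd K) id) V
  let Q : Matrix (Fin (m + K)) (Fin m ⊕ Fin K) R :=
    fromCols Rel ((1 : Matrix (Fin (m + K)) (Fin (m + K)) R).submatrix id (π ∘ Fin.natAdd m))
  have hBQ : (B * Q).det = (V.submatrix id (π ∘ Fin.natAdd m)).det := by
    have hT : (Rel.submatrix (Fin.castAdd K) id).det = 1 := by
      rw [det_of_isLowerTriangular (Rel.submatrix (Fin.castAdd K) id) fun t t' h => htriu t t' h]
      simp [hdiag]
    have h1 : (1 : Matrix (Fin (m + K)) (Fin (m + K)) R).submatrix (Fin.castAdd K) id * Rel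
        = Rel.submatrix (Fin.castAdd K) id := by
      ext; simp [mul_apply, one_apply]
    have h2 : V * (1 : Matrix (Fin (m + K)) (Fin (m + K)) R).submatrix id (π ∘ Fin.natAdd m)
        = V.submatrix id (π ∘ Fin.natAdd m) := by
      ext; simp [mul_apply, one_apply]
    rw [fromRows_mul_fromCols, hVRel, h1, h2, det_fromBlocks_zero₂₁, hT, one_mul]
  have hB : (B.submatrix id e).det = (V.submatrix id (Fin.natAdd m)).det := by
    have : B.submatrix id e = fromBlocks 1 0 (V.submatrix id (Fin.castAdd K))
        (V.submatrix id (Fin.natAdd m)) := by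
      ext (t | b) (t' | j) <;> simp [B, e, one_apply, hne]
    rw [this, det_fromBlocks_zero₁₂, det_one, one_mul]
  have hQ : (Q.submatrix (e.trans π) id).det = (Rel.submatrix (π ∘ Fin.castAdd K) id).det := by
    have : Q.submatrix (e.trans π) id = fromBlocks (Rel.submatrix (π ∘ Fin.castAdd K) id) 0
        (Rel.submatrix (π ∘ Fin.natAdd m) id) 1 := by
      ext (t | j) (t' | j') <;> simp [Q, e, one_apply, hne]
    rw [this, det_fromBlocks_zero₁₂, det_one, mul_one]
  have hperm :
      B.submatrix id (e.trans π) = (B.submatrix id e).submatrix id (e.symm.permCongr π) := by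
    ext; simp
  rw [← hBQ, ← submatrix_id_id (B * Q), ← submatrix_mul_equiv B Q id (e.trans π) id, det_mul,
    hperm, det_permute', Equiv.Perm.sign_permCongr, hB, hQ]
  ring

lemma exists_perm_castAdd_natAdd (m K : ℕ) {a : ℕ} (ha : a ≤ K) :
    ∃ π : Equiv.Perm (Fin (m + K)), (∀ t : Fin m, (π (Fin.castAdd K t) : ℕ) = a + t) ∧
      (∀ j : Fin K, (π (Fin.natAdd m j) : ℕ) = if (j : ℕ) < a then (j : ℕ) else j + m) ∧
      Equiv.Perm.sign π = (-1) ^ (m * a) := by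
  induction a with
  | zero => exact ⟨1, by simp, fun j => by simp; omega, by simp⟩
  | succ a ih =>
    obtain ⟨π, hcast, hnat, hsign⟩ := ih (by omega)
    have : NeZero (m + K) := ⟨by omega⟩
    let i : Fin (m + K) := ⟨a, by omega⟩
    let j : Fin (m + K) := ⟨a + m, by omega⟩
    have hij : i ≤ j := Fin.mk_le_mk.mpr (by omega)
    refine ⟨Fin.cycleIcc i j * π, fun t => ?_, fun b => ?_, ?_⟩
    · rw [Equiv.Perm.mul_apply, Fin.cycleIcc_of_ge_of_lt (Fin.le_def.mpr (by simp [i, hcast]))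
        (Fin.lt_def.mpr (by simp [j, hcast]))]
      have := t.isLt
      rw [Fin.val_add, hcast, Fin.val_one', Nat.add_mod_mod, Nat.mod_eq_of_lt (by omega)]
      ring
    · have hb := hnat b
      rw [Equiv.Perm.mul_apply]
      obtain hlt | rfl | hgt := lt_trichotomy (b : ℕ) a
      · rw [if_pos hlt] at hb
        rw [Fin.cycleIcc_of_lt (Fin.lt_def.mpr (by simp [i, hb, hlt])), hb, if_pos (by omega)]
      · rw [if_neg (lt_irrefl _)] at hb
        rw [show π (Fin.natAdd m b) = j from Fin.ext (by simp [j, hb]), Fin.cycleIcc_of_last hij,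
          if_pos (by omega)]
      · rw [if_neg (by omega)] at hb
        rw [Fin.cycleIcc_of_gt (Fin.lt_def.mpr (by simp [j, hb]; omega)), hb, if_neg (by omega)]
    · rw [Equiv.Perm.sign_mul, Fin.sign_cycleIcc_of_le hij, hsign, ← pow_add]
      congr 1
      simp [i, j]
      ring

lemma sum_mul_diffCoeff_Lop (x : ℕ → ℂ → ℂ) (K M t : ℕ) (htM : t + K < M) (w : ℂ → ℂ) (u : ℂ) :
    ∑ k : Fin M, w (u + 2 * (k : ℕ)) * diffCoeff (Lop x K) ((k : ℤ) - t) (u + 2 * t)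
      = Lop x K w (u + 2 * t) := by
  have hx := isTwoTermChain_Lop x
  rw [hx.eq_sum_diffCoeff (M := M - t) (by omega), Fin.sum_univ_eq_sum_range
    (fun k => w (u + 2 * k) * diffCoeff (Lop x K) ((k : ℤ) - t) (u + 2 * t)),
    show M = t + (M - t) by omega, Finset.sum_range_add, Finset.sum_eq_zero, zero_add,
    Nat.add_sub_cancel_left]
  · refine Finset.sum_congr rfl fun i _ => ?_
    push_cast
    rw [add_sub_cancel_left, mul_comm, add_assoc, ← mul_add]
  · intro k hk
    rw [hx.diffCoeff_eq_zero (by simp at hk; omega), mul_zero]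

noncomputable def shiftedCoeffMatrix (c : ℤ → ℂ → ℂ) (m a : ℕ) (u : ℂ) :
    Matrix (Fin m) (Fin m) ℂ :=
  Matrix.of fun t t' => c (a + t - t') (u + 2 * (t' : ℕ))

lemma casorati_eq_det_submatrix_s11 (N : ℕ) (w : ℕ → ℂ → ℂ) {idx : ℕ → ℕ} {M : ℕ} {u u' : ℂ}
    (g : Fin (N + 1) → Fin M) (hg : ∀ k : Fin (N + 1), u' + 2 * (idx k : ℂ) = u + 2 * (g k : ℕ)) :
    casorati N w idx u' = Matrix.det ((Matrix.of fun (b : Fin (N + 1)) (k : Fin M) =>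
      w (b + 1) (u + 2 * (k : ℕ))).submatrix id g) := by
  unfold casorati
  congr 1
  ext b k
  simp [hg]

lemma casorati_eq_det_mul (x w : ℕ → ℂ → ℂ) (N : ℕ)
    (hw : ∀ b, 1 ≤ b → b ≤ N + 1 → ∀ u, Lop x (N + 1) (w b) u = 0)
    {a : ℕ} (ha : a ≤ N + 1) (m : ℕ) (u : ℂ) :
    casorati N w (fun k => if k < a then k else k + m) u
      = (-1) ^ (m * a) * (shiftedCoeffMatrix (diffCoeff (Lop x (N + 1))) m a u).det
        * casorati N w (fun k => k) (u + 2 * m) := by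
  obtain ⟨π, hcast, hnat, hsign⟩ := exists_perm_castAdd_natAdd m (N + 1) ha
  let V := Matrix.of fun (b : Fin (N + 1)) (k : Fin (m + (N + 1))) => w (b + 1) (u + 2 * (k : ℕ))
  let Rel := Matrix.of fun (k : Fin (m + (N + 1))) (t : Fin m) =>
    diffCoeff (Lop x (N + 1)) ((k : ℤ) - t) (u + 2 * (t : ℕ))
  have hx := isTwoTermChain_Lop x
  have key := det_submatrix_comp_natAdd_of_mul_eq_zero V Rel
    (by
      ext b t
      rw [Matrix.mul_apply, Matrix.zero_apply]
      simp only [V, Rel, Matrix.of_apply]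
      rw [sum_mul_diffCoeff_Lop x (N + 1) _ t (by omega), hw _ (by omega) (by omega)])
    (fun t => by simp [Rel, diffCoeff_Lop_zero])
    (fun t t' htt' => hx.diffCoeff_eq_zero (Or.inl (by simp; omega)) _) π
  have hA : Rel.submatrix (π ∘ Fin.castAdd (N + 1)) id
      = shiftedCoeffMatrix (diffCoeff (Lop x (N + 1))) m a u := by
    ext t t'
    simp [Rel, shiftedCoeffMatrix, hcast]
  rw [casorati_eq_det_submatrix_s11 N w (u := u) (π ∘ Fin.natAdd m) fun k => by
      simp only [Function.comp_apply, hnat],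
    key, casorati_eq_det_submatrix_s11 N w (u := u) (Fin.natAdd m) fun k => by
      simp only [Fin.val_natAdd]; push_cast; ring,
    hsign, hA]
  push_cast
  rfl

lemma det_shiftedCoeffMatrix_eq (c : ℤ → ℂ → ℂ) (K : ℕ) (s : ℂ)
    (hc : ∀ (i : ℤ) (v : ℂ), c i v = c (K - i) (v + s - K + 2 * i)) (m : ℕ) {a : ℕ} (ha : a ≤ K)
    (u : ℂ) :
    (shiftedCoeffMatrix c m a u).det
      = (shiftedCoeffMatrix c m (K - a) (u + 2 * (a : ℂ) - K + s)).det := by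
  rw [← Matrix.det_transpose]
  congr 1
  ext t t'
  simp only [shiftedCoeffMatrix, Matrix.transpose_apply, Matrix.of_apply]
  rw [hc, Nat.cast_sub ha]
  congr 1
  · ring
  · push_cast; ring

lemma casorati_congr (N : ℕ) (w : ℕ → ℂ → ℂ) {idx idx' : ℕ → ℕ}
    (h : ∀ k ≤ N, idx k = idx' k) (u : ℂ) : casorati N w idx u = casorati N w idx' u := by
  unfold casorati
  congr 1
  ext j k
  rw [Matrix.of_apply, Matrix.of_apply, h k (Nat.lt_succ_iff.mp k.isLt)]

lemma casorati_add_two (x w : ℕ → ℂ → ℂ) (N : ℕ)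
    (hw : ∀ b, 1 ≤ b → b ≤ N + 1 → ∀ u, Lop x (N + 1) (w b) u = 0)
    (htop : ∀ v, diffCoeff (Lop x (N + 1)) (N + 1) v = 1) (hN : Even (N + 1)) (u : ℂ) :
    casorati N w (fun k => k) (u + 2) = casorati N w (fun k => k) u := by
  have h := casorati_eq_det_mul x w N hw le_rfl 1 u
  rw [casorati_congr N w (fun k hk => if_pos (Nat.lt_succ_of_le hk)), Matrix.det_unique] at h
  simpa [shiftedCoeffMatrix, htop, hN.neg_one_pow] using h.symm

lemma casorati_add_two_mul (x w : ℕ → ℂ → ℂ) (N : ℕ)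
    (hw : ∀ b, 1 ≤ b → b ≤ N + 1 → ∀ u, Lop x (N + 1) (w b) u = 0)
    (htop : ∀ v, diffCoeff (Lop x (N + 1)) (N + 1) v = 1) (hN : Even (N + 1)) (m : ℕ) (u : ℂ) :
    casorati N w (fun k => k) (u + 2 * m) = casorati N w (fun k => k) u := by
  induction m with
  | zero => simp
  | succ m ih =>
    rw [show u + 2 * ((m + 1 : ℕ) : ℂ) = u + 2 * m + 2 by push_cast; ring,
      casorati_add_two x w N hw htop hN, ih]

lemma div_add_eq_of_quasiPeriodic {Q : ℂ → ℂ} {p h : ℂ} (hh : h ≠ 0)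
    (hQ : ∀ u, Q (u + p) = h * Q u) (v : ℂ) :
    Q (v + p - 1) / Q (v + p + 1) = Q (v - 1) / Q (v + 1) := by
  rw [show v + p - 1 = v - 1 + p by ring, show v + p + 1 = v + 1 + p by ring, hQ, hQ,
    mul_div_mul_left _ _ hh]

theorem xi_duality_A2_odd_general
    (n : ℕ) (hn : 2 ≤ n) (N : ℕ) (hN : N = 2 * n - 1)
    (hbar : ℂ) (s : ℂ)
    (hs : s = (Real.pi : ℂ) * Complex.I / (2 * hbar))
    (Q : ℕ → ℂ → ℂ) (hQ0 : ∀ u, Q 0 u = 1)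
    (hQne : ∀ a, 1 ≤ a → a ≤ n → ∀ u, Q a u ≠ 0)
    (hconst : ℕ → ℂ)
    (hQper : ∀ a, 1 ≤ a → a ≤ n → hconst a ≠ 0 ∧
      ∀ u, Q a (u + (Real.pi : ℂ) * Complex.I / hbar) = hconst a * Q a u)
    (Y : ℕ → ℂ → ℂ) (hY : ∀ a u, Y a u = Q a (u - 1) / Q a (u + 1))
    (x : ℕ → ℂ → ℂ)
    (hxa : ∀ a, 1 ≤ a → a ≤ n - 1 → ∀ u : ℂ,
      x a u = Y a (u + a) / Y (a - 1) (u + a + 1))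
    (hxn : ∀ u : ℂ, x n u = Y n (u + n) * Y n (u + n + s) / Y (n - 1) (u + n + 1))
    (hxnbar : ∀ u : ℂ, x (n + 1) u
      = Y (n - 1) (u + n + 1 + s) / (Y n (u + n + 2) * Y n (u + n + 2 + s)))
    (hxbar : ∀ a, 1 ≤ a → a ≤ n - 1 → ∀ u : ℂ,
      x (2 * n - a + 1) u = Y (a - 1) (u + 2 * (n : ℂ) - a + 1 + s)
        / Y a (u + 2 * (n : ℂ) - a + 2 + s))
    (w : ℕ → ℂ → ℂ)
    (hw : ∀ b, 1 ≤ b → b ≤ N + 1 → ∀ u : ℂ, Lop x (N + 1) (w b) u = 0)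
    :
    ∀ a : ℕ, a ≤ N + 1 → ∀ m : ℕ, ∀ u : ℂ,
      casorati N w (fun k => if k < a then k else k + m) u *
        casorati N w (fun k => k) (u + 2 * (a : ℂ) - N - 1 + s)
      = casorati N w (fun k => if k < N + 1 - a then k else k + m)
          (u + 2 * (a : ℂ) - N - 1 + s) *
        casorati N w (fun k => k) u := by
  have hY0 : ∀ v, Y 0 v = 1 := fun v => by simp [hY, hQ0]
  have hbox : IsA2OddBoxes n s Y x :=
    { Y_zero := hY0
      Y_ne_zero := fun a ha v => by
        obtain rfl | ha0 := Nat.eq_zero_or_pos a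
        · simp [hY0]
        · exact hY a v ▸ div_ne_zero (hQne a ha0 ha _) (hQne a ha0 ha _)
      Y_periodic := fun a ha v => by
        obtain rfl | ha0 := Nat.eq_zero_or_pos a
        · simp [hY0]
        · rw [hY, hY, show 2 * s = Real.pi * I / hbar by rw [hs]; ring,
            div_add_eq_of_quasiPeriodic (hQper a ha0 ha).1 (hQper a ha0 ha).2]
      x_lt := hxa
      x_n := hxn
      x_n_succ := hxnbar
      x_bar := hxbar }
  have hN' : N + 1 = 2 * n := by omega
  have hEven : Even (N + 1) := ⟨n, by omega⟩
  have htop := hbox.diffCoeff_Lop_top (by omega) hN'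
  intro a ha m u
  have hsign : (-1 : ℂ) ^ (m * (N + 1 - a)) = (-1) ^ (m * a) :=
    neg_one_pow_congr (by simp [Nat.even_mul, Nat.even_sub ha, hEven])
  rw [casorati_eq_det_mul x w N hw ha, casorati_eq_det_mul x w N hw (Nat.sub_le (N + 1) a),
    casorati_add_two_mul x w N hw htop hEven, casorati_add_two_mul x w N hw htop hEven,
    det_shiftedCoeffMatrix_eq _ (N + 1) s (hbox.diffCoeff_Lop_symm (by omega) hN') m ha, hsign,
    show u + 2 * (a : ℂ) - ((N + 1 : ℕ) : ℂ) + s = u + 2 * a - N - 1 + s by push_cast; ring]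
  ring

theorem xi_duality_A2_odd
    (n : ℕ) (hn : 2 ≤ n) (N : ℕ) (hN : N = 2 * n - 1)
    (hbar : ℂ) (hbar_ne : hbar ≠ 0) (s : ℂ)
    (hs : s = (Real.pi : ℂ) * Complex.I / (2 * hbar))
    (Q : ℕ → ℂ → ℂ) (hQ0 : ∀ u, Q 0 u = 1)
    (hQne : ∀ a, 1 ≤ a → a ≤ n → ∀ u, Q a u ≠ 0)
    (hconst : ℕ → ℂ)
    (hQper : ∀ a, 1 ≤ a → a ≤ n → hconst a ≠ 0 ∧
      ∀ u, Q a (u + (Real.pi : ℂ) * Complex.I / hbar) = hconst a * Q a u)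
    (Y : ℕ → ℂ → ℂ) (hY : ∀ a u, Y a u = Q a (u - 1) / Q a (u + 1))
    (x : ℕ → ℂ → ℂ)
    (hxa : ∀ a, 1 ≤ a → a ≤ n - 1 → ∀ u : ℂ,
      x a u = Y a (u + a) / Y (a - 1) (u + a + 1))
    (hxn : ∀ u : ℂ, x n u = Y n (u + n) * Y n (u + n + s) / Y (n - 1) (u + n + 1))
    (hxnbar : ∀ u : ℂ, x (n + 1) u
      = Y (n - 1) (u + n + 1 + s) / (Y n (u + n + 2) * Y n (u + n + 2 + s)))
    (hxbar : ∀ a, 1 ≤ a → a ≤ n - 1 → ∀ u : ℂ,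
      x (2 * n - a + 1) u = Y (a - 1) (u + 2 * (n : ℂ) - a + 1 + s)
        / Y a (u + 2 * (n : ℂ) - a + 2 + s))
    (w : ℕ → ℂ → ℂ)
    (hw : ∀ b, 1 ≤ b → b ≤ N + 1 → ∀ u : ℂ, Lop x (N + 1) (w b) u = 0)
    (hLfac : ∀ a b : ℕ, 1 ≤ b → b ≤ a → a ≤ N + 1 → ∀ u : ℂ,
      Lfac (fun c v => x c (v + (N : ℂ) + 1 - 2 * c + s)) N a (w b) u = 0)
    (hxi : ∀ u : ℂ, casorati N w (fun k => k) u ≠ 0)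
    :
    ∀ a : ℕ, a ≤ N + 1 → ∀ m : ℕ, ∀ u : ℂ,
      casorati N w (fun k => if k < a then k else k + m) u *
        casorati N w (fun k => k) (u + 2 * (a : ℂ) - N - 1 + s)
      = casorati N w (fun k => if k < N + 1 - a then k else k + m)
          (u + 2 * (a : ℂ) - N - 1 + s) *
        casorati N w (fun k => k) u :=
  xi_duality_A2_odd_general n hn N hN hbar s hs Q hQ0 hQne hconst hQper Y hY x hxa hxn hxnbar hxbar
    w hw
end

section
/- The operator L annihilates the Baxter function Q_1: for every u ∈ ℂ, (L Q_1)(u) = 0; equivalently, the T–Q relation Σ_{a=0}^{N+1} (−1)^a · T^a(u+a) · Q_1(u+2a) = 0 holds for all u ∈ ℂ. -/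
open Complex

/-! Since `Y₀ ≡ 1`, the first coefficient is `x₁(u) = Q₁(u) / Q₁(u + 2)`, so the rightmost
factor `1 - x₁ D` of `L` already annihilates `Q₁`; the remaining factors are linear and
therefore keep it at zero. -/

theorem oneSubXD_eq_zero {x w : ℂ → ℂ} (h : ∀ u, x u * w (u + 2) = w u) :
    oneSubXD x w = 0 := by
  funext u
  simp [oneSubXD, h u]

theorem Lop_add_eq_zero {x : ℕ → ℂ → ℂ} {w : ℂ → ℂ} {k : ℕ} (h : Lop x k w = 0) :
    ∀ m, Lop x (k + m) w = 0
  | 0 => h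
  | m + 1 => by
    show oneSubXD (x (k + m + 1)) (Lop x (k + m) w) = 0
    rw [Lop_add_eq_zero h m]
    funext u
    simp [oneSubXD]

theorem LQ_annihilation_A2_even_general
    (n : ℕ) (hn : 1 ≤ n) (N : ℕ)
    (Q : ℕ → ℂ → ℂ) (hQ0 : ∀ u, Q 0 u = 1)
    (hQne : ∀ a, 1 ≤ a → a ≤ n → ∀ u, Q a u ≠ 0)
    (Y : ℕ → ℂ → ℂ) (hY : ∀ a u, Y a u = Q a (u - 1) / Q a (u + 1))
    (x : ℕ → ℂ → ℂ)
    (hxa : ∀ a, 1 ≤ a → a ≤ n → ∀ u : ℂ,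
      x a u = Y a (u + a) / Y (a - 1) (u + a + 1))
    (T : ℤ → ℂ → ℂ)
    (hTL : ∀ w : ℂ → ℂ, ∀ u : ℂ, Lop x (N + 1) w u
      = ∑ a ∈ Finset.range (N + 2), (-1) ^ a * T a (u + a) * w (u + 2 * a))
    :
    (∀ u : ℂ, Lop x (N + 1) (Q 1) u = 0) ∧
    (∀ u : ℂ, ∑ a ∈ Finset.range (N + 2),
      (-1) ^ a * T (a : ℤ) (u + a) * Q 1 (u + 2 * a) = 0) := by
  have hx₁ : ∀ u, x 1 u * Q 1 (u + 2) = Q 1 u := by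
    intro u
    have hQ₁ : Q 1 (u + 2) ≠ 0 := hQne 1 le_rfl hn _
    rw [hxa 1 le_rfl hn, hY, hY, Nat.sub_self, hQ0, hQ0, Nat.cast_one, add_sub_cancel_right,
      show u + 1 + 1 = u + 2 by ring, one_div_one, div_one, div_mul_cancel₀ _ hQ₁]
  have hL : Lop x (N + 1) (Q 1) = 0 := by
    rw [add_comm]
    exact Lop_add_eq_zero (k := 1) (oneSubXD_eq_zero hx₁) N
  exact ⟨fun u => congrFun hL u, fun u => (hTL (Q 1) u).symm.trans (congrFun hL u)⟩

theorem LQ_annihilation_A2_even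
    (n : ℕ) (hn : 1 ≤ n) (N : ℕ) (hN : N = 2 * n)
    (hbar : ℂ) (hbar_ne : hbar ≠ 0) (s : ℂ)
    (hs : s = (Real.pi : ℂ) * Complex.I / (2 * hbar))
    (Q : ℕ → ℂ → ℂ) (hQ0 : ∀ u, Q 0 u = 1)
    (hQne : ∀ a, 1 ≤ a → a ≤ n → ∀ u, Q a u ≠ 0)
    (hconst : ℕ → ℂ)
    (hQper : ∀ a, 1 ≤ a → a ≤ n → hconst a ≠ 0 ∧
      ∀ u, Q a (u + (Real.pi : ℂ) * Complex.I / hbar) = hconst a * Q a u)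
    (Y : ℕ → ℂ → ℂ) (hY : ∀ a u, Y a u = Q a (u - 1) / Q a (u + 1))
    (x : ℕ → ℂ → ℂ)
    (hxa : ∀ a, 1 ≤ a → a ≤ n → ∀ u : ℂ,
      x a u = Y a (u + a) / Y (a - 1) (u + a + 1))
    (hx0 : ∀ u : ℂ, x (n + 1) u = Y n (u + n + 1 + s) / Y n (u + n + 2))
    (hxbar : ∀ a, 1 ≤ a → a ≤ n → ∀ u : ℂ,
      x (2 * n - a + 2) u = Y (a - 1) (u + 2 * (n : ℂ) - a + 2 + s)
        / Y a (u + 2 * (n : ℂ) - a + 3 + s))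
    (T : ℤ → ℂ → ℂ)
    (hTneg : ∀ a : ℤ, a < 0 → ∀ u, T a u = 0)
    (hTbig : ∀ a : ℤ, (N : ℤ) + 1 < a → ∀ u, T a u = 0)
    (hTL : ∀ w : ℂ → ℂ, ∀ u : ℂ, Lop x (N + 1) w u
      = ∑ a ∈ Finset.range (N + 2), (-1) ^ a * T a (u + a) * w (u + 2 * a))
    :
    (∀ u : ℂ, Lop x (N + 1) (Q 1) u = 0) ∧
    (∀ u : ℂ, ∑ a ∈ Finset.range (N + 2),
      (-1) ^ a * T (a : ℤ) (u + a) * Q 1 (u + 2 * a) = 0) :=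
  LQ_annihilation_A2_even_general n hn N Q hQ0 hQne Y hY x hxa T hTL
end

section
/- The operator L annihilates the Baxter function Q_1: for every u ∈ ℂ, (L Q_1)(u) = 0; equivalently, the T–Q relation Σ_{a=0}^{N+1} (−1)^a · T^a(u+a) · Q_1(u+2a) = 0 holds for all u ∈ ℂ. -/
/-!
Since `Y_0 = 1`, the innermost factor of `L` has coefficient `x_1(u) = Y_1(u+1) = Q_1(u)/Q_1(u+2)`,
so `1 − x_1 D` already kills `Q_1`; the remaining factors are linear and keep `0` at `0`.
-/

open Complex

theorem oneSubXD_zero (x : ℂ → ℂ) : oneSubXD x 0 = 0 := by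
  funext u
  simp [oneSubXD]

theorem oneSubXD_ratio_self {w : ℂ → ℂ} (hw : ∀ u, w u ≠ 0) :
    oneSubXD (fun u => w u / w (u + 2)) w = 0 := by
  funext u
  simp [oneSubXD, div_mul_cancel₀ _ (hw (u + 2))]

theorem Lop_eq_zero_of_le {x : ℕ → ℂ → ℂ} {w : ℂ → ℂ} {j k : ℕ}
    (hj : Lop x j w = 0) (hjk : j ≤ k) : Lop x k w = 0 := by
  induction k, hjk using Nat.le_induction with
  | base => exact hj
  | succ k _ ih =>
    change oneSubXD (x (k + 1)) (Lop x k w) = 0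
    rw [ih, oneSubXD_zero]

theorem LQ_annihilation_A2_odd_general
    (n : ℕ) (hn : 2 ≤ n) (N : ℕ)
    (Q : ℕ → ℂ → ℂ) (hQ0 : ∀ u, Q 0 u = 1)
    (hQne : ∀ a, 1 ≤ a → a ≤ n → ∀ u, Q a u ≠ 0)
    (Y : ℕ → ℂ → ℂ) (hY : ∀ a u, Y a u = Q a (u - 1) / Q a (u + 1))
    (x : ℕ → ℂ → ℂ)
    (hxa : ∀ a, 1 ≤ a → a ≤ n - 1 → ∀ u : ℂ,
      x a u = Y a (u + a) / Y (a - 1) (u + a + 1))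
    (T : ℤ → ℂ → ℂ)
    (hTL : ∀ w : ℂ → ℂ, ∀ u : ℂ, Lop x (N + 1) w u
      = ∑ a ∈ Finset.range (N + 2), (-1) ^ a * T a (u + a) * w (u + 2 * a))
    :
    (∀ u : ℂ, Lop x (N + 1) (Q 1) u = 0) ∧
    (∀ u : ℂ, ∑ a ∈ Finset.range (N + 2),
      (-1) ^ a * T (a : ℤ) (u + a) * Q 1 (u + 2 * a) = 0) := by
  have hx1 : x 1 = fun u => Q 1 u / Q 1 (u + 2) := by
    funext u
    rw [hxa 1 le_rfl (by omega) u, hY, hY, Nat.sub_self, hQ0, hQ0]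
    push_cast
    ring_nf
  have hL1 : Lop x 1 (Q 1) = 0 := by
    change oneSubXD (x 1) (Q 1) = 0
    rw [hx1]
    exact oneSubXD_ratio_self (hQne 1 le_rfl (by omega))
  have hL : ∀ u, Lop x (N + 1) (Q 1) u = 0 :=
    congrFun (Lop_eq_zero_of_le hL1 (Nat.le_add_left 1 N))
  exact ⟨hL, fun u => (hTL (Q 1) u).symm.trans (hL u)⟩

theorem LQ_annihilation_A2_odd
    (n : ℕ) (hn : 2 ≤ n) (N : ℕ) (hN : N = 2 * n - 1)
    (hbar : ℂ) (hbar_ne : hbar ≠ 0) (s : ℂ)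
    (hs : s = (Real.pi : ℂ) * Complex.I / (2 * hbar))
    (Q : ℕ → ℂ → ℂ) (hQ0 : ∀ u, Q 0 u = 1)
    (hQne : ∀ a, 1 ≤ a → a ≤ n → ∀ u, Q a u ≠ 0)
    (hconst : ℕ → ℂ)
    (hQper : ∀ a, 1 ≤ a → a ≤ n → hconst a ≠ 0 ∧
      ∀ u, Q a (u + (Real.pi : ℂ) * Complex.I / hbar) = hconst a * Q a u)
    (Y : ℕ → ℂ → ℂ) (hY : ∀ a u, Y a u = Q a (u - 1) / Q a (u + 1))
    (x : ℕ → ℂ → ℂ)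
    (hxa : ∀ a, 1 ≤ a → a ≤ n - 1 → ∀ u : ℂ,
      x a u = Y a (u + a) / Y (a - 1) (u + a + 1))
    (hxn : ∀ u : ℂ, x n u = Y n (u + n) * Y n (u + n + s) / Y (n - 1) (u + n + 1))
    (hxnbar : ∀ u : ℂ, x (n + 1) u
      = Y (n - 1) (u + n + 1 + s) / (Y n (u + n + 2) * Y n (u + n + 2 + s)))
    (hxbar : ∀ a, 1 ≤ a → a ≤ n - 1 → ∀ u : ℂ,
      x (2 * n - a + 1) u = Y (a - 1) (u + 2 * (n : ℂ) - a + 1 + s)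
        / Y a (u + 2 * (n : ℂ) - a + 2 + s))
    (T : ℤ → ℂ → ℂ)
    (hTneg : ∀ a : ℤ, a < 0 → ∀ u, T a u = 0)
    (hTbig : ∀ a : ℤ, (N : ℤ) + 1 < a → ∀ u, T a u = 0)
    (hTL : ∀ w : ℂ → ℂ, ∀ u : ℂ, Lop x (N + 1) w u
      = ∑ a ∈ Finset.range (N + 2), (-1) ^ a * T a (u + a) * w (u + 2 * a))
    :
    (∀ u : ℂ, Lop x (N + 1) (Q 1) u = 0) ∧
    (∀ u : ℂ, ∑ a ∈ Finset.range (N + 2),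
      (-1) ^ a * T (a : ℤ) (u + a) * Q 1 (u + 2 * a) = 0) :=
  LQ_annihilation_A2_odd_general n hn N Q hQ0 hQne Y hY x hxa T hTL
end

section
/- The dual T–Q relation holds: for every u ∈ ℂ, Σ_{a=0}^{N+1} (−1)^a · T^a(u−a) · Q_1(u − 2a + g + s) = 0, where g := N+1 is the dual Coxeter number of A^(2)_{2n}. -/
open Complex

/-! Pair functions by `⟨f, w⟩ = ∑ᶠ u, f u * w u` for finitely supported `w`. The adjoint of
`1 - x D` is `f ↦ f - x (· - 2) * f (· - 2)`, so the adjoint of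
`L = (1 - x_{N+1} D) ∘ ⋯ ∘ (1 - x_1 D)` applies the adjoint factors in reverse order, the one of
`1 - x_{N+1} D` first. Pairing with the delta function at `u` identifies the left-hand side of the
dual relation with `(L† f) u` for `f = Q_1 (· + g + s)`. Since `x_{N+1} = z_{1̄} = f (· + 2) / f`,
the first adjoint factor already annihilates `f`. -/

open Function Finset

noncomputable def oneSubXDAdjoint (x f : ℂ → ℂ) : ℂ → ℂ := fun u => f u - x (u - 2) * f (u - 2)

noncomputable def LopAdjoint (x : ℕ → ℂ → ℂ) : ℕ → (ℂ → ℂ) → ℂ → ℂ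
  | 0, f => f
  | k + 1, f => LopAdjoint x k (oneSubXDAdjoint (x (k + 1)) f)

lemma hasFiniteSupport_oneSubXD (x : ℂ → ℂ) {w : ℂ → ℂ} (hw : HasFiniteSupport w) :
    HasFiniteSupport (oneSubXD x w) :=
  hw.fun_sub ((hw.fun_comp_of_injective (add_left_injective 2)).fun_mul_right x)

lemma hasFiniteSupport_Lop (x : ℕ → ℂ → ℂ) {w : ℂ → ℂ} (hw : HasFiniteSupport w) :
    ∀ k, HasFiniteSupport (Lop x k w)
  | 0 => hw
  | k + 1 => hasFiniteSupport_oneSubXD _ (hasFiniteSupport_Lop x hw k)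

lemma finsum_mul_oneSubXD (x f : ℂ → ℂ) {w : ℂ → ℂ} (hw : HasFiniteSupport w) :
    ∑ᶠ u, f u * oneSubXD x w u = ∑ᶠ u, oneSubXDAdjoint x f u * w u := by
  have hsupp : HasFiniteSupport fun u => f u * (x u * w (u + 2)) :=
    (hw.fun_comp_of_injective (add_left_injective 2)).fun_mul_right x |>.fun_mul_right f
  have hshift_eq : ∑ᶠ u, f u * (x u * w (u + 2)) = ∑ᶠ u, x (u - 2) * f (u - 2) * w u := by
    rw [← finsum_comp_equiv (Equiv.addRight (-2 : ℂ))]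
    congr 1 with u
    simp only [Equiv.coe_addRight, ← sub_eq_add_neg, sub_add_cancel]
    ring
  simp only [oneSubXD, oneSubXDAdjoint, mul_sub, sub_mul]
  rw [finsum_sub_distrib (hw.fun_mul_right f) hsupp, finsum_sub_distrib (hw.fun_mul_right f)
    (hw.fun_mul_right _), hshift_eq]

lemma finsum_mul_Lop (x : ℕ → ℂ → ℂ) {w : ℂ → ℂ} (hw : HasFiniteSupport w) :
    ∀ k (f : ℂ → ℂ), ∑ᶠ u, f u * Lop x k w u = ∑ᶠ u, LopAdjoint x k f u * w u
  | 0, _ => rfl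
  | k + 1, f => by
    rw [Lop, finsum_mul_oneSubXD _ _ (hasFiniteSupport_Lop x hw k), finsum_mul_Lop x hw k]
    rfl

lemma LopAdjoint_zero (x : ℕ → ℂ → ℂ) : ∀ k, LopAdjoint x k 0 = 0
  | 0 => rfl
  | k + 1 => by
    have : oneSubXDAdjoint (x (k + 1)) 0 = 0 := by ext; simp [oneSubXDAdjoint]
    rw [LopAdjoint, this, LopAdjoint_zero x k]

lemma LopAdjoint_succ_eq_zero {x : ℕ → ℂ → ℂ} {k : ℕ} {f : ℂ → ℂ}
    (hf : oneSubXDAdjoint (x (k + 1)) f = 0) : LopAdjoint x (k + 1) f = 0 := by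
  rw [LopAdjoint, hf, LopAdjoint_zero]

lemma oneSubXDAdjoint_eq_zero {x f : ℂ → ℂ} (hf : ∀ u, f u ≠ 0)
    (hx : ∀ u, x u = f (u + 2) / f u) : oneSubXDAdjoint x f = 0 := by
  ext u
  simp [oneSubXDAdjoint, hx, div_mul_cancel₀ _ (hf _)]

lemma hasFiniteSupport_single {α M : Type*} [DecidableEq α] [Zero M] (i : α) (m : M) :
    HasFiniteSupport (Pi.single i m) :=
  (Set.finite_singleton i).subset Pi.support_single_subset

lemma finsum_mul_sum_single (f : ℂ → ℂ) (c : ℕ → ℂ → ℂ) (m : ℕ) (u : ℂ) :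
    ∑ᶠ v, f v * ∑ a ∈ range m, c a v * (Pi.single u 1 : ℂ → ℂ) (v + 2 * a)
      = ∑ a ∈ range m, c a (u - 2 * a) * f (u - 2 * a) := by
  simp_rw [mul_sum]
  rw [finsum_sum_comm]
  · refine sum_congr rfl fun a _ => ?_
    rw [finsum_eq_single _ (u - 2 * a) fun v hv => ?_]
    · rw [sub_add_cancel, Pi.single_eq_same]
      ring
    · simp [eq_sub_iff_add_eq.not.mp hv]
  · intro a _
    have hδ : HasFiniteSupport fun v => (Pi.single u 1 : ℂ → ℂ) (v + 2 * a) :=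
      (hasFiniteSupport_single u 1).fun_comp_of_injective (add_left_injective _)
    exact hδ.fun_mul_right (c a) |>.fun_mul_right f

theorem dual_TQ_A2_even_general
    (n : ℕ) (hn : 1 ≤ n) (N : ℕ) (hN : N = 2 * n)
    (s : ℂ)
    (Q : ℕ → ℂ → ℂ) (hQ0 : ∀ u, Q 0 u = 1)
    (hQne : ∀ a, 1 ≤ a → a ≤ n → ∀ u, Q a u ≠ 0)
    (Y : ℕ → ℂ → ℂ) (hY : ∀ a u, Y a u = Q a (u - 1) / Q a (u + 1))
    (x : ℕ → ℂ → ℂ)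
    (hxbar : ∀ a, 1 ≤ a → a ≤ n → ∀ u : ℂ,
      x (2 * n - a + 2) u = Y (a - 1) (u + 2 * (n : ℂ) - a + 2 + s)
        / Y a (u + 2 * (n : ℂ) - a + 3 + s))
    (T : ℤ → ℂ → ℂ)
    (hTL : ∀ w : ℂ → ℂ, ∀ u : ℂ, Lop x (N + 1) w u
      = ∑ a ∈ Finset.range (N + 2), (-1) ^ a * T a (u + a) * w (u + 2 * a))
    :
    ∀ u : ℂ, ∑ a ∈ Finset.range (N + 2),
      (-1) ^ a * T (a : ℤ) (u - a) * Q 1 (u - 2 * a + ((N : ℂ) + 1) + s) = 0 := by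
  intro u
  set f : ℂ → ℂ := fun v => Q 1 (v + ((N : ℂ) + 1) + s)
  have hx : ∀ v, x (N + 1) v = f (v + 2) / f v := by
    intro v
    have hNc : (N : ℂ) = 2 * n := by rw [hN]; push_cast; ring
    rw [show N + 1 = 2 * n - 1 + 2 by omega, hxbar 1 le_rfl hn, hY, hY, hQ0, hQ0,
      div_self one_ne_zero, one_div_div]
    simp only [f, hNc]
    congr 2 <;> push_cast <;> ring
  have hadj : LopAdjoint x (N + 1) f = 0 :=
    LopAdjoint_succ_eq_zero (oneSubXDAdjoint_eq_zero (fun v => hQne 1 le_rfl hn _) hx)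
  have pairing := finsum_mul_Lop x (hasFiniteSupport_single u 1) (N + 1) f
  simp_rw [hTL, finsum_mul_sum_single, hadj, Pi.zero_apply, zero_mul, finsum_zero] at pairing
  rw [← pairing]
  refine sum_congr rfl fun a _ => ?_
  rw [show u - 2 * (a : ℂ) + a = u - a by ring]

theorem dual_TQ_A2_even
    (n : ℕ) (hn : 1 ≤ n) (N : ℕ) (hN : N = 2 * n)
    (hbar : ℂ) (hbar_ne : hbar ≠ 0) (s : ℂ)
    (hs : s = (Real.pi : ℂ) * Complex.I / (2 * hbar))
    (Q : ℕ → ℂ → ℂ) (hQ0 : ∀ u, Q 0 u = 1)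
    (hQne : ∀ a, 1 ≤ a → a ≤ n → ∀ u, Q a u ≠ 0)
    (hconst : ℕ → ℂ)
    (hQper : ∀ a, 1 ≤ a → a ≤ n → hconst a ≠ 0 ∧
      ∀ u, Q a (u + (Real.pi : ℂ) * Complex.I / hbar) = hconst a * Q a u)
    (Y : ℕ → ℂ → ℂ) (hY : ∀ a u, Y a u = Q a (u - 1) / Q a (u + 1))
    (x : ℕ → ℂ → ℂ)
    (hxa : ∀ a, 1 ≤ a → a ≤ n → ∀ u : ℂ,
      x a u = Y a (u + a) / Y (a - 1) (u + a + 1))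
    (hx0 : ∀ u : ℂ, x (n + 1) u = Y n (u + n + 1 + s) / Y n (u + n + 2))
    (hxbar : ∀ a, 1 ≤ a → a ≤ n → ∀ u : ℂ,
      x (2 * n - a + 2) u = Y (a - 1) (u + 2 * (n : ℂ) - a + 2 + s)
        / Y a (u + 2 * (n : ℂ) - a + 3 + s))
    (T : ℤ → ℂ → ℂ)
    (hTneg : ∀ a : ℤ, a < 0 → ∀ u, T a u = 0)
    (hTbig : ∀ a : ℤ, (N : ℤ) + 1 < a → ∀ u, T a u = 0)
    (hTL : ∀ w : ℂ → ℂ, ∀ u : ℂ, Lop x (N + 1) w u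
      = ∑ a ∈ Finset.range (N + 2), (-1) ^ a * T a (u + a) * w (u + 2 * a))
    :
    ∀ u : ℂ, ∑ a ∈ Finset.range (N + 2),
      (-1) ^ a * T (a : ℤ) (u - a) * Q 1 (u - 2 * a + ((N : ℂ) + 1) + s) = 0 :=
  dual_TQ_A2_even_general n hn N hN s Q hQ0 hQne Y hY x hxbar T hTL
end

section
/- Define functions T_m : ℂ → ℂ for integers m ≥ 0 recursively by T_0 ≡ 1 and, for m ≥ 1, by requiring Σ_{a=0}^{m} (−1)^a · T_{m−a}(u+m+a) · T^a(u+a) = 0 for all u ∈ ℂ (since T^0 ≡ 1 this determines T_m uniquely; these are the coefficients of the formal expansion L^{−1} = Σ_{m≥0} T_m(u+m) D^m). Then the companion T–T relation holds: for every integer m ≥ 1 and every u ∈ ℂ, Σ_{a=0}^{m} (−1)^a · T_{m−a}(u−m−a) · T^a(u−a) = 0. -/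
open Complex

/-!
Writing `D` for the shift `w ↦ w(· + 2)`, the functions `T_m` are the coefficients of the left
inverse `Σ_m T_m(u + m) D^m` of the difference operator `L = Σ_a (-1)^a T^a(u + a) D^a`, whose
leading coefficient is `T^0 = 1`. The companion relation says that this series is also a right
inverse of `L`. Restricted to the lattice points `u + 2i`, `0 ≤ i ≤ m`, composition of such
operators becomes multiplication of upper-triangular `(m+1) × (m+1)` matrices, and a one-sided
inverse of a square matrix is two-sided.
-/

open Finset

section TwistedSeries

variable {R : Type*} [Ring R]

/-- `A a i` is the coefficient of `D^a` at the `i`-th lattice point, so that this is the coefficient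
of `D^d` at the `i`-th point of the composite `(Σ_a A a · D^a) ∘ (Σ_b B b · D^b)`. -/
def twistedMul (A B : ℕ → ℕ → R) (d i : ℕ) : R :=
  ∑ a ∈ range (d + 1), A a i * B (d - a) (i + a)

def twistedOne (d _ : ℕ) : R := if d = 0 then 1 else 0

def twistedMatrix (m : ℕ) (A : ℕ → ℕ → R) : Matrix (Fin (m + 1)) (Fin (m + 1)) R :=
  Matrix.of fun i j => if (i : ℕ) ≤ j then A (j - i) i else 0

theorem twistedMatrix_mul (m : ℕ) (A B : ℕ → ℕ → R) :
    twistedMatrix m A * twistedMatrix m B = twistedMatrix m (twistedMul A B) := by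
  ext i j
  simp only [twistedMatrix, twistedMul, Matrix.mul_apply, Matrix.of_apply, ite_mul, zero_mul,
    mul_ite, mul_zero, ← ite_and]
  rw [Fin.sum_univ_eq_sum_range (fun k => if k ≤ (j : ℕ) ∧ (i : ℕ) ≤ k then
    A (k - i) i * B (j - k) k else 0), ← sum_filter]
  have hfilter : {k ∈ range (m + 1) | k ≤ (j : ℕ) ∧ (i : ℕ) ≤ k} = Ico (i : ℕ) (j + 1) := by
    ext k
    simp only [mem_filter, mem_range, mem_Ico]
    omega
  rw [hfilter, sum_Ico_eq_sum_range]
  split_ifs with hij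
  · rw [show (j : ℕ) + 1 - i = j - i + 1 by omega]
    refine sum_congr rfl fun a _ => ?_
    rw [Nat.add_sub_cancel_left, Nat.sub_add_eq]
  · rw [show (j : ℕ) + 1 - i = 0 by omega, sum_range_zero]

theorem twistedMatrix_one (m : ℕ) : twistedMatrix m (twistedOne : ℕ → ℕ → R) = 1 := by
  ext i j
  simp only [twistedMatrix, twistedOne, Matrix.of_apply, Matrix.one_apply, Fin.ext_iff]
  split_ifs <;> first | rfl | omega

theorem twistedMul_eq_one_comm [IsStablyFiniteRing R] {A B : ℕ → ℕ → R}
    (h : twistedMul A B = twistedOne) : twistedMul B A = twistedOne := by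
  funext d i
  have hBA : twistedMatrix (i + d) (twistedMul B A) = twistedMatrix (i + d) twistedOne := by
    rw [← twistedMatrix_mul, twistedMatrix_one, mul_eq_one_comm, twistedMatrix_mul, h,
      twistedMatrix_one]
  have hentry := congrArg (fun M => M ⟨i, by omega⟩ ⟨i + d, by omega⟩) hBA
  simpa only [twistedMatrix, Matrix.of_apply, Nat.le_add_right, if_true,
    Nat.add_sub_cancel_left] using hentry

end TwistedSeries

theorem Lop_apply_eq_self {x : ℕ → ℂ → ℂ} {k : ℕ} {w : ℂ → ℂ} {v : ℂ}
    (hw : ∀ i : ℕ, 1 ≤ i → i ≤ k → w (v + 2 * i) = 0) : Lop x k w v = w v := by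
  induction k generalizing v with
  | zero => rfl
  | succ k ih =>
    have hshift : Lop x k w (v + 2) = w (v + 2) := ih fun i hi hik => by
      simpa [add_assoc, mul_add, add_comm] using hw (i + 1) (by omega) (by omega)
    have hv2 : w (v + 2) = 0 := by simpa using hw 1 le_rfl (by omega)
    change Lop x k w v - x (k + 1) v * Lop x k w (v + 2) = w v
    rw [ih fun i hi hik => hw i hi (by omega), hshift, hv2, mul_zero, sub_zero]

theorem Lop_coeff_zero_eq_one {x : ℕ → ℂ → ℂ} {K : ℕ} {c : ℕ → ℂ → ℂ}
    (hc : ∀ w : ℂ → ℂ, ∀ u, Lop x K w u = ∑ a ∈ range (K + 1), c a u * w (u + 2 * a)) (u : ℂ) :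
    c 0 u = 1 := by
  classical
  let δ : ℂ → ℂ := fun v => if v = u then 1 else 0
  have hδ : ∀ i : ℕ, 1 ≤ i → δ (u + 2 * i) = 0 := fun i hi => by
    simp [δ, show (i : ℂ) ≠ 0 by exact_mod_cast (by omega : i ≠ 0)]
  have hsum := hc δ u
  rw [Lop_apply_eq_self fun i hi _ => hδ i hi, sum_eq_single 0
    (fun a _ ha => by rw [hδ a (by omega), mul_zero]) (by simp)] at hsum
  simpa [δ] using hsum.symm

theorem TT_companion_A2_even_general
    (N : ℕ)
    (x : ℕ → ℂ → ℂ)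
    (T : ℤ → ℂ → ℂ)
    (hTL : ∀ w : ℂ → ℂ, ∀ u : ℂ, Lop x (N + 1) w u
      = ∑ a ∈ Finset.range (N + 2), (-1) ^ a * T a (u + a) * w (u + 2 * a))
    (Tm : ℕ → ℂ → ℂ) (hTm0 : ∀ u, Tm 0 u = 1)
    (hTmrec : ∀ m : ℕ, 1 ≤ m → ∀ u : ℂ,
      ∑ a ∈ Finset.range (m + 1),
        (-1) ^ a * Tm (m - a) (u + m + a) * T (a : ℤ) (u + a) = 0)
    :
    ∀ m : ℕ, 1 ≤ m → ∀ u : ℂ,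
      ∑ a ∈ Finset.range (m + 1),
        (-1) ^ a * Tm (m - a) (u - m - a) * T (a : ℤ) (u - a) = 0 := by
  intro m hm u
  have hT0 : ∀ v, T 0 v = 1 := by
    simpa using Lop_coeff_zero_eq_one (c := fun a v => (-1) ^ a * T a (v + a)) hTL
  -- the relation at `u` is the `D^m`-coefficient of `(Σ T_m D^m) ∘ L` at the point `u - 2m`
  set v := u - 2 * m
  let A : ℕ → ℕ → ℂ := fun a i => (-1) ^ a * T a (v + 2 * i + a)
  let B : ℕ → ℕ → ℂ := fun a i => Tm a (v + 2 * i + a)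
  have hAB : twistedMul A B = twistedOne := by
    funext d i
    rcases Nat.eq_zero_or_pos d with rfl | hd
    · simp [twistedMul, twistedOne, A, B, hT0, hTm0]
    · rw [twistedOne, if_neg hd.ne', ← hTmrec d hd (v + 2 * i)]
      refine sum_congr rfl fun a ha => ?_
      have had : a ≤ d := Nat.lt_succ_iff.mp (mem_range.mp ha)
      simp only [A, B, Nat.cast_add, Nat.cast_sub had]
      ring_nf
  have hBA := congrFun₂ (twistedMul_eq_one_comm hAB) m 0
  rw [twistedOne, if_neg (by omega)] at hBA
  rw [← sum_range_reflect, ← hBA]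
  refine sum_congr rfl fun a ha => ?_
  have ham : a ≤ m := Nat.lt_succ_iff.mp (mem_range.mp ha)
  simp only [A, B, v, Nat.add_sub_cancel, Nat.sub_sub_self ham, Nat.cast_sub ham, Nat.cast_zero,
    zero_add]
  ring_nf

theorem TT_companion_A2_even
    (n : ℕ) (hn : 1 ≤ n) (N : ℕ) (hN : N = 2 * n)
    (hbar : ℂ) (hbar_ne : hbar ≠ 0) (s : ℂ)
    (hs : s = (Real.pi : ℂ) * Complex.I / (2 * hbar))
    (Q : ℕ → ℂ → ℂ) (hQ0 : ∀ u, Q 0 u = 1)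
    (hQne : ∀ a, 1 ≤ a → a ≤ n → ∀ u, Q a u ≠ 0)
    (hconst : ℕ → ℂ)
    (hQper : ∀ a, 1 ≤ a → a ≤ n → hconst a ≠ 0 ∧
      ∀ u, Q a (u + (Real.pi : ℂ) * Complex.I / hbar) = hconst a * Q a u)
    (Y : ℕ → ℂ → ℂ) (hY : ∀ a u, Y a u = Q a (u - 1) / Q a (u + 1))
    (x : ℕ → ℂ → ℂ)
    (hxa : ∀ a, 1 ≤ a → a ≤ n → ∀ u : ℂ,
      x a u = Y a (u + a) / Y (a - 1) (u + a + 1))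
    (hx0 : ∀ u : ℂ, x (n + 1) u = Y n (u + n + 1 + s) / Y n (u + n + 2))
    (hxbar : ∀ a, 1 ≤ a → a ≤ n → ∀ u : ℂ,
      x (2 * n - a + 2) u = Y (a - 1) (u + 2 * (n : ℂ) - a + 2 + s)
        / Y a (u + 2 * (n : ℂ) - a + 3 + s))
    (T : ℤ → ℂ → ℂ)
    (hTneg : ∀ a : ℤ, a < 0 → ∀ u, T a u = 0)
    (hTbig : ∀ a : ℤ, (N : ℤ) + 1 < a → ∀ u, T a u = 0)
    (hTL : ∀ w : ℂ → ℂ, ∀ u : ℂ, Lop x (N + 1) w u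
      = ∑ a ∈ Finset.range (N + 2), (-1) ^ a * T a (u + a) * w (u + 2 * a))
    (Tm : ℕ → ℂ → ℂ) (hTm0 : ∀ u, Tm 0 u = 1)
    (hTmrec : ∀ m : ℕ, 1 ≤ m → ∀ u : ℂ,
      ∑ a ∈ Finset.range (m + 1),
        (-1) ^ a * Tm (m - a) (u + m + a) * T (a : ℤ) (u + a) = 0)
    :
    ∀ m : ℕ, 1 ≤ m → ∀ u : ℂ,
      ∑ a ∈ Finset.range (m + 1),
        (-1) ^ a * Tm (m - a) (u - m - a) * T (a : ℤ) (u - a) = 0 :=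
  TT_companion_A2_even_general N x T hTL Tm hTm0 hTmrec
end
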